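/- arXiv:math/0601044 — 7 statements merged into one kernel-verified Lean document; each statement's English description precedes it below -/
import Mathlib

section
/- If f : I → ℝ is of bounded variation, then the pointwise variation of its uncentered maximal function satisfies V(Mf) ≤ V(f̄), where f̄ is the canonical (variation-minimizing) representative; equivalently ‖DMf‖_{L¹(I)} ≤ |Df|(I). -/
open MeasureTheory Set Filter ENNReal

/-- Uncentered Hardy-Littlewood maximal function of `f` relative to the interval `I`:
supremum of averages of `|f|` over subintervals of `I` containing `x`. -/
noncomputable def mf (I : Set ℝ) (f : ℝ → ℝ) (x : ℝ) : ℝ :=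
  sSup {r : ℝ | ∃ a b : ℝ, a < b ∧ Set.Icc a b ⊆ I ∧ x ∈ Set.Icc a b ∧
    r = (∫ y in Set.Icc a b, |f y|) / (b - a)}

/-- Absolute continuity of `f` on the interval `I`. -/
def AbsCont (I : Set ℝ) (f : ℝ → ℝ) : Prop :=
  ∀ ε > 0, ∃ δ > 0, ∀ n : ℕ, ∀ a b : Fin n → ℝ,
    (∀ i, a i ≤ b i ∧ Set.Icc (a i) (b i) ⊆ I) →
    (Pairwise fun i j => Disjoint (Set.Ioo (a i) (b i)) (Set.Ioo (a j) (b j))) →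
    (∑ i, (b i - a i)) < δ → (∑ i, |f (b i) - f (a i)|) < ε


/-- Canonical representative: limsup of averages over intervals shrinking to `x`. -/
noncomputable def canonRep (f : ℝ → ℝ) (x : ℝ) : ℝ :=
  Filter.limsup (fun p : ℝ × ℝ => (∫ y in Set.Icc p.1 p.2, f y) / (p.2 - p.1))
    (((nhdsWithin x (Set.Iic x)) ×ˢ (nhdsWithin x (Set.Ici x))) ⊓
      Filter.principal {p : ℝ × ℝ | p.1 < p.2})

namespace APL

/-- The set of averages defining `mf`. -/
def mfSet (I : Set ℝ) (f : ℝ → ℝ) (x : ℝ) : Set ℝ :=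
  {r : ℝ | ∃ a b : ℝ, a < b ∧ Set.Icc a b ⊆ I ∧ x ∈ Set.Icc a b ∧
    r = (∫ y in Set.Icc a b, |f y|) / (b - a)}

lemma mf_eq_sSup (I : Set ℝ) (f : ℝ → ℝ) (x : ℝ) : mf I f x = sSup (mfSet I f x) := rfl

/-- good points: continuity points of `h` inside `I`, not endpoints. -/
def DD (I : Set ℝ) (h : ℝ → ℝ) : Set ℝ :=
  {x | x ∈ I ∧ ContinuousAt h x ∧ (∃ u ∈ I, u < x) ∧ (∃ v ∈ I, x < v)}

lemma DD_sub (I : Set ℝ) (h : ℝ → ℝ) : DD I h ⊆ I := fun _ hx => hx.1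

/-- sup of `|h|` over good points in `s`. -/
noncomputable def SS (I : Set ℝ) (h : ℝ → ℝ) (s : Set ℝ) : ℝ :=
  sSup ((fun t => |h t|) '' (DD I h ∩ s))

section Main

variable {I : Set ℝ} {f h E1 E2 : ℝ → ℝ} {C : ℝ}

lemma integ_h (hmeas : Measurable h) (hE1 : Monotone E1) (hE2 : Monotone E2)
    (hh : ∀ x, h x = E1 x - E2 x) (a b : ℝ) :
    IntegrableOn h (Set.Icc a b) := by
  apply Measure.integrableOn_of_bounded (M := |E1 a| + |E1 b| + |E2 a| + |E2 b|)
  · rw [Real.volume_Icc]; exact ENNReal.ofReal_ne_top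
  · exact hmeas.aestronglyMeasurable
  · refine (ae_restrict_iff' measurableSet_Icc).2 (ae_of_all _ ?_)
    intro t ht
    have h1 : E1 a ≤ E1 t := hE1 ht.1
    have h2 : E1 t ≤ E1 b := hE1 ht.2
    have h3 : E2 a ≤ E2 t := hE2 ht.1
    have h4 : E2 t ≤ E2 b := hE2 ht.2
    have k1 : |E1 t| ≤ |E1 a| + |E1 b| := by
      rcases abs_cases (E1 t) with ⟨he, _⟩ | ⟨he, _⟩ <;>
        nlinarith [neg_abs_le (E1 a), le_abs_self (E1 b), le_abs_self (E1 a),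
          neg_abs_le (E1 b)]
    have k2 : |E2 t| ≤ |E2 a| + |E2 b| := by
      rcases abs_cases (E2 t) with ⟨he, _⟩ | ⟨he, _⟩ <;>
        nlinarith [neg_abs_le (E2 a), le_abs_self (E2 b), le_abs_self (E2 a),
          neg_abs_le (E2 b)]
    have k3 : |h t| ≤ |E1 t| + |E2 t| := by rw [hh t]; exact abs_sub _ _
    rw [Real.norm_eq_abs]
    linarith

lemma integ_habs (hmeas : Measurable h) (hE1 : Monotone E1) (hE2 : Monotone E2)
    (hh : ∀ x, h x = E1 x - E2 x) (a b : ℝ) :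
    IntegrableOn (fun t => |h t|) (Set.Icc a b) :=
  (integ_h hmeas hE1 hE2 hh a b).abs

lemma integral_congr_fh (hfh : Set.EqOn f h I) {a b : ℝ} (hsub : Set.Icc a b ⊆ I) :
    (∫ y in Set.Icc a b, |f y|) = ∫ y in Set.Icc a b, |h y| := by
  refine setIntegral_congr_fun measurableSet_Icc fun y hy => ?_
  rw [hfh (hsub hy)]

lemma countable_bad (hE1 : Monotone E1) (hE2 : Monotone E2)
    (hh : ∀ x, h x = E1 x - E2 x) : (I \ DD I h).Countable := by
  have hb1 := hE1.countable_not_continuousAt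
  have hb2 := hE2.countable_not_continuousAt
  have hmin : {x | x ∈ I ∧ ∀ u ∈ I, ¬ u < x}.Subsingleton := by
    intro x hx y hy
    by_contra hne
    rcases lt_or_gt_of_ne hne with hl | hl
    exacts [hy.2 x hx.1 hl, hx.2 y hy.1 hl]
  have hmax : {x | x ∈ I ∧ ∀ v ∈ I, ¬ x < v}.Subsingleton := by
    intro x hx y hy
    by_contra hne
    rcases lt_or_gt_of_ne hne with hl | hl
    exacts [hx.2 y hy.1 hl, hy.2 x hx.1 hl]
  refine Set.Countable.mono ?_
    ((((hb1.union hb2).union hmin.countable).union hmax.countable))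
  rintro x ⟨hxI, hxD⟩
  by_cases hca : ContinuousAt h x
  · by_cases he1 : ∃ u ∈ I, u < x
    · by_cases he2 : ∃ v ∈ I, x < v
      · exact absurd ⟨hxI, hca, he1, he2⟩ hxD
      · push_neg at he2
        exact Or.inr ⟨hxI, fun v hv => not_lt.2 (he2 v hv)⟩
    · push_neg at he1
      exact Or.inl (Or.inr ⟨hxI, fun u hu => not_lt.2 (he1 u hu)⟩)
  · have hcc : ¬ContinuousAt E1 x ∨ ¬ContinuousAt E2 x := by
      by_contra hcc
      push_neg at hcc
      refine hca ?_
      have hfe : h = fun y => E1 y - E2 y := funext hh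
      rw [hfe]
      exact hcc.1.sub hcc.2
    rcases hcc with hc | hc
    · exact Or.inl (Or.inl (Or.inl hc))
    · exact Or.inl (Or.inl (Or.inr hc))

lemma DD_nonempty (hE1 : Monotone E1) (hE2 : Monotone E2)
    (hh : ∀ x, h x = E1 x - E2 x) {γ δ : ℝ} (hγδ : γ < δ) (hsub : Set.Ioo γ δ ⊆ I) :
    (DD I h ∩ Set.Ioo γ δ).Nonempty := by
  have hcb : (I \ DD I h).Countable := countable_bad hE1 hE2 hh
  by_contra hemp
  rw [Set.not_nonempty_iff_eq_empty] at hemp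
  have hsub2 : Set.Ioo γ δ ⊆ I \ DD I h := by
    intro x hx
    refine ⟨hsub hx, fun hD => ?_⟩
    have hmem : x ∈ DD I h ∩ Set.Ioo γ δ := ⟨hD, hx⟩
    rw [hemp] at hmem
    exact hmem
  have hz : volume (Set.Ioo γ δ) = 0 := measure_mono_null hsub2 (hcb.measure_zero volume)
  rw [Real.volume_Ioo, ENNReal.ofReal_eq_zero] at hz
  linarith

lemma bddAbove_SS (hC : ∀ x ∈ I, |h x| ≤ C) (s : Set ℝ) :
    BddAbove ((fun t => |h t|) '' (DD I h ∩ s)) := by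
  refine ⟨C, ?_⟩
  rintro r ⟨t, ⟨htD, _⟩, rfl⟩
  exact hC t htD.1

lemma integral_abs_le (hfh : Set.EqOn f h I) (hC : ∀ x ∈ I, |h x| ≤ C)
    {a b : ℝ} (hab : a < b) (hsub : Set.Icc a b ⊆ I) :
    (∫ y in Set.Icc a b, |f y|) ≤ C * (b - a) := by
  rw [integral_congr_fh hfh hsub]
  have hb : ‖∫ y in Set.Icc a b, |h y|‖ ≤ C * (volume (Set.Icc a b)).toReal := by
    refine norm_setIntegral_le_of_norm_le_const ?_ ?_
    · rw [Real.volume_Icc]; exact ENNReal.ofReal_lt_top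
    · intro y hy
      rw [Real.norm_eq_abs, abs_abs]
      exact hC y (hsub hy)
  rw [Real.volume_Icc, ENNReal.toReal_ofReal (by linarith)] at hb
  calc (∫ y in Set.Icc a b, |h y|) ≤ ‖∫ y in Set.Icc a b, |h y|‖ := le_abs_self _
  _ ≤ C * (b - a) := hb

lemma bddAbove_mfSet (hfh : Set.EqOn f h I) (hC : ∀ x ∈ I, |h x| ≤ C)
    (x : ℝ) : BddAbove (mfSet I f x) := by
  refine ⟨C, ?_⟩
  rintro r ⟨a, b, hab, hsub, hx, rfl⟩
  rw [div_le_iff₀ (by linarith)]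
  calc (∫ y in Set.Icc a b, |f y|) ≤ C * (b - a) := integral_abs_le hfh hC hab hsub

lemma nonempty_mfSet (hI : I.OrdConnected) (hI' : I.Nontrivial) {x : ℝ} (hx : x ∈ I) :
    (mfSet I f x).Nonempty := by
  obtain ⟨p, hp, q, hq, hpq⟩ := hI'
  have hz : ∃ z ∈ I, z ≠ x := by
    by_cases hzp : p = x
    · refine ⟨q, hq, fun e => hpq ?_⟩
      rw [hzp, e]
    · exact ⟨p, hp, hzp⟩
  obtain ⟨z, hz, hzx⟩ := hz
  rcases lt_or_gt_of_ne hzx with hlt | hlt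
  · exact ⟨_, z, x, hlt, hI.out hz hx, ⟨hlt.le, le_refl x⟩, rfl⟩
  · exact ⟨_, x, z, hlt, hI.out hx hz, ⟨le_refl x, hlt.le⟩, rfl⟩

lemma mf_ge {x r : ℝ} (hb : BddAbove (mfSet I f x)) (hr : r ∈ mfSet I f x) : r ≤ mf I f x :=
  le_csSup hb hr

lemma mf_le {x c : ℝ} (hne : (mfSet I f x).Nonempty) (hc : ∀ r ∈ mfSet I f x, r ≤ c) :
    mf I f x ≤ c :=
  csSup_le hne hc

lemma mf_nonneg (hI : I.OrdConnected) (hI' : I.Nontrivial) (hfh : Set.EqOn f h I)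
    (hC : ∀ x ∈ I, |h x| ≤ C) {x : ℝ} (hx : x ∈ I) : 0 ≤ mf I f x := by
  obtain ⟨r, hr⟩ := nonempty_mfSet (f := f) hI hI' hx
  refine le_trans ?_ (mf_ge (bddAbove_mfSet hfh hC x) hr)
  obtain ⟨a, b, hab, hsub, hxm, rfl⟩ := hr
  exact div_nonneg (integral_nonneg fun y => abs_nonneg _) (by linarith)

/-- the right limit of `h` at `x`. -/
noncomputable def rlim (E1 E2 : ℝ → ℝ) (x : ℝ) : ℝ :=
  sInf (E1 '' Set.Ioi x) - sInf (E2 '' Set.Ioi x)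

noncomputable def llim (E1 E2 : ℝ → ℝ) (x : ℝ) : ℝ :=
  sSup (E1 '' Set.Iio x) - sSup (E2 '' Set.Iio x)

lemma tendsto_rlim (hE1 : Monotone E1) (hE2 : Monotone E2) (hh : ∀ x, h x = E1 x - E2 x)
    (x : ℝ) : Tendsto h (nhdsWithin x (Set.Ioi x)) (nhds (rlim E1 E2 x)) := by
  have hfe : h = fun y => E1 y - E2 y := funext hh
  rw [hfe]
  exact (hE1.tendsto_nhdsGT x).sub (hE2.tendsto_nhdsGT x)

lemma tendsto_llim (hE1 : Monotone E1) (hE2 : Monotone E2) (hh : ∀ x, h x = E1 x - E2 x)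
    (x : ℝ) : Tendsto h (nhdsWithin x (Set.Iio x)) (nhds (llim E1 E2 x)) := by
  have hfe : h = fun y => E1 y - E2 y := funext hh
  rw [hfe]
  exact (hE1.tendsto_nhdsLT x).sub (hE2.tendsto_nhdsLT x)

lemma LBr (hI : I.OrdConnected) (hfh : Set.EqOn f h I) (hC : ∀ x ∈ I, |h x| ≤ C)
    (hmeas : Measurable h) (hE1 : Monotone E1) (hE2 : Monotone E2)
    (hh : ∀ x, h x = E1 x - E2 x)
    {x t : ℝ} (hx : x ∈ I) (ht : t ∈ I) (hxt : x < t) :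
    |rlim E1 E2 x| ≤ mf I f x := by
  refine le_of_forall_pos_le_add fun ε hε => ?_
  have hev : ∀ᶠ y in nhdsWithin x (Set.Ioi x), dist (h y) (rlim E1 E2 x) < ε :=
    Metric.tendsto_nhds.1 (tendsto_rlim hE1 hE2 hh x) ε hε
  obtain ⟨c, hc, hsubc⟩ := mem_nhdsGT_iff_exists_Ioo_subset.1 hev
  set d := min c t with hd
  have hxd : x < d := lt_min hc hxt
  set e := (x + d) / 2 with he
  have hxe : x < e := by rw [he]; linarith
  have hed : e < d := by rw [he]; linarith
  have hsubI : Set.Icc x e ⊆ I := fun y hy =>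
    hI.out hx ht ⟨hy.1, hy.2.trans (hed.le.trans (min_le_right c t))⟩
  have hmem : (∫ y in Set.Icc x e, |f y|) / (e - x) ∈ mfSet I f x :=
    ⟨x, e, hxe, hsubI, ⟨le_refl x, hxe.le⟩, rfl⟩
  have hxne : ∀ᵐ y : ℝ, y ≠ x := by
    refine ae_iff.2 ?_
    simp only [not_not, Set.setOf_eq_eq_singleton]
    exact measure_singleton x
  have hlow : (|rlim E1 E2 x| - ε) * (e - x) ≤ ∫ y in Set.Icc x e, |f y| := by
    rw [integral_congr_fh hfh hsubI]
    have hconst : (∫ _ in Set.Icc x e, (|rlim E1 E2 x| - ε)) =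
        (|rlim E1 E2 x| - ε) * (e - x) := by
      rw [setIntegral_const, Real.volume_real_Icc, max_eq_left (by linarith),
        smul_eq_mul, mul_comm]
    rw [← hconst]
    refine setIntegral_mono_ae_restrict ((integrableOn_const_iff (hC := by finiteness)).2 (Or.inr ?_))
      (integ_habs hmeas hE1 hE2 hh x e) ?_
    · rw [Real.volume_Icc]; exact ENNReal.ofReal_lt_top
    · refine (ae_restrict_iff' measurableSet_Icc).2 ?_
      filter_upwards [hxne] with y hy hyIcc
      have hxy : x < y := lt_of_le_of_ne hyIcc.1 (Ne.symm hy)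
      have hyc : y < c := lt_of_le_of_lt hyIcc.2 (hed.trans_le (min_le_left c t))
      have hdist := hsubc ⟨hxy, hyc⟩
      rw [Set.mem_setOf_eq, Real.dist_eq] at hdist
      have habs : |rlim E1 E2 x| - |h y| ≤ |h y - rlim E1 E2 x| := by
        have h1 := abs_sub_abs_le_abs_sub (rlim E1 E2 x) (h y)
        rw [abs_sub_comm] at h1
        exact h1
      linarith
  have hM := mf_ge (bddAbove_mfSet hfh hC x) hmem
  have havg : |rlim E1 E2 x| - ε ≤ (∫ y in Set.Icc x e, |f y|) / (e - x) :=
    (le_div_iff₀ (by linarith)).2 hlow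
  linarith

lemma LBl (hI : I.OrdConnected) (hfh : Set.EqOn f h I) (hC : ∀ x ∈ I, |h x| ≤ C)
    (hmeas : Measurable h) (hE1 : Monotone E1) (hE2 : Monotone E2)
    (hh : ∀ x, h x = E1 x - E2 x)
    {u x : ℝ} (hu : u ∈ I) (hx : x ∈ I) (hux : u < x) :
    |llim E1 E2 x| ≤ mf I f x := by
  refine le_of_forall_pos_le_add fun ε hε => ?_
  have hev : ∀ᶠ y in nhdsWithin x (Set.Iio x), dist (h y) (llim E1 E2 x) < ε :=
    Metric.tendsto_nhds.1 (tendsto_llim hE1 hE2 hh x) ε hε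
  obtain ⟨c, hc, hsubc⟩ := mem_nhdsLT_iff_exists_Ioo_subset.1 hev
  set d := max c u with hd
  have hxd : d < x := max_lt hc hux
  set e := (x + d) / 2 with he
  have hxe : e < x := by rw [he]; linarith
  have hed : d < e := by rw [he]; linarith
  have hsubI : Set.Icc e x ⊆ I := fun y hy =>
    hI.out hu hx ⟨((le_max_right c u).trans hed.le).trans hy.1, hy.2⟩
  have hmem : (∫ y in Set.Icc e x, |f y|) / (x - e) ∈ mfSet I f x :=
    ⟨e, x, hxe, hsubI, ⟨hxe.le, le_refl x⟩, rfl⟩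
  have hxne : ∀ᵐ y : ℝ, y ≠ x := by
    refine ae_iff.2 ?_
    simp only [not_not, Set.setOf_eq_eq_singleton]
    exact measure_singleton x
  have hlow : (|llim E1 E2 x| - ε) * (x - e) ≤ ∫ y in Set.Icc e x, |f y| := by
    rw [integral_congr_fh hfh hsubI]
    have hconst : (∫ _ in Set.Icc e x, (|llim E1 E2 x| - ε)) =
        (|llim E1 E2 x| - ε) * (x - e) := by
      rw [setIntegral_const, Real.volume_real_Icc, max_eq_left (by linarith),
        smul_eq_mul, mul_comm]
    rw [← hconst]
    refine setIntegral_mono_ae_restrict ((integrableOn_const_iff (hC := by finiteness)).2 (Or.inr ?_))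
      (integ_habs hmeas hE1 hE2 hh e x) ?_
    · rw [Real.volume_Icc]; exact ENNReal.ofReal_lt_top
    · refine (ae_restrict_iff' measurableSet_Icc).2 ?_
      filter_upwards [hxne] with y hy hyIcc
      have hxy : y < x := lt_of_le_of_ne hyIcc.2 hy
      have hyc : c < y := lt_of_lt_of_le ((le_max_left c u).trans_lt hed) hyIcc.1
      have hdist := hsubc ⟨hyc, hxy⟩
      rw [Set.mem_setOf_eq, Real.dist_eq] at hdist
      have habs : |llim E1 E2 x| - |h y| ≤ |h y - llim E1 E2 x| := by
        have h1 := abs_sub_abs_le_abs_sub (llim E1 E2 x) (h y)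
        rw [abs_sub_comm] at h1
        exact h1
      linarith
  have hM := mf_ge (bddAbove_mfSet hfh hC x) hmem
  have havg : |llim E1 E2 x| - ε ≤ (∫ y in Set.Icc e x, |f y|) / (x - e) :=
    (le_div_iff₀ (by linarith)).2 hlow
  linarith

lemma Wr (hI : I.OrdConnected) (hE1 : Monotone E1) (hE2 : Monotone E2)
    (hh : ∀ x, h x = E1 x - E2 x)
    {x t b0 ε : ℝ} (hx : x ∈ I) (ht : t ∈ I) (hxt : x < t) (hb0 : x < b0) (hε : 0 < ε) :
    ∃ y ∈ DD I h, x < y ∧ y < b0 ∧ |h y| < |rlim E1 E2 x| + ε := by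
  have hev : ∀ᶠ y in nhdsWithin x (Set.Ioi x), dist (h y) (rlim E1 E2 x) < ε :=
    Metric.tendsto_nhds.1 (tendsto_rlim hE1 hE2 hh x) ε hε
  obtain ⟨c, hc, hsubc⟩ := mem_nhdsGT_iff_exists_Ioo_subset.1 hev
  set d := min c (min b0 t) with hd
  have hxd : x < d := lt_min hc (lt_min hb0 hxt)
  have hsubI : Set.Ioo x d ⊆ I := fun y hy =>
    hI.out hx ht ⟨hy.1.le, (hy.2.trans_le ((min_le_right _ _).trans (min_le_right _ _))).le⟩
  obtain ⟨y, hyD, hyo⟩ := DD_nonempty hE1 hE2 hh hxd hsubI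
  refine ⟨y, hyD, hyo.1,
    hyo.2.trans_le ((min_le_right c _).trans (min_le_left b0 t)), ?_⟩
  have hdist := hsubc ⟨hyo.1, hyo.2.trans_le (min_le_left c _)⟩
  rw [Set.mem_setOf_eq, Real.dist_eq] at hdist
  have habs := abs_sub_abs_le_abs_sub (h y) (rlim E1 E2 x)
  linarith

lemma Wl (hI : I.OrdConnected) (hE1 : Monotone E1) (hE2 : Monotone E2)
    (hh : ∀ x, h x = E1 x - E2 x)
    {u x a0 ε : ℝ} (hu : u ∈ I) (hx : x ∈ I) (hux : u < x) (ha0 : a0 < x) (hε : 0 < ε) :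
    ∃ y ∈ DD I h, a0 < y ∧ y < x ∧ |h y| < |llim E1 E2 x| + ε := by
  have hev : ∀ᶠ y in nhdsWithin x (Set.Iio x), dist (h y) (llim E1 E2 x) < ε :=
    Metric.tendsto_nhds.1 (tendsto_llim hE1 hE2 hh x) ε hε
  obtain ⟨c, hc, hsubc⟩ := mem_nhdsLT_iff_exists_Ioo_subset.1 hev
  set d := max c (max a0 u) with hd
  have hxd : d < x := max_lt hc (max_lt ha0 hux)
  have hsubI : Set.Ioo d x ⊆ I := fun y hy =>
    hI.out hu hx ⟨(((le_max_right a0 u).trans (le_max_right c _)).trans hy.1.le), hy.2.le⟩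
  obtain ⟨y, hyD, hyo⟩ := DD_nonempty hE1 hE2 hh hxd hsubI
  refine ⟨y, hyD,
    lt_of_le_of_lt ((le_max_left a0 u).trans (le_max_right c _)) hyo.1, hyo.2, ?_⟩
  have hdist := hsubc ⟨lt_of_le_of_lt (le_max_left c _) hyo.1, hyo.2⟩
  rw [Set.mem_setOf_eq, Real.dist_eq] at hdist
  have habs := abs_sub_abs_le_abs_sub (h y) (llim E1 E2 x)
  linarith

lemma avg_le_SS (hfh : Set.EqOn f h I) (hC : ∀ x ∈ I, |h x| ≤ C)
    (hmeas : Measurable h) (hE1 : Monotone E1) (hE2 : Monotone E2)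
    (hh : ∀ x, h x = E1 x - E2 x)
    {a b : ℝ} (hab : a < b) (hsubI : Set.Icc a b ⊆ I) {s : Set ℝ}
    (hs : Set.Icc a b ⊆ s) :
    (∫ y in Set.Icc a b, |f y|) / (b - a) ≤ SS I h s := by
  rw [div_le_iff₀ (by linarith), integral_congr_fh hfh hsubI]
  have hconst : (∫ _ in Set.Icc a b, SS I h s) = SS I h s * (b - a) := by
    rw [setIntegral_const, Real.volume_real_Icc, max_eq_left (by linarith),
      smul_eq_mul, mul_comm]
  rw [← hconst]
  refine setIntegral_mono_ae_restrict (integ_habs hmeas hE1 hE2 hh a b)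
    ((integrableOn_const_iff (hC := by finiteness)).2 (Or.inr ?_)) ?_
  · rw [Real.volume_Icc]; exact ENNReal.ofReal_lt_top
  · refine (ae_restrict_iff' measurableSet_Icc).2 ?_
    have hae : ∀ᵐ z : ℝ, z ∉ I \ DD I h := (countable_bad hE1 hE2 hh).ae_notMem volume
    filter_upwards [hae] with y hy hyIcc
    have hyD : y ∈ DD I h := by
      by_contra hnD
      exact hy ⟨hsubI hyIcc, hnD⟩
    exact le_csSup (bddAbove_SS hC s) ⟨y, ⟨hyD, hs hyIcc⟩, rfl⟩

lemma key_int (hI : I.OrdConnected) (hI' : I.Nontrivial) (hfh : Set.EqOn f h I)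
    (hC : ∀ x ∈ I, |h x| ≤ C) (hmeas : Measurable h) (hE1 : Monotone E1) (hE2 : Monotone E2)
    (hh : ∀ x, h x = E1 x - E2 x)
    {l x r : ℝ} (hl : l ∈ I) (hx : x ∈ I) (hr : r ∈ I) (hlx : l < x) (hxr : x < r) :
    mf I f x ≤ max (max (mf I f l) (mf I f r)) (SS I h (Set.Ioo l r)) := by
  refine mf_le (nonempty_mfSet hI hI' hx) ?_
  rintro ρ ⟨a, b, hab, hsub, hxm, rfl⟩
  by_cases hla : a ≤ l
  · refine le_trans (mf_ge (bddAbove_mfSet hfh hC l)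
      ⟨a, b, hab, hsub, ⟨hla, hlx.le.trans hxm.2⟩, rfl⟩) ?_
    exact le_max_of_le_left (le_max_left _ _)
  · by_cases hrb : r ≤ b
    · refine le_trans (mf_ge (bddAbove_mfSet hfh hC r)
        ⟨a, b, hab, hsub, ⟨hxm.1.trans hxr.le, hrb⟩, rfl⟩) ?_
      exact le_max_of_le_left (le_max_right _ _)
    · push_neg at hla hrb
      refine le_trans (avg_le_SS (s := Set.Ioo l r) hfh hC hmeas hE1 hE2 hh hab hsub
        (fun y hy => ⟨hla.trans_le hy.1, hy.2.trans_lt hrb⟩)) (le_max_right _ _)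

lemma key_left (hI : I.OrdConnected) (hI' : I.Nontrivial) (hfh : Set.EqOn f h I)
    (hC : ∀ x ∈ I, |h x| ≤ C) (hmeas : Measurable h) (hE1 : Monotone E1) (hE2 : Monotone E2)
    (hh : ∀ x, h x = E1 x - E2 x)
    {x r : ℝ} (hx : x ∈ I) (hr : r ∈ I) (hxr : x < r) :
    mf I f x ≤ max (mf I f r) (SS I h (Set.Iio r)) := by
  refine mf_le (nonempty_mfSet hI hI' hx) ?_
  rintro ρ ⟨a, b, hab, hsub, hxm, rfl⟩
  by_cases hrb : r ≤ b
  · refine le_trans (mf_ge (bddAbove_mfSet hfh hC r)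
      ⟨a, b, hab, hsub, ⟨hxm.1.trans hxr.le, hrb⟩, rfl⟩) (le_max_left _ _)
  · push_neg at hrb
    refine le_trans (avg_le_SS (s := Set.Iio r) hfh hC hmeas hE1 hE2 hh hab hsub
      (fun y hy => hy.2.trans_lt hrb)) (le_max_right _ _)

lemma key_right (hI : I.OrdConnected) (hI' : I.Nontrivial) (hfh : Set.EqOn f h I)
    (hC : ∀ x ∈ I, |h x| ≤ C) (hmeas : Measurable h) (hE1 : Monotone E1) (hE2 : Monotone E2)
    (hh : ∀ x, h x = E1 x - E2 x)
    {l x : ℝ} (hl : l ∈ I) (hx : x ∈ I) (hlx : l < x) :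
    mf I f x ≤ max (mf I f l) (SS I h (Set.Ioi l)) := by
  refine mf_le (nonempty_mfSet hI hI' hx) ?_
  rintro ρ ⟨a, b, hab, hsub, hxm, rfl⟩
  by_cases hla : a ≤ l
  · refine le_trans (mf_ge (bddAbove_mfSet hfh hC l)
      ⟨a, b, hab, hsub, ⟨hla, hlx.le.trans hxm.2⟩, rfl⟩) (le_max_left _ _)
  · push_neg at hla
    refine le_trans (avg_le_SS (s := Set.Ioi l) hfh hC hmeas hE1 hE2 hh hab hsub
      (fun y hy => hla.trans_le hy.1)) (le_max_right _ _)

lemma canonRep_eq (hI : I.OrdConnected) (hfh : Set.EqOn f h I) (hmeas : Measurable h)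
    (hE1 : Monotone E1) (hE2 : Monotone E2) (hh : ∀ x, h x = E1 x - E2 x)
    {y : ℝ} (hy : y ∈ DD I h) : canonRep f y = h y := by
  obtain ⟨hyI, hcont, ⟨u, hu, huy⟩, ⟨v, hv, hyv⟩⟩ := hy
  have hbase : (nhdsWithin y (Set.Iio y)) ×ˢ (nhdsWithin y (Set.Ioi y)) ≤
      ((nhdsWithin y (Set.Iic y)) ×ˢ (nhdsWithin y (Set.Ici y))) ⊓
        Filter.principal {p : ℝ × ℝ | p.1 < p.2} := by
    refine le_inf (Filter.prod_mono (nhdsWithin_mono _ Set.Iio_subset_Iic_self)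
      (nhdsWithin_mono _ Set.Ioi_subset_Ici_self)) ?_
    rw [Filter.le_principal_iff]
    have hmem : Set.Iio y ×ˢ Set.Ioi y ∈
        (nhdsWithin y (Set.Iio y)) ×ˢ (nhdsWithin y (Set.Ioi y)) :=
      Filter.prod_mem_prod self_mem_nhdsWithin self_mem_nhdsWithin
    refine Filter.mem_of_superset hmem ?_
    rintro ⟨p1, p2⟩ ⟨h1, h2⟩
    exact lt_trans (show p1 < y from h1) (show y < p2 from h2)
  haveI hNB : (((nhdsWithin y (Set.Iic y)) ×ˢ (nhdsWithin y (Set.Ici y))) ⊓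
      Filter.principal {p : ℝ × ℝ | p.1 < p.2}).NeBot :=
    Filter.neBot_of_le hbase
  have hT : Tendsto (fun p : ℝ × ℝ => (∫ t in Set.Icc p.1 p.2, f t) / (p.2 - p.1))
      (((nhdsWithin y (Set.Iic y)) ×ˢ (nhdsWithin y (Set.Ici y))) ⊓
        Filter.principal {p : ℝ × ℝ | p.1 < p.2}) (nhds (h y)) := by
    rw [Metric.tendsto_nhds]
    intro ε hε
    obtain ⟨δ1, hδ1, hδ1p⟩ := Metric.continuousAt_iff.1 hcont (ε / 2) (by linarith)
    set δ := min δ1 (min (y - u) (v - y)) with hδdef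
    have hδpos : 0 < δ := lt_min hδ1 (lt_min (by linarith) (by linarith))
    rw [Filter.eventually_inf_principal]
    have hm1 : Set.Ioc (y - δ) y ∈ nhdsWithin y (Set.Iic y) :=
      Ioc_mem_nhdsLE (by linarith)
    have hm2 : Set.Ico y (y + δ) ∈ nhdsWithin y (Set.Ici y) :=
      Ico_mem_nhdsGE (by linarith)
    filter_upwards [Filter.prod_mem_prod hm1 hm2] with p hp hplt
    obtain ⟨hp1, hp2⟩ := hp
    replace hplt : p.1 < p.2 := hplt
    have hδu : δ ≤ y - u := (min_le_right _ _).trans (min_le_left _ _)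
    have hδv : δ ≤ v - y := (min_le_right _ _).trans (min_le_right _ _)
    have hδ1' : δ ≤ δ1 := min_le_left _ _
    have hIccuv : Set.Icc p.1 p.2 ⊆ Set.Icc u v := by
      intro s hs
      constructor
      · linarith [hp1.1, hs.1]
      · linarith [hp2.2, hs.2]
    have hIccI : Set.Icc p.1 p.2 ⊆ I := fun s hs => hI.out hu hv (hIccuv hs)
    have hfeq : (∫ s in Set.Icc p.1 p.2, f s) = ∫ s in Set.Icc p.1 p.2, h s :=
      setIntegral_congr_fun measurableSet_Icc fun s hs => hfh (hIccI hs)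
    have hpos : 0 < p.2 - p.1 := sub_pos.2 hplt
    have hinth : IntegrableOn h (Set.Icc p.1 p.2) := integ_h hmeas hE1 hE2 hh p.1 p.2
    have hsubint : (∫ s in Set.Icc p.1 p.2, h s) - h y * (p.2 - p.1) =
        ∫ s in Set.Icc p.1 p.2, (h s - h y) := by
      rw [integral_sub hinth ((integrableOn_const_iff (hC := by finiteness)).2 (Or.inr (by
        rw [Real.volume_Icc]; exact ENNReal.ofReal_lt_top)))]
      rw [setIntegral_const, Real.volume_real_Icc, max_eq_left hpos.le,
        smul_eq_mul, mul_comm]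
    have hbound : ‖∫ s in Set.Icc p.1 p.2, (h s - h y)‖ ≤ (ε / 2) * (p.2 - p.1) := by
      have hb := norm_setIntegral_le_of_norm_le_const (C := ε / 2) (μ := volume)
        (s := Set.Icc p.1 p.2) (f := fun s => h s - h y)
        (by rw [Real.volume_Icc]; exact ENNReal.ofReal_lt_top) ?_
      · rwa [Real.volume_real_Icc, max_eq_left hpos.le] at hb
      · intro s hs
        rw [Real.norm_eq_abs]
        have hsy : dist s y < δ1 := by
          rw [Real.dist_eq, abs_lt]
          constructor
          · have := hs.1; have := hp1.1; linarith
          · have := hs.2; have := hp2.2; linarith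
        exact le_of_lt (by simpa [Real.dist_eq] using hδ1p hsy)
    rw [Real.dist_eq]
    have heq2 : (∫ s in Set.Icc p.1 p.2, f s) / (p.2 - p.1) - h y =
        (∫ s in Set.Icc p.1 p.2, (h s - h y)) / (p.2 - p.1) := by
      rw [hfeq, ← hsubint]
      field_simp
    rw [heq2, abs_div, abs_of_pos hpos]
    rw [Real.norm_eq_abs] at hbound
    calc |∫ s in Set.Icc p.1 p.2, (h s - h y)| / (p.2 - p.1)
        ≤ (ε / 2 * (p.2 - p.1)) / (p.2 - p.1) := by
          apply div_le_div_of_nonneg_right hbound hpos.le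
        _ = ε / 2 := by rw [mul_div_assoc, div_self hpos.ne', mul_one]
        _ < ε := by linarith
  have hls := hT.limsup_eq
  rw [canonRep]
  exact hls

lemma abs_add_same_sign {a b : ℝ} (hab : 0 ≤ a * b) : |a + b| = |a| + |b| := by
  rcases mul_nonneg_iff.1 hab with ⟨ha, hb⟩ | ⟨ha, hb⟩
  · rw [abs_of_nonneg ha, abs_of_nonneg hb, abs_of_nonneg (by linarith)]
  · rw [abs_of_nonpos ha, abs_of_nonpos hb, abs_of_nonpos (by linarith)]; ring

lemma alt (m : ℕ → ℝ) (n : ℕ) :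
    ∃ K : ℕ, ∃ φ : ℕ → ℕ, φ 0 = 0 ∧ φ K = n ∧ (∀ k < K, φ k < φ (k + 1)) ∧
      ((∑ i ∈ Finset.range n, |m (i + 1) - m i|) =
        ∑ k ∈ Finset.range K, |m (φ (k + 1)) - m (φ k)|) ∧
      (∀ k, 0 < k → k + 1 ≤ K →
        (m (φ (k + 1)) - m (φ k)) * (m (φ k) - m (φ (k - 1))) < 0) := by
  induction n with
  | zero =>
    exact ⟨0, fun _ => 0, rfl, rfl, fun k hk => absurd hk (by omega), by simp,
      fun k hk hk1 => absurd hk1 (by omega)⟩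
  | succ n ih =>
    obtain ⟨K, φ, h0, hK, hinc, hsum, halt⟩ := ih
    have hchain : ∀ j, j ≤ K → ∀ i, i ≤ j → φ i ≤ φ j := by
      intro j
      induction j with
      | zero =>
        intro _ i hi
        have hi0 : i = 0 := Nat.le_zero.1 hi
        rw [hi0]
      | succ j ihj =>
        intro hjK i hi
        by_cases hij : i = j + 1
        · rw [hij]
        · have hij' : i ≤ j := by omega
          exact le_trans (ihj (by omega) i hij') (hinc j (by omega)).le
    rcases Nat.eq_zero_or_pos K with hK0 | hKpos
    · -- K = 0, hence n = 0
      have hn0 : n = 0 := by rw [← hK, hK0, h0]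
      subst hn0
      refine ⟨1, fun k => if k = 0 then 0 else 1, by simp, by simp, ?_, ?_, ?_⟩
      · intro k hk
        have hk0 : k = 0 := by omega
        simp [hk0]
      · simp [Finset.sum_range_one]
      · intro k hk hk1
        exact absurd (by omega : k = 0) (by omega)
    · -- K ≥ 1
      set slast := m (φ K) - m (φ (K - 1)) with hslast
      set snew := m (n + 1) - m n with hsnew
      by_cases hcase1 : snew * slast < 0
      · -- append a new alternating step
        refine ⟨K + 1, fun k => if k ≤ K then φ k else n + 1, ?_, ?_, ?_, ?_, ?_⟩
        · simp [h0]
        · simp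
        · intro k hk
          by_cases hkK : k < K
          · simp only [if_pos (by omega : k ≤ K), if_pos (by omega : k + 1 ≤ K)]
            exact hinc k hkK
          · have hkK' : k = K := by omega
            rw [hkK']
            simp only [if_pos (le_refl K), if_neg (by omega : ¬ K + 1 ≤ K), hK]
            omega
        · rw [Finset.sum_range_succ, Finset.sum_range_succ, hsum]
          congr 1
          · refine Finset.sum_congr rfl fun k hk => ?_
            have hkK : k < K := Finset.mem_range.1 hk
            simp only [if_pos (by omega : k ≤ K), if_pos (by omega : k + 1 ≤ K)]
          · simp only [if_pos (le_refl K), if_neg (by omega : ¬ K + 1 ≤ K), hK]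
        · intro k hk hk1
          by_cases hkK : k + 1 ≤ K
          · simp only [if_pos (by omega : k ≤ K), if_pos hkK,
              if_pos (by omega : k - 1 ≤ K)]
            exact halt k hk hkK
          · have hkK' : k = K := by omega
            rw [hkK']
            simp only [if_pos (le_refl K), if_neg (by omega : ¬ K + 1 ≤ K),
              if_pos (by omega : K - 1 ≤ K), hK]
            have hcc := hcase1
            rw [hsnew, hslast, hK] at hcc
            exact hcc
      · have hge : 0 ≤ snew * slast := not_lt.1 hcase1
        by_cases hlast0 : slast = 0
        · -- K = 1 and the whole prefix is flat
          have hK1 : K = 1 := by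
            by_contra hK1
            have hfac := halt (K - 1) (by omega) (by omega)
            rw [(by omega : K - 1 + 1 = K)] at hfac
            rw [← hslast, hlast0, zero_mul] at hfac
            exact lt_irrefl 0 hfac
          have hφ1 : φ 1 = n := by rw [← hK1]; exact hK
          have hpre : (∑ i ∈ Finset.range n, |m (i + 1) - m i|) = 0 := by
            rw [hsum, hK1, Finset.sum_range_one, h0, hφ1]
            have hz : m n - m 0 = 0 := by
              have := hlast0
              rw [hslast, hK1] at this
              simpa [h0, hφ1] using this
            rw [show m n - m 0 = 0 from hz, abs_zero]
          have hmn0 : m n = m 0 := by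
            have htel : (∑ i ∈ Finset.range n, (m (i + 1) - m i)) = m n - m 0 :=
              Finset.sum_range_sub m n
            have habs : |m n - m 0| ≤ ∑ i ∈ Finset.range n, |m (i + 1) - m i| := by
              rw [← htel]
              exact Finset.abs_sum_le_sum_abs _ _
            rw [hpre] at habs
            have := abs_nonneg (m n - m 0)
            have h2 : |m n - m 0| = 0 := le_antisymm habs this
            rw [abs_eq_zero] at h2
            linarith
          refine ⟨1, fun k => if k = 0 then 0 else n + 1, by simp, by simp, ?_, ?_, ?_⟩
          · intro k hk
            have hk0 : k = 0 := by omega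
            simp [hk0]
          · rw [Finset.sum_range_succ, hpre, Finset.sum_range_one, hmn0]
            simp
          · intro k hk hk1
            exact absurd (by omega : k = 0) (by omega)
        · -- merge the new step into the last one
          obtain ⟨J, hJ⟩ : ∃ J, K = J + 1 := ⟨K - 1, by omega⟩
          refine ⟨K, fun k => if k = K then n + 1 else φ k, ?_, ?_, ?_, ?_, ?_⟩
          · simp only [if_neg (by omega : ¬ (0 : ℕ) = K), h0]
          · simp
          · intro k hk
            by_cases hkK : k + 1 = K
            · simp only [if_neg (by omega : ¬ k = K), if_pos hkK]
              have : φ k ≤ φ K := hchain K (le_refl K) k (by omega)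
              omega
            · simp only [if_neg (by omega : ¬ k = K), if_neg hkK]
              exact hinc k hk
          · have hKJ : Finset.range K = Finset.range (J + 1) := by rw [hJ]
            rw [Finset.sum_range_succ, hsum, hKJ, Finset.sum_range_succ,
              Finset.sum_range_succ]
            have hterms : ∀ k ∈ Finset.range J,
                |m (if k + 1 = K then n + 1 else φ (k + 1)) -
                  m (if k = K then n + 1 else φ k)| = |m (φ (k + 1)) - m (φ k)| := by
              intro k hk
              have hkJ : k < J := Finset.mem_range.1 hk
              simp only [if_neg (by omega : ¬ k + 1 = K), if_neg (by omega : ¬ k = K)]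
            rw [Finset.sum_congr rfl hterms]
            have hφJ1 : φ (J + 1) = n := by rw [← hJ]; exact hK
            have hslast' : slast = m (φ (J + 1)) - m (φ J) := by
              rw [hslast, hJ]
              simp only [Nat.add_sub_cancel]
            have hlasteq : |m (if J + 1 = K then n + 1 else φ (J + 1)) -
                m (if J = K then n + 1 else φ J)| =
                |m (φ (J + 1)) - m (φ J)| + |m (n + 1) - m n| := by
              simp only [if_pos (by omega : J + 1 = K), if_neg (by omega : ¬ J = K)]
              have hdecomp : m (n + 1) - m (φ J) = snew + slast := by
                rw [hsnew, hslast', hφJ1]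
                ring
              rw [hdecomp, abs_add_same_sign hge, hslast', hsnew]
              ring
            rw [hlasteq]
            ring
          · intro k hk hk1
            by_cases hkK : k + 1 = K
            · -- the merged last step keeps its sign
              have hK2 : 2 ≤ K := by omega
              have hold := halt k hk hk1
              have hfirst : m (φ (k + 1)) - m (φ k) = slast := by
                have hkk : k = K - 1 := by omega
                rw [hslast, hkK, hkk]
              simp only [if_neg (by omega : ¬ k = K), if_pos hkK,
                if_neg (by omega : ¬ k - 1 = K)]
              have hnew1 : m (n + 1) - m (φ k) = snew + slast := by
                have hφk : φ k = φ (K - 1) := by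
                  have hkk : k = K - 1 := by omega
                  rw [hkk]
                rw [hsnew, hslast, hφk, ← hK]
                ring
              rw [hnew1]
              rw [hfirst] at hold
              set P := m (φ k) - m (φ (k - 1)) with hP
              rcases lt_trichotomy slast 0 with hs | hs | hs
              · have hPpos : 0 < P := by nlinarith
                have hsnew_nonpos : snew ≤ 0 := by nlinarith
                exact mul_neg_of_neg_of_pos (by linarith) hPpos
              · exact absurd hs hlast0
              · have hPneg : P < 0 := by nlinarith
                have hsnew_nonneg : 0 ≤ snew := by nlinarith
                exact mul_neg_of_pos_of_neg (by linarith) hPneg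
            · simp only [if_neg (by omega : ¬ k = K), if_neg hkK,
                if_neg (by omega : ¬ k - 1 = K)]
              exact halt k hk (by omega)

theorem main (hI : I.OrdConnected) (hI' : I.Nontrivial) (hfh : Set.EqOn f h I)
    (hC : ∀ x ∈ I, |h x| ≤ C) (hmeas : Measurable h)
    (hE1 : Monotone E1) (hE2 : Monotone E2) (hh : ∀ x, h x = E1 x - E2 x) :
    eVariationOn (mf I f) I ≤ eVariationOn (canonRep f) I := by
  rw [eVariationOn]
  refine iSup_le ?_
  rintro ⟨n, u, hu, hus⟩
  refine ENNReal.le_of_forall_pos_le_add fun ε hε hfin => ?_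
  obtain ⟨K, φ, hφ0, hφK, hinc, hsum, halt⟩ := alt (fun i => mf I f (u i)) n
  set M : ℝ → ℝ := mf I f with hM
  set z : ℕ → ℝ := fun k => u (φ k) with hz
  have hzI : ∀ k, z k ∈ I := fun k => hus (φ k)
  have hL : (∑ i ∈ Finset.range n, edist (M (u (i + 1))) (M (u i))) =
      ENNReal.ofReal (∑ k ∈ Finset.range K, |M (z (k + 1)) - M (z k)|) := by
    rw [← hsum, ENNReal.ofReal_sum_of_nonneg (fun i _ => abs_nonneg _)]
    refine Finset.sum_congr rfl fun i _ => ?_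
    rw [edist_dist, Real.dist_eq]
  rw [hL]
  rcases Nat.eq_zero_or_pos K with hK0 | hKpos
  · rw [hK0]
    simp only [Finset.range_zero, Finset.sum_empty, ENNReal.ofReal_zero]
    positivity
  by_cases hallz : ∀ k < K, M (z (k + 1)) = M (z k)
  · have : (∑ k ∈ Finset.range K, |M (z (k + 1)) - M (z k)|) = 0 := by
      refine Finset.sum_eq_zero fun k hk => ?_
      rw [hallz k (Finset.mem_range.1 hk), sub_self, abs_zero]
    rw [this, ENNReal.ofReal_zero]
    positivity
  push_neg at hallz
  obtain ⟨k0, hk0K, hk0ne⟩ := hallz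
  have hstep : ∀ k < K, M (z (k + 1)) ≠ M (z k) := by
    intro k hk H
    have hzero : M (z (k + 1)) - M (z k) = 0 := by rw [H, sub_self]
    rcases Nat.eq_zero_or_pos k with rfl | hkpos
    · rcases Nat.lt_or_ge 1 K with hK2 | hK2
      · have := halt 1 (by omega) (by omega)
        simp only [Nat.sub_self] at this
        rw [hzero] at this
        simp at this
      · have hK1 : K = 1 := by omega
        rw [hK1] at hk0K
        have hk00 : k0 = 0 := by omega
        rw [hk00] at hk0ne
        exact hk0ne H
    · have := halt k hkpos (by omega)
      rw [hzero] at this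
      simp at this
  have hzmono : ∀ k < K, z k < z (k + 1) := by
    intro k hk
    have hle : z k ≤ z (k + 1) := hu (hinc k hk).le
    rcases lt_or_eq_of_le hle with hlt | heq
    · exact hlt
    · exact absurd (by rw [heq]) (hstep k hk)
  have hε'pos : (0 : ℝ) < (ε : ℝ) / (2 * K + 2) := by
    apply div_pos
    · exact_mod_cast hε
    · positivity
  set ε' : ℝ := (ε : ℝ) / (2 * K + 2) with hε'
  set isPeak : ℕ → Prop := fun k =>
    if k = 0 then M (z 1) < M (z 0) else M (z (k - 1)) < M (z k) with hisPeak
  have Pstep : ∀ k < K, isPeak k → M (z (k + 1)) < M (z k) := by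
    intro k hk hpk
    rcases Nat.eq_zero_or_pos k with rfl | hkpos
    · simpa [hisPeak] using hpk
    · have hpk' : M (z (k - 1)) < M (z k) := by
        simpa [hisPeak, Nat.pos_iff_ne_zero.1 hkpos] using hpk
      have hprod := halt k hkpos (by omega)
      rcases lt_trichotomy (M (z (k + 1))) (M (z k)) with hc | hc | hc
      · exact hc
      · exact absurd hc (hstep k hk)
      · nlinarith
  have Vstep : ∀ k < K, ¬isPeak k → M (z k) < M (z (k + 1)) := by
    intro k hk hnpk
    rcases Nat.eq_zero_or_pos k with rfl | hkpos
    · have hnlt : ¬ M (z 1) < M (z 0) := by simpa [hisPeak] using hnpk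
      rcases lt_trichotomy (M (z 0)) (M (z 1)) with hc | hc | hc
      · exact hc
      · exact absurd hc.symm (hstep 0 hk)
      · exact absurd hc hnlt
    · have hnlt : ¬ M (z (k - 1)) < M (z k) := by
        simpa [hisPeak, Nat.pos_iff_ne_zero.1 hkpos] using hnpk
      have hlt : M (z k) < M (z (k - 1)) := by
        rcases lt_trichotomy (M (z k)) (M (z (k - 1))) with hc | hc | hc
        · exact hc
        · exfalso
          refine hstep (k - 1) (by omega) ?_
          rw [(by omega : k - 1 + 1 = k), hc]
        · exact absurd hc hnlt
      have hprod := halt k hkpos (by omega)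
      rcases lt_trichotomy (M (z k)) (M (z (k + 1))) with hc | hc | hc
      · exact hc
      · exact absurd hc.symm (hstep k hk)
      · nlinarith
  have PeakSucc : ∀ k < K, ¬isPeak k → isPeak (k + 1) := by
    intro k hk hnpk
    have := Vstep k hk hnpk
    simp only [hisPeak, if_neg (by omega : ¬ k + 1 = 0), Nat.add_sub_cancel]
    exact this
  have PeakSucc' : ∀ k < K, isPeak k → ¬isPeak (k + 1) := by
    intro k hk hpk hpk1
    have h1 := Pstep k hk hpk
    have h2 : M (z k) < M (z (k + 1)) := by
      simpa [hisPeak, if_neg (by omega : ¬ k + 1 = 0), Nat.add_sub_cancel] using hpk1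
    linarith
  -- nonempty helper for sup sets
  have hIne : ∀ {γ δ : ℝ}, γ ∈ I → δ ∈ I → γ < δ →
      (DD I h ∩ Set.Ioo γ δ).Nonempty := by
    intro γ δ hγ hδ hlt
    exact DD_nonempty hE1 hE2 hh hlt (fun t ht => hI.out hγ hδ ⟨ht.1.le, ht.2.le⟩)
  -- peak witnesses
  have peak_ex : ∀ k, ∃ w, k ≤ K → isPeak k → w ∈ DD I h ∧
      (0 < k → z (k - 1) < w) ∧ (k < K → w < z (k + 1)) ∧ M (z k) - ε' < |h w| := by
    intro k
    by_cases hkh : k ≤ K ∧ isPeak k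
    case neg => exact ⟨0, fun h1 h2 => absurd ⟨h1, h2⟩ hkh⟩
    obtain ⟨hkK, hpk⟩ := hkh
    rcases Nat.eq_zero_or_pos k with rfl | hkpos
    · -- initial peak
      have hlt : M (z 1) < M (z 0) := by simpa [hisPeak] using hpk
      have hz01 : z 0 < z 1 := hzmono 0 hKpos
      have hkey := key_left hI hI' hfh hC hmeas hE1 hE2 hh (hzI 0) (hzI 1) hz01
      have hSS : M (z 0) ≤ SS I h (Set.Iio (z 1)) := by
        rcases le_max_iff.1 hkey with hc | hc
        · exact absurd hc (not_le.2 hlt)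
        · exact hc
      have hne : ((fun t => |h t|) '' (DD I h ∩ Set.Iio (z 1))).Nonempty := by
        obtain ⟨y, hyD, hyo⟩ := hIne (hzI 0) (hzI 1) hz01
        exact ⟨|h y|, ⟨y, ⟨hyD, hyo.2⟩, rfl⟩⟩
      have hlt2 : M (z 0) - ε' < SS I h (Set.Iio (z 1)) := by linarith
      obtain ⟨r, hrmem, hrgt⟩ := exists_lt_of_lt_csSup hne hlt2
      obtain ⟨w, ⟨hwD, hwI⟩, rfl⟩ := hrmem
      exact ⟨w, fun _ _ => ⟨hwD, fun h0 => absurd h0 (by omega),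
        fun _ => hwI, hrgt⟩⟩
    · have hk0 : ¬ k = 0 := by omega
      have hpk' : M (z (k - 1)) < M (z k) := by simpa [hisPeak, hk0] using hpk
      have hzk1 : z (k - 1) < z k := by
        have := hzmono (k - 1) (by omega)
        rwa [(by omega : k - 1 + 1 = k)] at this
      by_cases hkK2 : k < K
      · -- interior peak
        have hzk2 : z k < z (k + 1) := hzmono k hkK2
        have hkey := key_int hI hI' hfh hC hmeas hE1 hE2 hh (hzI (k - 1)) (hzI k)
          (hzI (k + 1)) hzk1 hzk2
        have hMk1 : M (z (k + 1)) < M (z k) := Pstep k hkK2 hpk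
        have hSS : M (z k) ≤ SS I h (Set.Ioo (z (k - 1)) (z (k + 1))) := by
          rcases le_max_iff.1 hkey with hc | hc
          · rcases le_max_iff.1 hc with hc2 | hc2
            · exact absurd hc2 (not_le.2 hpk')
            · exact absurd hc2 (not_le.2 hMk1)
          · exact hc
        have hne : ((fun t => |h t|) ''
            (DD I h ∩ Set.Ioo (z (k - 1)) (z (k + 1)))).Nonempty := by
          obtain ⟨y, hyD, hyo⟩ := hIne (hzI (k - 1)) (hzI k) hzk1
          exact ⟨|h y|, ⟨y, ⟨hyD, hyo.1, hyo.2.trans hzk2⟩, rfl⟩⟩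
        have hlt2 : M (z k) - ε' < SS I h (Set.Ioo (z (k - 1)) (z (k + 1))) := by linarith
        obtain ⟨r, hrmem, hrgt⟩ := exists_lt_of_lt_csSup hne hlt2
        obtain ⟨w, ⟨hwD, hwI⟩, rfl⟩ := hrmem
        exact ⟨w, fun _ _ => ⟨hwD, fun _ => hwI.1, fun _ => hwI.2, hrgt⟩⟩
      · -- terminal peak, k = K
        have hkK' : k = K := by omega
        have hkey := key_right hI hI' hfh hC hmeas hE1 hE2 hh (hzI (k - 1)) (hzI k) hzk1
        have hSS : M (z k) ≤ SS I h (Set.Ioi (z (k - 1))) := by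
          rcases le_max_iff.1 hkey with hc | hc
          · exact absurd hc (not_le.2 hpk')
          · exact hc
        have hne : ((fun t => |h t|) '' (DD I h ∩ Set.Ioi (z (k - 1)))).Nonempty := by
          obtain ⟨y, hyD, hyo⟩ := hIne (hzI (k - 1)) (hzI k) hzk1
          exact ⟨|h y|, ⟨y, ⟨hyD, hyo.1⟩, rfl⟩⟩
        have hlt2 : M (z k) - ε' < SS I h (Set.Ioi (z (k - 1))) := by linarith
        obtain ⟨r, hrmem, hrgt⟩ := exists_lt_of_lt_csSup hne hlt2
        obtain ⟨w, ⟨hwD, hwI⟩, rfl⟩ := hrmem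
        exact ⟨w, fun _ _ => ⟨hwD, fun _ => hwI, fun hlt => absurd hlt (by omega),
          hrgt⟩⟩
  choose W hW using peak_ex
  -- valley witnesses
  have valley_ex : ∀ k, ∃ y, k ≤ K → ¬isPeak k → y ∈ DD I h ∧
      (0 < k → W (k - 1) < y) ∧ (k < K → y < W (k + 1)) ∧ |h y| < M (z k) + ε' := by
    intro k
    by_cases hkh : k ≤ K ∧ ¬isPeak k
    case neg => exact ⟨0, fun h1 h2 => absurd ⟨h1, h2⟩ hkh⟩
    obtain ⟨hkK, hnpk⟩ := hkh
    have hWprev : 0 < k → W (k - 1) < z k := by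
      intro hkpos
      have hkm : k - 1 < K := by omega
      have hpkm : isPeak (k - 1) := by
        by_contra hnpkm
        have := PeakSucc (k - 1) hkm hnpkm
        rw [(by omega : k - 1 + 1 = k)] at this
        exact hnpk this
      have := (hW (k - 1) (by omega) hpkm).2.2.1 hkm
      rwa [(by omega : k - 1 + 1 = k)] at this
    by_cases hkK2 : k < K
    · -- valley with a successor peak
      have hpk1 : isPeak (k + 1) := PeakSucc k hkK2 hnpk
      have hWk1 := hW (k + 1) (by omega) hpk1
      have hzW : z k < W (k + 1) := by
        have := hWk1.2.1 (by omega)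
        simpa using this
      obtain ⟨y, hyD, hy1, hy2, hy3⟩ := Wr hI hE1 hE2 hh (hzI k) (hzI (k + 1))
        (hzmono k hkK2) hzW hε'pos
      have hrl := LBr hI hfh hC hmeas hE1 hE2 hh (hzI k) (hzI (k + 1)) (hzmono k hkK2)
      exact ⟨y, fun _ _ => ⟨hyD, fun hkpos => (hWprev hkpos).trans hy1,
        fun _ => hy2, by rw [← hM] at hrl; linarith⟩⟩
    · -- terminal valley, k = K
      have hkK' : k = K := by omega
      have hkpos : 0 < k := by
        by_contra hk0
        have hk00 : k = 0 := by omega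
        rw [hk00] at hkK'
        omega
      have hzprev : z (k - 1) < z k := by
        have := hzmono (k - 1) (by omega)
        rwa [(by omega : k - 1 + 1 = k)] at this
      by_cases hex : ∃ t ∈ I, z k < t
      · obtain ⟨t, htI, hzt⟩ := hex
        obtain ⟨y, hyD, hy1, hy2, hy3⟩ := Wr hI hE1 hE2 hh (hzI k) htI hzt
          (by linarith : z k < z k + 1) hε'pos
        have hrl := LBr hI hfh hC hmeas hE1 hE2 hh (hzI k) htI hzt
        exact ⟨y, fun _ _ => ⟨hyD, fun hp => (hWprev hp).trans hy1,
          fun hlt => absurd hlt (by omega), by rw [← hM] at hrl; linarith⟩⟩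
      · obtain ⟨y, hyD, hy1, hy2, hy3⟩ := Wl hI hE1 hE2 hh (hzI (k - 1)) (hzI k)
          hzprev (hWprev hkpos) hε'pos
        have hrl := LBl hI hfh hC hmeas hE1 hE2 hh (hzI (k - 1)) (hzI k) hzprev
        exact ⟨y, fun _ _ => ⟨hyD, fun _ => hy1,
          fun hlt => absurd hlt (by omega), by rw [← hM] at hrl; linarith⟩⟩
  choose Y hY using valley_ex
  classical
  set c : ℕ → ℝ := fun k => if isPeak k then W k else Y k with hc
  have hcD : ∀ k ≤ K, c k ∈ DD I h := by
    intro k hk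
    by_cases hpk : isPeak k
    · simp only [hc, if_pos hpk]
      exact (hW k hk hpk).1
    · simp only [hc, if_neg hpk]
      exact (hY k hk hpk).1
  have hcstep : ∀ k < K, c k < c (k + 1) := by
    intro k hk
    by_cases hpk : isPeak k
    · have hnpk1 : ¬isPeak (k + 1) := PeakSucc' k hk hpk
      simp only [hc, if_pos hpk, if_neg hnpk1]
      have := (hY (k + 1) (by omega) hnpk1).2.1 (by omega)
      simpa using this
    · have hpk1 : isPeak (k + 1) := PeakSucc k hk hpk
      simp only [hc, if_neg hpk, if_pos hpk1]
      exact (hY k (by omega) hpk).2.2.1 hk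
  have hstepbound : ∀ k < K,
      |M (z (k + 1)) - M (z k)| ≤ |h (c (k + 1)) - h (c k)| + 2 * ε' := by
    intro k hk
    have habs2 : |(|h (c (k + 1))|) - (|h (c k)|)| ≤ |h (c (k + 1)) - h (c k)| :=
      abs_abs_sub_abs_le_abs_sub _ _
    by_cases hpk : isPeak k
    · have hnpk1 : ¬isPeak (k + 1) := PeakSucc' k hk hpk
      have hdown := Pstep k hk hpk
      have hWb := (hW k (by omega) hpk).2.2.2
      have hYb := (hY (k + 1) (by omega) hnpk1).2.2.2
      simp only [hc, if_pos hpk, if_neg hnpk1]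
      rw [abs_of_neg (by linarith : M (z (k + 1)) - M (z k) < 0)]
      have h3 : |h (Y (k + 1))| - |h (W k)| ≤ |h (Y (k + 1)) - h (W k)| :=
        abs_sub_abs_le_abs_sub _ _
      have h4 : -(|h (Y (k + 1)) - h (W k)|) ≤ |h (Y (k + 1))| - |h (W k)| := by
        have := abs_sub_abs_le_abs_sub (h (W k)) (h (Y (k + 1)))
        rw [abs_sub_comm (h (W k))] at this
        linarith
      linarith
    · have hpk1 : isPeak (k + 1) := PeakSucc k hk hpk
      have hup := Vstep k hk hpk
      have hYb := (hY k (by omega) hpk).2.2.2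
      have hWb := (hW (k + 1) (by omega) hpk1).2.2.2
      simp only [hc, if_neg hpk, if_pos hpk1]
      rw [abs_of_pos (by linarith : 0 < M (z (k + 1)) - M (z k))]
      have h3 : |h (W (k + 1))| - |h (Y k)| ≤ |h (W (k + 1)) - h (Y k)| :=
        abs_sub_abs_le_abs_sub _ _
      linarith
  -- sum everything
  have hsumbound : (∑ k ∈ Finset.range K, |M (z (k + 1)) - M (z k)|) ≤
      (∑ k ∈ Finset.range K, |h (c (k + 1)) - h (c k)|) + K * (2 * ε') := by
    calc (∑ k ∈ Finset.range K, |M (z (k + 1)) - M (z k)|)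
        ≤ ∑ k ∈ Finset.range K, (|h (c (k + 1)) - h (c k)| + 2 * ε') := by
          refine Finset.sum_le_sum fun k hk => hstepbound k (Finset.mem_range.1 hk)
      _ = (∑ k ∈ Finset.range K, |h (c (k + 1)) - h (c k)|) + K * (2 * ε') := by
          rw [Finset.sum_add_distrib, Finset.sum_const, Finset.card_range,
            nsmul_eq_mul]
  -- the witness chain, extended
  have hcmono : ∀ i j, i ≤ j → j ≤ K → c i ≤ c j := by
    intro i j hij hjK
    induction j with
    | zero =>
      have : i = 0 := by omega
      rw [this]
    | succ j ihj =>
      by_cases hijj : i = j + 1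
      · rw [hijj]
      · exact le_trans (ihj (by omega) (by omega)) (hcstep j (by omega)).le
  set c' : ℕ → ℝ := fun j => c (min j K) with hc'
  have hc'mono : Monotone c' := by
    intro a b hab
    exact hcmono _ _ (min_le_min_right K hab) (min_le_right _ _)
  have hc'I : ∀ j, c' j ∈ I := by
    intro j
    exact DD_sub I h (hcD _ (min_le_right j K))
  have hvar := eVariationOn.sum_le (f := canonRep f) (n := K) hc'mono hc'I
  have hcr : ∀ k ≤ K, canonRep f (c k) = h (c k) := fun k hk =>
    canonRep_eq hI hfh hmeas hE1 hE2 hh (hcD k hk)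
  have hvar2 : ENNReal.ofReal (∑ k ∈ Finset.range K, |h (c (k + 1)) - h (c k)|) ≤
      eVariationOn (canonRep f) I := by
    refine le_trans (le_of_eq ?_) hvar
    rw [ENNReal.ofReal_sum_of_nonneg (fun i _ => abs_nonneg _)]
    refine Finset.sum_congr rfl fun k hk => ?_
    have hkK : k < K := Finset.mem_range.1 hk
    rw [edist_dist, Real.dist_eq]
    simp only [hc']
    rw [min_eq_left (by omega : k + 1 ≤ K), min_eq_left (by omega : k ≤ K)]
    rw [hcr (k + 1) (by omega), hcr k (by omega)]
  -- finish
  calc ENNReal.ofReal (∑ k ∈ Finset.range K, |M (z (k + 1)) - M (z k)|)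
      ≤ ENNReal.ofReal ((∑ k ∈ Finset.range K, |h (c (k + 1)) - h (c k)|) +
          K * (2 * ε')) := ENNReal.ofReal_le_ofReal hsumbound
    _ ≤ ENNReal.ofReal (∑ k ∈ Finset.range K, |h (c (k + 1)) - h (c k)|) +
          ENNReal.ofReal (K * (2 * ε')) := ENNReal.ofReal_add_le
    _ ≤ eVariationOn (canonRep f) I + ENNReal.ofReal (K * (2 * ε')) := by
          exact add_le_add_left hvar2 _
    _ ≤ eVariationOn (canonRep f) I + ε := by
          refine add_le_add_right ?_ _
          have hle : (K : ℝ) * (2 * ε') ≤ (ε : ℝ) := by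
            rw [hε']
            have h2K : (0 : ℝ) < 2 * (K : ℝ) + 2 := by positivity
            have heq : (K : ℝ) * (2 * ((ε : ℝ) / (2 * (K : ℝ) + 2))) =
                (ε : ℝ) * ((2 * (K : ℝ)) / (2 * (K : ℝ) + 2)) := by
              field_simp
            rw [heq]
            have hfrac : (2 * (K : ℝ)) / (2 * (K : ℝ) + 2) ≤ 1 := by
              rw [div_le_one h2K]
              linarith
            nlinarith [NNReal.coe_nonneg ε]
          calc ENNReal.ofReal ((K : ℝ) * (2 * ε')) ≤ ENNReal.ofReal (ε : ℝ) :=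
                ENNReal.ofReal_le_ofReal hle
            _ = (ε : ℝ≥0∞) := ENNReal.ofReal_coe_nnreal

end Main

end APL

/-- If `f` has bounded variation on `I`, then `V(Mf) ≤ V(f̄)` where `f̄` is the
canonical representative. -/
theorem stmt1 (I : Set ℝ) (hI : I.OrdConnected) (hI' : I.Nontrivial)
    (f : ℝ → ℝ) (hf : BoundedVariationOn f I) :
    eVariationOn (mf I f) I ≤ eVariationOn (canonRep f) I := by
  obtain ⟨x₀, hx₀⟩ := hI'.nonempty
  have hlbv : LocallyBoundedVariationOn f I := hf.locallyBoundedVariationOn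
  set V : ℝ := (eVariationOn f I).toReal with hV
  have hVnn : 0 ≤ V := ENNReal.toReal_nonneg
  set p : ℝ → ℝ := fun x => variationOnFromTo f I x₀ x with hp
  have hpmono : MonotoneOn p I := variationOnFromTo.monotoneOn hlbv hx₀
  set q : ℝ → ℝ := fun x => p x - f x with hq
  have hqmono : MonotoneOn q I := variationOnFromTo.sub_self_monotoneOn hlbv hx₀
  have hpb : ∀ x ∈ I, |p x| ≤ V := by
    intro x hx
    have hmono := ENNReal.toReal_mono hf
      (eVariationOn.mono f (Set.inter_subset_left : I ∩ Set.Icc x₀ x ⊆ I))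
    have hmono' := ENNReal.toReal_mono hf
      (eVariationOn.mono f (Set.inter_subset_left : I ∩ Set.Icc x x₀ ⊆ I))
    have hpx : p x = variationOnFromTo f I x₀ x := rfl
    rcases le_total x₀ x with hle | hle
    · rw [hpx, variationOnFromTo.eq_of_le f I hle,
        abs_of_nonneg ENNReal.toReal_nonneg]
      exact hmono
    · rw [hpx, variationOnFromTo.eq_of_ge f I hle, abs_neg,
        abs_of_nonneg ENNReal.toReal_nonneg]
      exact hmono'
  have hfb : ∀ x ∈ I, |f x| ≤ |f x₀| + V := by
    intro x hx
    have hd : dist (f x) (f x₀) ≤ V := BoundedVariationOn.dist_le hf hx hx₀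
    rw [Real.dist_eq] at hd
    have : |f x| ≤ |f x - f x₀| + |f x₀| := by
      have := abs_add_le (f x - f x₀) (f x₀)
      simpa using this
    linarith
  have hqb : ∀ x ∈ I, |q x| ≤ V + (|f x₀| + V) := by
    intro x hx
    have h1 := hpb x hx
    have h2 := hfb x hx
    have hqx : q x = p x - f x := rfl
    rw [hqx]
    linarith [abs_sub (p x) (f x)]
  obtain ⟨E1, hE1, hpE1⟩ := hpmono.exists_monotone_extension
    ⟨-V, by rintro _ ⟨x, hx, rfl⟩; linarith [neg_abs_le (p x), hpb x hx]⟩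
    ⟨V, by rintro _ ⟨x, hx, rfl⟩; linarith [le_abs_self (p x), hpb x hx]⟩
  obtain ⟨E2, hE2, hqE2⟩ := hqmono.exists_monotone_extension
    ⟨-(V + (|f x₀| + V)), by
      rintro _ ⟨x, hx, rfl⟩; linarith [neg_abs_le (q x), hqb x hx]⟩
    ⟨V + (|f x₀| + V), by
      rintro _ ⟨x, hx, rfl⟩; linarith [le_abs_self (q x), hqb x hx]⟩
  set h : ℝ → ℝ := fun x => E1 x - E2 x with hhdef
  have hfh : Set.EqOn f h I := by
    intro x hx
    have h1 : p x = E1 x := hpE1 hx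
    have h2 : q x = E2 x := hqE2 hx
    have hhx : h x = E1 x - E2 x := rfl
    have hqx : q x = p x - f x := rfl
    rw [hhx, ← h1, ← h2, hqx]
    ring
  have hh : ∀ x, h x = E1 x - E2 x := fun _ => rfl
  have hmeas : Measurable h := hE1.measurable.sub hE2.measurable
  have hC : ∀ x ∈ I, |h x| ≤ |f x₀| + V := by
    intro x hx
    rw [← hfh hx]
    exact hfb x hx
  exact APL.main hI hI' hfh hC hmeas hE1 hE2 hh
end

section
/- If f : I → ℝ is a continuous function of bounded variation that maps Lebesgue-null sets to Lebesgue-null sets, then f is absolutely continuous (Banach–Zarecki, one direction). -/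
open MeasureTheory Set Filter ENNReal
open Topology

lemma bz_vMono {f : ℝ → ℝ} {I : Set ℝ} (hbv : BoundedVariationOn f I) (c : ℝ) :
    Monotone (variationOnFromTo f I c) := by
  intro x y hxy
  have hfin : ∀ t : Set ℝ, t ⊆ I → eVariationOn f t ≠ ⊤ :=
    fun t ht => ne_top_of_le_ne_top hbv (eVariationOn.mono f ht)
  rcases le_or_gt c x with hcx | hxc
  · rw [variationOnFromTo.eq_of_le f I hcx, variationOnFromTo.eq_of_le f I (hcx.trans hxy)]
    exact ENNReal.toReal_mono (hfin _ inter_subset_left)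
      (eVariationOn.mono f (inter_subset_inter_right _ (Icc_subset_Icc_right hxy)))
  · rcases le_or_gt c y with hcy | hyc
    · exact le_trans (variationOnFromTo.nonpos_of_ge f I hxc.le)
        (variationOnFromTo.nonneg_of_le f I hcy)
    · rw [variationOnFromTo.eq_of_ge f I hxc.le, variationOnFromTo.eq_of_ge f I hyc.le]
      exact neg_le_neg (ENNReal.toReal_mono (hfin _ inter_subset_left)
        (eVariationOn.mono f (inter_subset_inter_right _ (Icc_subset_Icc_left hxy))))

lemma bz_vBound {f : ℝ → ℝ} {I : Set ℝ} (hbv : BoundedVariationOn f I) (c x : ℝ) :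
    |variationOnFromTo f I c x| ≤ (eVariationOn f I).toReal := by
  have hfin : ∀ t : Set ℝ, t ⊆ I → eVariationOn f t ≠ ⊤ :=
    fun t ht => ne_top_of_le_ne_top hbv (eVariationOn.mono f ht)
  rcases le_or_gt c x with hcx | hxc
  · rw [variationOnFromTo.eq_of_le f I hcx, abs_of_nonneg ENNReal.toReal_nonneg]
    exact ENNReal.toReal_mono hbv (eVariationOn.mono f inter_subset_left)
  · rw [variationOnFromTo.eq_of_ge f I hxc.le, abs_neg, abs_of_nonneg ENNReal.toReal_nonneg]
    exact ENNReal.toReal_mono hbv (eVariationOn.mono f inter_subset_left)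

lemma bz_key {f : ℝ → ℝ} {I : Set ℝ} (hbv : BoundedVariationOn f I) {c u v : ℝ}
    (hc : c ∈ I) (hu : u ∈ I) (hv : v ∈ I) (huv : u ≤ v) :
    |f v - f u| ≤ variationOnFromTo f I c v - variationOnFromTo f I c u := by
  have hadd := variationOnFromTo.add hbv.locallyBoundedVariationOn hc hu hv
  have h1 : variationOnFromTo f I c v - variationOnFromTo f I c u
      = variationOnFromTo f I u v := by linarith
  rw [h1, variationOnFromTo.eq_of_le f I huv]
  have hum : u ∈ I ∩ Icc u v := ⟨hu, le_refl u, huv⟩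
  have hvm : v ∈ I ∩ Icc u v := ⟨hv, huv, le_refl v⟩
  have h2 := eVariationOn.edist_le (s := I ∩ Icc u v) f hum hvm
  have h3 : edist (f u) (f v) = ENNReal.ofReal |f v - f u| := by
    rw [edist_dist, Real.dist_eq, abs_sub_comm]
  rw [h3] at h2
  have hfin : eVariationOn f (I ∩ Icc u v) ≠ ⊤ :=
    ne_top_of_le_ne_top hbv (eVariationOn.mono f inter_subset_left)
  calc |f v - f u| = (ENNReal.ofReal |f v - f u|).toReal := by
        rw [ENNReal.toReal_ofReal (abs_nonneg _)]
    _ ≤ _ := ENNReal.toReal_mono hfin h2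

lemma bz_slope {f h : ℝ → ℝ} {I : Set ℝ} {x F H : ℝ}
    (hx : x ∈ interior I)
    (hf : HasDerivAt f F x) (hh : HasDerivAt h H x)
    (hkey : ∀ u v, u ∈ I → v ∈ I → u ≤ v → |f v - f u| + (v - u) ≤ h v - h u) :
    |F| + 1 ≤ H := by
  have hxI : x ∈ I := interior_subset hx
  have hle : (𝓝[>] x) ≤ (𝓝[≠] x) :=
    nhdsWithin_mono x (fun y hy => ne_of_gt hy)
  have hI : ∀ᶠ y in 𝓝[>] x, y ∈ I := by
    apply Filter.Eventually.filter_mono nhdsWithin_le_nhds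
    exact Filter.mem_of_superset (isOpen_interior.mem_nhds hx) interior_subset
  have hev : ∀ᶠ y in 𝓝[>] x, |slope f x y| + 1 ≤ slope h x y := by
    filter_upwards [hI, self_mem_nhdsWithin] with y hyI hxy
    rw [mem_Ioi] at hxy
    have hpos : 0 < y - x := by linarith
    have := hkey x y hxI hyI hxy.le
    rw [slope_def_field, slope_def_field, abs_div, abs_of_pos hpos,
      div_add' _ _ _ hpos.ne']
    gcongr
    linarith
  have T1 : Tendsto (fun y => |slope f x y| + 1) (𝓝[>] x) (𝓝 (|F| + 1)) := by
    have := (hasDerivAt_iff_tendsto_slope.1 hf).mono_left hle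
    exact (((continuous_abs.tendsto F).comp this).add tendsto_const_nhds)
  have T2 : Tendsto (slope h x) (𝓝[>] x) (𝓝 H) :=
    (hasDerivAt_iff_tendsto_slope.1 hh).mono_left hle
  exact le_of_tendsto_of_tendsto T1 T2 hev

lemma bz_interior {I : Set ℝ} (hI : I.OrdConnected) : volume (I \ interior I) = 0 := by
  set L := {x ∈ I | ∀ y ∈ I, x ≤ y}
  set U := {x ∈ I | ∀ y ∈ I, y ≤ x}
  have hsub : I \ interior I ⊆ L ∪ U := by
    rintro x ⟨hxI, hxni⟩
    by_contra hxLU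
    rw [mem_union, not_or] at hxLU
    obtain ⟨hL, hU⟩ := hxLU
    simp only [L, U, mem_setOf_eq, mem_sep_iff, not_and, not_forall] at hL hU
    obtain ⟨a, haI, hax⟩ := hL hxI
    obtain ⟨b, hbI, hbx⟩ := hU hxI
    push_neg at hax hbx
    apply hxni
    have : Ioo a b ⊆ I := fun z hz => hI.out haI hbI ⟨hz.1.le, hz.2.le⟩
    exact interior_mono this (by rw [interior_Ioo]; exact ⟨hax, hbx⟩)
  refine measure_mono_null hsub (measure_union_null ?_ ?_)
  · apply Set.Subsingleton.measure_zero
    intro a ha b hb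
    exact le_antisymm (ha.2 b hb.1) (hb.2 a ha.1)
  · apply Set.Subsingleton.measure_zero
    intro a ha b hb
    exact le_antisymm (hb.2 a ha.1) (ha.2 b hb.1)
set_option maxHeartbeats 1000000 in
/-- Banach–Zarecki (one direction): a continuous function of bounded variation on an
interval that maps null sets to null sets is absolutely continuous. -/
theorem stmt3 (I : Set ℝ) (hI : I.OrdConnected) (hI' : I.Nontrivial)
    (f : ℝ → ℝ) (hcont : ContinuousOn f I) (hbv : BoundedVariationOn f I)
    (hnull : ∀ N : Set ℝ, N ⊆ I → volume N = 0 → volume (f '' N) = 0) :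
    AbsCont I f := by
  classical
  obtain ⟨c, hcI⟩ := hI'.nonempty
  have hIm : MeasurableSet I := hI.measurableSet
  set Vt : ℝ := (eVariationOn f I).toReal with hVt
  set g : ℝ → ℝ := variationOnFromTo f I c with hgdef
  have hgmono : Monotone g := bz_vMono hbv c
  set h : ℝ → ℝ := fun x => g x + x with hhdef
  have hhsmono : StrictMono h := fun p q hpq => add_lt_add_of_le_of_lt (hgmono hpq.le) hpq
  have hhmono : Monotone h := hhsmono.monotone
  have hkey : ∀ u v, u ∈ I → v ∈ I → u ≤ v → |f v - f u| + (v - u) ≤ h v - h u := by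
    intro u v hu hv huv
    have h1 := bz_key hbv hcI hu hv huv
    simp only [hhdef, hgdef]
    linarith
  set F : ℝ → ℝ := deriv f with hF
  set H : ℝ → ℝ := deriv h with hH
  -- the good set
  have hae : ∀ᵐ x, ((x ∈ I → (x ∈ interior I ∧ DifferentiableWithinAt ℝ f I x))
      ∧ DifferentiableAt ℝ h x) := by
    have h1 := hbv.locallyBoundedVariationOn.ae_differentiableWithinAt_of_mem
    have h2 := hhmono.ae_differentiableAt
    have h3 : ∀ᵐ x, x ∈ I → x ∈ interior I := by
      rw [ae_iff]
      refine measure_mono_null ?_ (bz_interior hI)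
      intro x hx
      simp only [mem_setOf_eq, Classical.not_imp] at hx
      exact ⟨hx.1, hx.2⟩
    filter_upwards [h1, h2, h3] with x p1 p2 p3
    exact ⟨fun hx => ⟨p3 hx, p1 hx⟩, p2⟩
  obtain ⟨N, hNsup, hNm, hNnull⟩ := exists_measurable_superset_of_null (ae_iff.1 hae)
  set G : Set ℝ := Nᶜ with hGdef
  have hGm : MeasurableSet G := hNm.compl
  have hGood : ∀ x ∈ G, ((x ∈ I → (x ∈ interior I ∧ DifferentiableWithinAt ℝ f I x))
      ∧ DifferentiableAt ℝ h x) := by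
    intro x hx
    by_contra hc
    exact hx (hNsup hc)
  have hDf : ∀ x, x ∈ G → x ∈ I →
      HasDerivAt f (F x) x ∧ HasDerivAt h (H x) x ∧ |F x| + 1 ≤ H x := by
    intro x hxG hxI
    obtain ⟨hint, hdw⟩ := (hGood x hxG).1 hxI
    have hInhds : I ∈ 𝓝 x := mem_nhds_iff.2 ⟨interior I, interior_subset, isOpen_interior, hint⟩
    have hfd : HasDerivAt f (F x) x := (hdw.differentiableAt hInhds).hasDerivAt
    have hhd : HasDerivAt h (H x) x := (hGood x hxG).2.hasDerivAt
    exact ⟨hfd, hhd, bz_slope hint hfd hhd hkey⟩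
  set Φ : ℝ → ℝ≥0∞ := fun x => ENNReal.ofReal |F x| with hΦdef
  have hΦm : Measurable Φ := (measurable_deriv f).abs.ennreal_ofReal
  have hHm : Measurable fun x => ENNReal.ofReal |H x| := (measurable_deriv h).abs.ennreal_ofReal
  -- Step A : per-interval bound
  have stepA : ∀ p q : ℝ, p ≤ q → Icc p q ⊆ I →
      ENNReal.ofReal |f q - f p| ≤ ∫⁻ x in Icc p q, Φ x := by
    intro p q hpq hsub
    have h1 : uIcc (f p) (f q) ⊆ f '' Icc p q := by
      have h2 := intermediate_value_uIcc (hcont.mono ((uIcc_of_le hpq).symm ▸ hsub))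
      rwa [uIcc_of_le hpq] at h2
    have h2 : ENNReal.ofReal |f q - f p| = volume (uIcc (f p) (f q)) := by
      rw [uIcc, Real.volume_Icc, max_sub_min_eq_abs', abs_sub_comm]
    have hnull2 : volume (f '' (Icc p q \ G)) = 0 := by
      apply hnull _ ((diff_subset).trans hsub)
      refine measure_mono_null (fun x hx => ?_) hNnull
      simpa [hGdef] using hx.2
    have hsm : MeasurableSet (Icc p q ∩ G) := measurableSet_Icc.inter hGm
    have hderiv : ∀ x ∈ Icc p q ∩ G,
        HasFDerivWithinAt f ((1 : ℝ →L[ℝ] ℝ).smulRight (F x)) (Icc p q ∩ G) x := by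
      intro x hx
      exact ((hDf x hx.2 (hsub hx.1)).1.hasFDerivAt).hasFDerivWithinAt
    have himg : volume (f '' (Icc p q ∩ G)) ≤ ∫⁻ x in Icc p q ∩ G, Φ x := by
      have h3 := addHaar_image_le_lintegral_abs_det_fderiv volume hsm hderiv
      simpa [hΦdef, ContinuousLinearMap.smulRight_one_eq_toSpanSingleton, ContinuousLinearMap.det_toSpanSingleton] using h3
    calc ENNReal.ofReal |f q - f p| ≤ volume (f '' Icc p q) := h2 ▸ measure_mono h1
      _ ≤ volume (f '' (Icc p q ∩ G)) + volume (f '' (Icc p q \ G)) := by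
          refine le_trans (measure_mono ?_) (measure_union_le _ _)
          rw [← image_union]
          exact image_mono (by rw [inter_union_diff])
      _ = volume (f '' (Icc p q ∩ G)) := by rw [hnull2, add_zero]
      _ ≤ ∫⁻ x in Icc p q ∩ G, Φ x := himg
      _ ≤ ∫⁻ x in Icc p q, Φ x := lintegral_mono_set inter_subset_left
  -- Step D : finiteness
  have stepD : ∫⁻ x in I, Φ x ≤ ENNReal.ofReal (2 * Vt) := by
    have hIn : ∀ n : ℕ, ∫⁻ x in I ∩ Icc (-(n : ℝ)) n, Φ x ≤ ENNReal.ofReal (2 * Vt) := by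
      intro n
      set In : Set ℝ := I ∩ Icc (-(n : ℝ)) n with hIndef
      have hInm : MeasurableSet In := hIm.inter measurableSet_Icc
      rcases eq_empty_or_nonempty In with hemp | hne
      · rw [hemp]
        simp
      set s : Set ℝ := In ∩ G with hsdef
      have hsm : MeasurableSet s := hInm.inter hGm
      have hdiff_null : volume (In \ s) = 0 := by
        refine measure_mono_null (fun x hx => ?_) hNnull
        have := hx.2
        simp only [hsdef, mem_inter_iff, not_and] at this
        simpa [hGdef] using this hx.1
      have haeeq : s =ᵐ[volume] In := by
        rw [ae_eq_set]
        constructor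
        · refine measure_mono_null (fun x hx => ?_) (measure_empty (μ := volume))
          exact absurd hx.1.1 hx.2
        · exact hdiff_null
      have hres : ∫⁻ x in In, Φ x = ∫⁻ x in s, Φ x := (setLIntegral_congr haeeq).symm
      have hvols : volume s = volume In := measure_congr haeeq
      have hderiv : ∀ x ∈ s, HasFDerivWithinAt h ((1 : ℝ →L[ℝ] ℝ).smulRight (H x)) s x :=
        fun x hx => ((hDf x hx.2 hx.1.1).2.1.hasFDerivAt).hasFDerivWithinAt
      have heq : ∫⁻ x in s, ENNReal.ofReal |H x| = volume (h '' s) := by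
        have h3 := lintegral_abs_det_fderiv_eq_addHaar_image volume hsm hderiv
          (hhsmono.injective.injOn)
        simpa [ContinuousLinearMap.smulRight_one_eq_toSpanSingleton, ContinuousLinearMap.det_toSpanSingleton] using h3
      have himg : volume (h '' s) ≤ ENNReal.ofReal (2 * Vt) + volume In := by
        obtain ⟨x0, hx0⟩ := hne
        set α := sInf In with hα
        set β := sSup In with hβ
        have hbddb : BddBelow In := ⟨-(n : ℝ), fun x hx => hx.2.1⟩
        have hbdda : BddAbove In := ⟨(n : ℝ), fun x hx => hx.2.2⟩
        have hmem : ∀ x ∈ In, α ≤ x ∧ x ≤ β :=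
          fun x hx => ⟨csInf_le hbddb hx, le_csSup hbdda hx⟩
        have hαβ : α ≤ β := le_trans (hmem x0 hx0).1 (hmem x0 hx0).2
        have h1 : h '' s ⊆ Icc (h α) (h β) := by
          rintro y ⟨x, hx, rfl⟩
          exact ⟨hhmono (hmem x hx.1).1, hhmono (hmem x hx.1).2⟩
        have hIoo : Ioo α β ⊆ In := by
          intro z hz
          obtain ⟨u, huIn, huz⟩ := exists_lt_of_csInf_lt ⟨x0, hx0⟩ hz.1
          obtain ⟨v, hvIn, hzv⟩ := exists_lt_of_lt_csSup ⟨x0, hx0⟩ hz.2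
          exact (hI.inter ordConnected_Icc).out huIn hvIn ⟨huz.le, hzv.le⟩
        have hvolIn : ENNReal.ofReal (β - α) ≤ volume In :=
          Real.volume_Ioo ▸ measure_mono hIoo
        have hgb1 := bz_vBound hbv c α
        have hgb2 := bz_vBound hbv c β
        rw [← hgdef, ← hVt] at hgb1 hgb2
        calc volume (h '' s) ≤ volume (Icc (h α) (h β)) := measure_mono h1
          _ = ENNReal.ofReal (h β - h α) := Real.volume_Icc
          _ ≤ ENNReal.ofReal (2 * Vt + (β - α)) := by
              apply ENNReal.ofReal_le_ofReal
              have hb1 := abs_le.1 hgb1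
              have hb2 := abs_le.1 hgb2
              simp only [hhdef]
              linarith
          _ ≤ ENNReal.ofReal (2 * Vt) + ENNReal.ofReal (β - α) := ENNReal.ofReal_add_le
          _ ≤ _ := add_le_add_right hvolIn _
      have hpt : ∀ x ∈ s, Φ x + 1 ≤ ENNReal.ofReal |H x| := by
        intro x hx
        have h3 := (hDf x hx.2 hx.1.1).2.2
        calc Φ x + 1 = ENNReal.ofReal (|F x| + 1) := by
              rw [ENNReal.ofReal_add (abs_nonneg _) zero_le_one, ENNReal.ofReal_one]
          _ ≤ ENNReal.ofReal |H x| :=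
              ENNReal.ofReal_le_ofReal (le_trans h3 (le_abs_self _))
      have hmain : (∫⁻ x in In, Φ x) + volume In ≤ ENNReal.ofReal (2 * Vt) + volume In := by
        calc (∫⁻ x in In, Φ x) + volume In = (∫⁻ x in s, Φ x) + volume s := by rw [hres, hvols]
          _ = ∫⁻ x in s, (Φ x + 1) := by
              rw [lintegral_add_right _ measurable_const, setLIntegral_one]
          _ ≤ ∫⁻ x in s, ENNReal.ofReal |H x| := setLIntegral_mono hHm hpt
          _ = volume (h '' s) := heq
          _ ≤ _ := himg
      have hfinIn : volume In ≠ ⊤ :=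
        ((measure_mono inter_subset_right).trans_lt measure_Icc_lt_top).ne
      exact ENNReal.le_of_add_le_add_right hfinIn hmain
    have hsup : ∀ x, (I.indicator Φ) x = ⨆ n : ℕ, ((I ∩ Icc (-(n : ℝ)) n).indicator Φ) x := by
      intro x
      rcases em (x ∈ I) with hxI | hxI
      · obtain ⟨n, hn⟩ := exists_nat_ge |x|
        have habs := abs_le.1 hn
        apply le_antisymm
        · rw [indicator_of_mem hxI]
          refine le_trans ?_ (le_iSup _ n)
          have hxmem : x ∈ I ∩ Icc (-(n : ℝ)) (n : ℝ) := ⟨hxI, habs.1, habs.2⟩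
          rw [indicator_of_mem hxmem]
        · refine iSup_le fun m => ?_
          refine le_trans (indicator_le_indicator_of_subset inter_subset_left
            (fun y => zero_le) x) le_rfl
      · rw [indicator_of_notMem hxI]
        symm
        rw [← le_zero_iff]
        refine iSup_le fun m => ?_
        rw [indicator_of_notMem (fun hc => hxI hc.1)]
    have hmono_seq : Monotone fun n : ℕ => (I ∩ Icc (-(n : ℝ)) n).indicator Φ := by
      intro m k hmk
      apply indicator_le_indicator_of_subset
      · exact inter_subset_inter_right _ (Icc_subset_Icc (neg_le_neg (by exact_mod_cast hmk)) (by exact_mod_cast hmk))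
      · exact fun y => zero_le
    calc ∫⁻ x in I, Φ x = ∫⁻ x, I.indicator Φ x := (lintegral_indicator hIm Φ).symm
      _ = ∫⁻ x, ⨆ n : ℕ, ((I ∩ Icc (-(n : ℝ)) n).indicator Φ) x := by
          congr 1
          funext x
          exact hsup x
      _ = ⨆ n : ℕ, ∫⁻ x, ((I ∩ Icc (-(n : ℝ)) n).indicator Φ) x :=
          lintegral_iSup (fun k => hΦm.indicator (hIm.inter measurableSet_Icc)) hmono_seq
      _ ≤ ENNReal.ofReal (2 * Vt) := by
          refine iSup_le fun k => ?_
          rw [lintegral_indicator (hIm.inter measurableSet_Icc) Φ]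
          exact hIn k
  have stepD' : ∫⁻ x, Φ x ∂(volume.restrict I) ≠ ⊤ :=
    (lt_of_le_of_lt stepD ENNReal.ofReal_lt_top).ne
  -- conclusion
  intro ε hε
  obtain ⟨δ', hδ'pos, hδ'⟩ := exists_pos_setLIntegral_lt_of_measure_lt (μ := volume.restrict I)
    stepD' (ε := ENNReal.ofReal ε) (ENNReal.ofReal_pos.2 hε).ne'
  have hmin_pos : 0 < min δ' 1 := lt_min hδ'pos zero_lt_one
  have hmin_ne_top : min δ' 1 ≠ ⊤ := ne_top_of_le_ne_top one_ne_top (min_le_right _ _)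
  refine ⟨(min δ' 1).toReal, ENNReal.toReal_pos hmin_pos.ne' hmin_ne_top, ?_⟩
  intro n a b hab hdisj hsum
  set S : Set ℝ := ⋃ i, Ioo (a i) (b i) with hSdef
  have hS_sub : S ⊆ I := iUnion_subset fun i => Ioo_subset_Icc_self.trans (hab i).2
  have hSm : MeasurableSet S := MeasurableSet.iUnion fun i => measurableSet_Ioo
  have hvolS : (volume.restrict I) S < δ' := by
    have h1 : (volume.restrict I) S ≤ volume S := Measure.restrict_le_self S
    have h2 : volume S ≤ ∑ i, volume (Ioo (a i) (b i)) := measure_iUnion_fintype_le _ _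
    have h3 : ∑ i, volume (Ioo (a i) (b i)) = ENNReal.ofReal (∑ i, (b i - a i)) := by
      rw [ENNReal.ofReal_sum_of_nonneg fun i _ => sub_nonneg.2 (hab i).1]
      exact Finset.sum_congr rfl fun i _ => Real.volume_Ioo
    have h4 : ENNReal.ofReal (∑ i, (b i - a i)) < min δ' 1 := by
      rw [← ENNReal.ofReal_toReal hmin_ne_top]
      exact (ENNReal.ofReal_lt_ofReal_iff (ENNReal.toReal_pos hmin_pos.ne' hmin_ne_top)).2 hsum
    calc (volume.restrict I) S ≤ volume S := h1
      _ ≤ _ := h2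
      _ = _ := h3
      _ < min δ' 1 := h4
      _ ≤ δ' := min_le_left _ _
  have hfin : ∫⁻ x in S, Φ x ∂volume < ENNReal.ofReal ε := by
    have := hδ' S hvolS
    rwa [Measure.restrict_restrict hSm, inter_eq_left.2 hS_sub] at this
  have hchain : ∑ i, ENNReal.ofReal |f (b i) - f (a i)| < ENNReal.ofReal ε := by
    calc ∑ i, ENNReal.ofReal |f (b i) - f (a i)|
        ≤ ∑ i, ∫⁻ x in Icc (a i) (b i), Φ x :=
          Finset.sum_le_sum fun i _ => stepA (a i) (b i) (hab i).1 (hab i).2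
      _ = ∑ i, ∫⁻ x in Ioo (a i) (b i), Φ x :=
          Finset.sum_congr rfl fun i _ => (setLIntegral_congr Ioo_ae_eq_Icc).symm
      _ = ∫⁻ x in S, Φ x := by
          rw [hSdef, lintegral_iUnion (fun i => measurableSet_Ioo) hdisj, tsum_fintype]
      _ < ENNReal.ofReal ε := hfin
  have hsum_eq : ENNReal.ofReal (∑ i, |f (b i) - f (a i)|)
      = ∑ i, ENNReal.ofReal |f (b i) - f (a i)| :=
    ENNReal.ofReal_sum_of_nonneg fun i _ => abs_nonneg _
  exact (ENNReal.ofReal_lt_ofReal_iff hε).1 (hsum_eq ▸ hchain)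
end

section
/- Let f : ℝ^d → [0,∞] be locally integrable. If f is upper semicontinuous at a point w and f(w) ≤ Mf(w), then the uncentered maximal function Mf is continuous at w. -/
open MeasureTheory Set Filter ENNReal Topology

/-- Uncentered maximal function of `f : ℝ^d → [0,∞]` over balls. -/
noncomputable def mfE (d : ℕ) (f : EuclideanSpace ℝ (Fin d) → ℝ≥0∞)
    (x : EuclideanSpace ℝ (Fin d)) : ℝ≥0∞ :=
  ⨆ (c : EuclideanSpace ℝ (Fin d)) (r : ℝ) (_ : 0 < r) (_ : x ∈ Metric.ball c r),
    (∫⁻ y in Metric.ball c r, f y) / volume (Metric.ball c r)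

lemma le_mfE (d : ℕ) (f : EuclideanSpace ℝ (Fin d) → ℝ≥0∞) {x c : EuclideanSpace ℝ (Fin d)}
    {r : ℝ} (hr : 0 < r) (hx : x ∈ Metric.ball c r) :
    (∫⁻ y in Metric.ball c r, f y) / volume (Metric.ball c r) ≤ mfE d f x :=
  le_iSup_of_le c (le_iSup_of_le r (le_iSup_of_le hr (le_iSup_of_le hx le_rfl)))

lemma volume_ball_ratio (d : ℕ) (c : EuclideanSpace ℝ (Fin d)) {r s : ℝ}
    (hr : 0 < r) (hs : 0 < s) :
    volume (Metric.ball c s) / volume (Metric.ball c r) = ENNReal.ofReal ((s / r) ^ d) := by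
  rw [Measure.addHaar_ball_of_pos _ c hs, Measure.addHaar_ball_of_pos _ c hr,
    ENNReal.mul_div_mul_right _ _ (Metric.measure_ball_pos _ _ one_pos).ne' measure_ball_lt_top.ne,
    finrank_euclideanSpace_fin, div_pow,
    ENNReal.ofReal_div_of_pos (pow_pos hr d)]

/-- If a locally integrable `f : ℝ^d → [0,∞]` is upper semicontinuous at `w` and
`f w ≤ Mf w`, then `Mf` is continuous at `w`. -/
theorem stmt5 (d : ℕ) (f : EuclideanSpace ℝ (Fin d) → ℝ≥0∞)
    (hloc : ∀ x : EuclideanSpace ℝ (Fin d), ∃ r > (0:ℝ), ∫⁻ y in Metric.ball x r, f y < ⊤)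
    (w : EuclideanSpace ℝ (Fin d))
    (husc : UpperSemicontinuousAt f w) (hfw : f w ≤ mfE d f w) :
    ContinuousAt (mfE d f) w := by
  rw [continuousAt_iff_lower_upperSemicontinuousAt]
  constructor
  · -- Lower semicontinuity (holds everywhere).
    intro y hy
    unfold mfE at hy
    simp only [lt_iSup_iff] at hy
    obtain ⟨c, r, hr, hw, hy⟩ := hy
    filter_upwards [Metric.isOpen_ball.mem_nhds hw] with x hx
    exact hy.trans_le (le_mfE d f hr hx)
  · -- Upper semicontinuity at w.
    intro a ha
    set M := mfE d f w with hM
    have hMtop : M ≠ ⊤ := ha.ne_top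
    obtain ⟨ε0, hε0, hεlt⟩ := ENNReal.lt_iff_exists_add_pos_lt.1 ha
    have hε0' : (ε0 : ℝ≥0∞) ≠ 0 := by exact_mod_cast hε0.ne'
    have hfwtop : f w ≠ ⊤ := (hfw.trans_lt hMtop.lt_top).ne
    -- upper semicontinuity of f at w
    have husc' : ∀ᶠ y in 𝓝 w, f y < f w + ε0 :=
      husc _ (ENNReal.lt_add_right hfwtop hε0')
    obtain ⟨ρ, hρ, hball⟩ := Metric.eventually_nhds_iff.1 husc'
    -- choose the multiplicative slack
    set et : ℝ := if hM0 : M = 0 then 1 else ((ε0 : ℝ≥0∞) / M).toReal with h_et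
    have het : 0 < et := by
      rw [h_et]; split_ifs with hM0
      · norm_num
      · exact ENNReal.toReal_pos (by simp [ENNReal.div_eq_zero_iff, hε0', hMtop]) 
          (ENNReal.div_lt_top coe_ne_top hM0).ne
    have hkey : M * ENNReal.ofReal et ≤ (ε0 : ℝ≥0∞) := by
      rw [h_et]; split_ifs with hM0
      · simp [hM0]
      · rw [ENNReal.ofReal_toReal (ENNReal.div_lt_top coe_ne_top hM0).ne,
          ENNReal.mul_div_cancel hM0 hMtop]
    -- choose δ via continuity of s ↦ (1 + s * (4/ρ))^d at 0
    have hgcont : ContinuousAt (fun s : ℝ => (1 + s * (4 / ρ)) ^ d) 0 := by fun_prop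
    have hg0 : (fun s : ℝ => (1 + s * (4 / ρ)) ^ d) 0 = 1 := by simp
    have hgev : ∀ᶠ s in 𝓝 (0 : ℝ), (1 + s * (4 / ρ)) ^ d < 1 + et := by
      refine hgcont.eventually_lt_const ?_
      rw [hg0]; linarith
    obtain ⟨δ0, hδ0, hδ0g⟩ := Metric.eventually_nhds_iff.1 hgev
    set δ : ℝ := min (ρ / 4) (δ0 / 2) with hδdef
    have hδpos : 0 < δ := lt_min (by linarith) (by linarith)
    have hδρ : δ ≤ ρ / 4 := min_le_left _ _
    have hgδ : (1 + δ * (4 / ρ)) ^ d < 1 + et := by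
      apply hδ0g
      rw [Real.dist_eq, sub_zero, abs_of_pos hδpos]
      calc δ ≤ δ0 / 2 := min_le_right _ _
        _ < δ0 := by linarith
    -- now prove the eventual bound
    filter_upwards [Metric.ball_mem_nhds w hδpos] with x hx
    refine lt_of_le_of_lt ?_ hεlt
    refine iSup_le fun c => iSup_le fun r => iSup_le fun hr => iSup_le fun hxc => ?_
    rw [Metric.mem_ball] at hx hxc
    rcases le_or_gt r (ρ / 4) with hrρ | hrρ
    · -- small ball case: use upper semicontinuity
      have hsub : Metric.ball c r ⊆ Metric.ball w ρ := by
        intro y hy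
        rw [Metric.mem_ball] at hy ⊢
        have h1 : dist y x ≤ dist y c + dist c x := dist_triangle _ _ _
        have h2 : dist y w ≤ dist y x + dist x w := dist_triangle _ _ _
        have h3 : dist c x < r := by rw [dist_comm]; exact hxc
        linarith
      have hint : ∫⁻ y in Metric.ball c r, f y ≤ (f w + ε0) * volume (Metric.ball c r) := by
        rw [← setLIntegral_const]
        exact setLIntegral_mono' measurableSet_ball fun y hy => (hball (hsub hy)).le
      calc (∫⁻ y in Metric.ball c r, f y) / volume (Metric.ball c r) ≤ f w + ε0 :=
            ENNReal.div_le_of_le_mul hint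
        _ ≤ M + ε0 := add_le_add_left hfw _
    · -- big ball case: enlarge the ball to contain w
      have hrδ : 0 < r + δ := by linarith
      have hw' : w ∈ Metric.ball c (r + δ) := by
        rw [Metric.mem_ball]
        have h1 : dist w c ≤ dist w x + dist x c := dist_triangle _ _ _
        have h2 : dist w x < δ := by rw [dist_comm]; exact hx
        linarith
      have hvol' : volume (Metric.ball c (r + δ)) ≠ ⊤ := measure_ball_lt_top.ne
      have hvol'0 : volume (Metric.ball c (r + δ)) ≠ 0 := (Metric.measure_ball_pos _ _ hrδ).ne'
      have hI' : ∫⁻ y in Metric.ball c (r + δ), f y ≤ M * volume (Metric.ball c (r + δ)) :=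
        (ENNReal.div_le_iff_le_mul (Or.inl hvol'0) (Or.inl hvol')).1 (le_mfE d f hrδ hw')
      have hmono : ∫⁻ y in Metric.ball c r, f y ≤ ∫⁻ y in Metric.ball c (r + δ), f y :=
        lintegral_mono_set (Metric.ball_subset_ball (by linarith))
      have hratio : volume (Metric.ball c (r + δ)) / volume (Metric.ball c r)
          = ENNReal.ofReal (((r + δ) / r) ^ d) := volume_ball_ratio d c hr hrδ
      have hpow : ((r + δ) / r) ^ d ≤ (1 + δ * (4 / ρ)) ^ d := by
        apply pow_le_pow_left₀ (by positivity)
        have hstep : δ ≤ δ * (4 / ρ) * r := by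
          have h1 : δ * ρ ≤ δ * (4 * r) := by nlinarith
          calc δ = δ * ρ / ρ := by field_simp
            _ ≤ δ * (4 * r) / ρ := by gcongr
            _ = δ * (4 / ρ) * r := by ring
        rw [div_le_iff₀ hr]
        have hexp : (1 + δ * (4 / ρ)) * r = r + δ * (4 / ρ) * r := by ring
        rw [hexp]
        linarith
      calc (∫⁻ y in Metric.ball c r, f y) / volume (Metric.ball c r)
          ≤ M * volume (Metric.ball c (r + δ)) / volume (Metric.ball c r) :=
            ENNReal.div_le_div_right (hmono.trans hI') _
        _ = M * (volume (Metric.ball c (r + δ)) / volume (Metric.ball c r)) :=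
            mul_div_assoc _ _ _
        _ = M * ENNReal.ofReal (((r + δ) / r) ^ d) := by rw [hratio]
        _ ≤ M * ENNReal.ofReal (1 + et) := by
            gcongr
            exact hpow.trans hgδ.le
        _ = M + M * ENNReal.ofReal et := by
            rw [ENNReal.ofReal_add zero_le_one het.le, mul_add, ENNReal.ofReal_one, mul_one]
        _ ≤ M + ε0 := add_le_add_right hkey _
end

section
/- Let f : I → [0,∞) be upper semicontinuous with f ≤ Mf pointwise. If [a,b] ⊆ I and max{Mf(x) : x ∈ [a,b]} > max{Mf(a), Mf(b)}, then at any point c ∈ [a,b] where Mf attains its maximum over [a,b], one has Mf(c) = f(c). -/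
open MeasureTheory Set Filter ENNReal

lemma stmt6_open {I : Set ℝ} {f : ℝ → ℝ} (husc : UpperSemicontinuousOn f I) (t : ℝ) :
    ∃ U : Set ℝ, IsOpen U ∧ {y | y ∈ I ∧ f y < t} = U ∩ I := by
  have h : ∀ x : {y : ℝ // y ∈ I ∧ f y < t},
      ∃ u : Set ℝ, IsOpen u ∧ (x : ℝ) ∈ u ∧ u ∩ I ⊆ {y | f y < t} := by
    rintro ⟨x, hxI, hxt⟩
    have h1 := husc x hxI t hxt
    rw [eventually_iff, mem_nhdsWithin] at h1
    exact h1
  choose u ho hm hs using h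
  refine ⟨⋃ x, u x, isOpen_iUnion ho, ?_⟩
  ext y
  constructor
  · rintro ⟨hyI, hyt⟩
    exact ⟨mem_iUnion.2 ⟨⟨y, hyI, hyt⟩, hm _⟩, hyI⟩
  · rintro ⟨hyU, hyI⟩
    obtain ⟨x, hx⟩ := mem_iUnion.1 hyU
    exact ⟨hyI, hs x ⟨hx, hyI⟩⟩

lemma stmt6_meas {I : Set ℝ} (hI : I.OrdConnected) {f : ℝ → ℝ}
    (hf0 : ∀ x ∈ I, 0 ≤ f x) (husc : UpperSemicontinuousOn f I) :
    Measurable (I.indicator f) := by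
  apply measurable_of_Iio
  intro t
  obtain ⟨U, hUo, hUt⟩ := stmt6_open husc t
  by_cases ht : 0 < t
  · have h2 : I.indicator f ⁻¹' Iio t = (U ∩ I) ∪ Iᶜ := by
      ext y
      have h3 : y ∈ U ∩ I ↔ y ∈ I ∧ f y < t := by rw [← hUt]; exact Iff.rfl
      simp only [mem_inter_iff] at h3
      simp only [mem_preimage, mem_Iio, mem_union, mem_compl_iff, mem_inter_iff]
      by_cases h : y ∈ I
      · rw [indicator_of_mem h]
        constructor
        · intro hft; exact Or.inl (h3.2 ⟨h, hft⟩)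
        · rintro (hy | hy)
          · exact (h3.1 hy).2
          · exact absurd h hy
      · rw [indicator_of_notMem h]
        simp [h, ht]
    rw [h2]
    exact (hUo.measurableSet.inter hI.measurableSet).union hI.measurableSet.compl
  · have h2 : I.indicator f ⁻¹' Iio t = U ∩ I := by
      ext y
      have h3 : y ∈ U ∩ I ↔ y ∈ I ∧ f y < t := by rw [← hUt]; exact Iff.rfl
      simp only [mem_preimage, mem_Iio]
      by_cases h : y ∈ I
      · rw [indicator_of_mem h, h3]
        exact ⟨fun hy => ⟨h, hy⟩, fun hy => hy.2⟩
      · rw [indicator_of_notMem h]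
        constructor
        · intro h0; exact absurd h0 ht
        · intro hy; exact absurd (h3.1 hy).1 h
    rw [h2]
    exact hUo.measurableSet.inter hI.measurableSet

lemma stmt6_bdd {I : Set ℝ} {f : ℝ → ℝ} (husc : UpperSemicontinuousOn f I)
    {u v : ℝ} (huv : u ≤ v) (hK : Icc u v ⊆ I) :
    ∃ C : ℝ, ∀ y ∈ Icc u v, f y ≤ C := by
  have h : ∀ x ∈ Icc u v, ∃ w : Set ℝ, IsOpen w ∧ x ∈ w ∧ w ∩ I ⊆ {y | f y < f x + 1} := by
    intro x hx
    have h1 := husc x (hK hx) (f x + 1) (by linarith)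
    rw [eventually_iff, mem_nhdsWithin] at h1
    exact h1
  choose! w ho hm hs using h
  obtain ⟨s, hs1, hs2⟩ := isCompact_Icc.elim_nhds_subcover w
    (fun x hx => (ho x hx).mem_nhds (hm x hx))
  have hu : u ∈ Icc u v := ⟨le_rfl, huv⟩
  obtain ⟨x0, hx0s, -⟩ := mem_iUnion₂.1 (hs2 hu)
  have hsne : s.Nonempty := ⟨x0, hx0s⟩
  refine ⟨s.sup' hsne fun x => f x + 1, fun y hy => ?_⟩
  obtain ⟨x, hxs, hyw⟩ := mem_iUnion₂.1 (hs2 hy)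
  have h4 : f y < f x + 1 := hs x (hs1 x hxs) ⟨hyw, hK hy⟩
  exact le_trans h4.le (Finset.le_sup' (fun x => f x + 1) hxs)

lemma stmt6_int {I : Set ℝ} (hI : I.OrdConnected) {f : ℝ → ℝ}
    (hf0 : ∀ x ∈ I, 0 ≤ f x) (husc : UpperSemicontinuousOn f I)
    {u v : ℝ} (huv : u ≤ v) (hK : Icc u v ⊆ I) :
    IntegrableOn (fun y => |f y|) (Icc u v) := by
  obtain ⟨C, hC⟩ := stmt6_bdd husc huv hK
  have hmeas : Measurable (I.indicator f) := stmt6_meas hI hf0 husc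
  have haem : AEStronglyMeasurable (fun y => |f y|) (volume.restrict (Icc u v)) := by
    refine (hmeas.abs.aestronglyMeasurable).congr ?_
    filter_upwards [ae_restrict_mem measurableSet_Icc] with y hy
    simp [indicator_of_mem (hK hy)]
  haveI : IsFiniteMeasure (volume.restrict (Icc u v)) :=
    ⟨by rw [Measure.restrict_apply_univ]; exact isCompact_Icc.measure_lt_top⟩
  refine ⟨haem, HasFiniteIntegral.of_bounded (C := max C 0) ?_⟩
  filter_upwards [ae_restrict_mem measurableSet_Icc] with y hy
  have h1 := hC y hy
  have h2 := hf0 y (hK hy)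
  rw [Real.norm_eq_abs, abs_abs, abs_of_nonneg h2]
  exact le_trans h1 (le_max_left _ _)

def stmt6S (I : Set ℝ) (f : ℝ → ℝ) (x : ℝ) : Set ℝ :=
  {r : ℝ | ∃ u v : ℝ, u < v ∧ Set.Icc u v ⊆ I ∧ x ∈ Set.Icc u v ∧
    r = (∫ y in Set.Icc u v, |f y|) / (v - u)}

lemma stmt6S_mem {I : Set ℝ} {f : ℝ → ℝ} {x r : ℝ} :
    r ∈ stmt6S I f x ↔ ∃ u v : ℝ, u < v ∧ Set.Icc u v ⊆ I ∧ x ∈ Set.Icc u v ∧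
      r = (∫ y in Set.Icc u v, |f y|) / (v - u) := Iff.rfl

lemma stmt6_mf (I : Set ℝ) (f : ℝ → ℝ) (x : ℝ) : mf I f x = sSup (stmt6S I f x) := rfl


set_option maxHeartbeats 1600000 in
/-- If `f : I → [0,∞)` is upper semicontinuous with `f ≤ Mf`, `[a,b] ⊆ I`, and the
maximum of `Mf` on `[a,b]` exceeds `max {Mf a, Mf b}`, then at any maximum point
`c ∈ [a,b]` of `Mf` on `[a,b]` one has `Mf c = f c`. -/
theorem stmt6 (I : Set ℝ) (hI : I.OrdConnected) (hI' : I.Nontrivial)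
    (f : ℝ → ℝ) (hf0 : ∀ x ∈ I, 0 ≤ f x)
    (husc : UpperSemicontinuousOn f I)
    (hle : ∀ x ∈ I, f x ≤ mf I f x)
    (a b : ℝ) (hab : a < b) (hIab : Set.Icc a b ⊆ I)
    (hbig : ∃ x ∈ Set.Icc a b, max (mf I f a) (mf I f b) < mf I f x)
    (c : ℝ) (hc : c ∈ Set.Icc a b) (hmax : IsMaxOn (mf I f) (Set.Icc a b) c) :
    mf I f c = f c := by
  classical
  set S : ℝ → Set ℝ := stmt6S I f with hSdef
  have hmf : ∀ x, mf I f x = sSup (S x) := fun x => rfl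
  have haI : a ∈ I := hIab ⟨le_rfl, hab.le⟩
  have hbI : b ∈ I := hIab ⟨hab.le, le_rfl⟩
  have hcI : c ∈ I := hIab hc
  have hint : ∀ {u v : ℝ}, u ≤ v → Icc u v ⊆ I → IntegrableOn (fun y => |f y|) (Icc u v) :=
    fun {u v} h1 h2 => stmt6_int hI hf0 husc h1 h2
  have h0 : ∀ x, ∀ r ∈ S x, 0 ≤ r := by
    rintro x r ⟨u, v, huv, hKI, hxK, rfl⟩
    exact div_nonneg (setIntegral_nonneg measurableSet_Icc fun y _ => abs_nonneg _)
      (by linarith)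
  have hM0 : ∀ x, 0 ≤ mf I f x := fun x => by
    rw [hmf]; exact Real.sSup_nonneg (h0 x)
  have hmem : ∀ x ∈ Icc a b, (∫ y in Icc a b, |f y|) / (b - a) ∈ S x :=
    fun x hx => ⟨a, b, hab, hIab, hx, rfl⟩
  have hSne : ∀ x ∈ Icc a b, (S x).Nonempty := fun x hx => ⟨_, hmem x hx⟩
  obtain ⟨x₀, hx₀, hx₀big⟩ := hbig
  have hbig' : max (mf I f a) (mf I f b) < mf I f c := lt_of_lt_of_le hx₀big (hmax hx₀)
  have hbddc : BddAbove (S c) := by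
    by_contra hcon
    have h1 : mf I f c = 0 := by rw [hmf]; exact Real.sSup_of_not_bddAbove hcon
    have h2 : 0 ≤ mf I f a := hM0 a
    have h3 := lt_of_le_of_lt (le_max_left (mf I f a) (mf I f b)) hbig'
    rw [h1] at h3; linarith
  have hMc : 0 < mf I f c :=
    lt_of_le_of_lt (le_trans (hM0 a) (le_max_left _ _)) hbig'
  have hUSC : ∀ x ∈ I, ∀ t, f x < t → ∃ δ > 0, ∀ z ∈ I, |z - x| < δ → f z < t := by
    intro x hxI t hxt
    have h1 := husc x hxI t hxt
    rw [eventually_iff, mem_nhdsWithin] at h1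
    obtain ⟨U, hUo, hxU, hUsub⟩ := h1
    obtain ⟨ε, hε, hball⟩ := Metric.isOpen_iff.1 hUo x hxU
    exact ⟨ε, hε, fun z hzI hdist =>
      hUsub ⟨hball (show z ∈ Metric.ball x ε by simpa [Real.dist_eq] using hdist), hzI⟩⟩
  -- boundedness of the defining sets at points of [a,b]
  have hbdd : ∀ x ∈ Icc a b, BddAbove (S x) := by
    intro x hx
    have hxI := hIab hx
    obtain ⟨δ, hδ, hδf⟩ := hUSC x hxI (f x + 1) (by linarith)
    refine ⟨max (f x + 1) (mf I f c * (1 + (b - a) / (δ / 2))), ?_⟩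
    rintro r ⟨u, v, huv, hKI, hxK, rfl⟩
    have hvu : (0:ℝ) < v - u := by linarith
    by_cases hlen : v - u ≤ δ / 2
    · -- short interval: average bounded by f x + 1
      refine le_trans ?_ (le_max_left _ _)
      rw [div_le_iff₀ hvu]
      have hconst : IntegrableOn (fun _ : ℝ => f x + 1) (Icc u v) := by
        apply (integrableOn_const_iff (C := f x + 1) (by simp)).2; right
        rw [Real.volume_Icc]; exact ofReal_lt_top
      have hmono := setIntegral_mono_on (hint huv.le hKI) hconst measurableSet_Icc ?_
      · rw [setIntegral_const, Real.volume_real_Icc_of_le huv.le, smul_eq_mul] at hmono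
        linarith
      · intro y hy
        have hyI := hKI hy
        rw [abs_of_nonneg (hf0 y hyI)]
        refine (hδf y hyI ?_).le
        have h5 : |y - x| ≤ v - u := by
          rw [abs_le]
          constructor
          · linarith [hy.1, hxK.2]
          · linarith [hy.2, hxK.1]
        linarith
    · -- long interval: enlarge to an interval containing c
      push_neg at hlen
      have hu'I : min u a ∈ I := by
        rcases min_choice u a with h | h <;> rw [h]
        · exact hKI ⟨le_rfl, huv.le⟩
        · exact haI
      have hv'I : max v b ∈ I := by
        rcases max_choice v b with h | h <;> rw [h]
        · exact hKI ⟨huv.le, le_rfl⟩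
        · exact hbI
      have hsubI : Icc (min u a) (max v b) ⊆ I := hI.out hu'I hv'I
      have hcin : c ∈ Icc (min u a) (max v b) :=
        ⟨le_trans (min_le_right u a) hc.1, le_trans hc.2 (le_max_right v b)⟩
      have hu'v' : min u a < max v b :=
        lt_of_le_of_lt (min_le_right u a) (lt_of_lt_of_le hab (le_max_right v b))
      have hv'u' : (0:ℝ) < max v b - min u a := by linarith
      have h1 : (∫ y in Icc (min u a) (max v b), |f y|) / (max v b - min u a) ≤ mf I f c := by
        rw [hmf]
        exact le_csSup hbddc ⟨min u a, max v b, hu'v', hsubI, hcin, rfl⟩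
      have hintmono : ∫ y in Icc u v, |f y| ≤ ∫ y in Icc (min u a) (max v b), |f y| := by
        apply setIntegral_mono_set (hint hu'v'.le hsubI)
          (Filter.Eventually.of_forall fun y => abs_nonneg _)
        exact (Icc_subset_Icc (min_le_left u a) (le_max_left v b)).eventuallyLE
      have hlen' : max v b - min u a ≤ (v - u) + (b - a) := by
        have h2 : a ≤ x := hx.1
        have h3 : x ≤ b := hx.2
        have h4 : u ≤ x := hxK.1
        have h5 : x ≤ v := hxK.2
        rcases le_total u a with h6 | h6 <;> rcases le_total v b with h7 | h7
        · rw [min_eq_left h6, max_eq_right h7]; linarith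
        · rw [min_eq_left h6, max_eq_left h7]; linarith
        · rw [min_eq_right h6, max_eq_right h7]; linarith
        · rw [min_eq_right h6, max_eq_left h7]; linarith
      have h6 : ∫ y in Icc u v, |f y| ≤ mf I f c * ((v - u) + (b - a)) := by
        rw [div_le_iff₀ hv'u'] at h1
        have h8 : mf I f c * (max v b - min u a) ≤ mf I f c * ((v - u) + (b - a)) :=
          mul_le_mul_of_nonneg_left hlen' hMc.le
        linarith
      refine le_trans ?_ (le_max_right _ _)
      rw [div_le_iff₀ hvu]
      have h11 : b - a ≤ (b - a) / (δ / 2) * (v - u) := by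
        rw [div_mul_eq_mul_div, le_div_iff₀ (by linarith : (0:ℝ) < δ / 2)]
        have hba : (0:ℝ) ≤ b - a := by linarith
        nlinarith
      have h12 := mul_le_mul_of_nonneg_left h11 hMc.le
      nlinarith [h6, h12]
  -- main argument
  refine le_antisymm ?_ (hle c hcI)
  by_contra hcon
  push_neg at hcon
  have hfc0 : 0 ≤ f c := hf0 c hcI
  set T := (f c + mf I f c) / 2 with hT
  have hT1 : f c < T := by rw [hT]; linarith
  have hT2 : T < mf I f c := by rw [hT]; linarith
  obtain ⟨δ', hδ', hδf⟩ := hUSC c hcI T hT1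
  have hδpos : (0:ℝ) < δ' / 2 := by linarith
  set δ := δ' / 2 with hδdef
  set γ := (mf I f c - T) * min 1 (δ / (b - a)) with hγdef
  have hγ : 0 < γ := by
    exact _root_.mul_pos (by linarith)
      (lt_min one_pos (div_pos hδpos (by linarith)))
  have key : ∀ r ∈ S c, r ≤ max (max (mf I f a) (mf I f b)) (mf I f c - γ) := by
    rintro r ⟨u, v, huv, hKI, hcK, rfl⟩
    have hvu : (0:ℝ) < v - u := by linarith
    by_cases hua : u < a
    · refine le_trans (le_trans ?_ (le_max_left (mf I f a) (mf I f b))) (le_max_left _ _)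
      rw [hmf]
      exact le_csSup (hbdd a ⟨le_rfl, hab.le⟩)
        ⟨u, v, huv, hKI, ⟨hua.le, le_trans hc.1 hcK.2⟩, rfl⟩
    by_cases hvb : b < v
    · refine le_trans (le_trans ?_ (le_max_right (mf I f a) (mf I f b))) (le_max_left _ _)
      rw [hmf]
      exact le_csSup (hbdd b ⟨hab.le, le_rfl⟩)
        ⟨u, v, huv, hKI, ⟨le_trans hcK.1 hc.2, hvb.le⟩, rfl⟩
    push_neg at hua hvb
    refine le_trans ?_ (le_max_right _ _)
    set p := max u (c - δ) with hp
    set q := min v (c + δ) with hq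
    have hup : u ≤ p := le_max_left _ _
    have hpc : p ≤ c := max_le hcK.1 (by linarith)
    have hcq : c ≤ q := le_min hcK.2 (by linarith)
    have hqv : q ≤ v := min_le_left _ _
    have hpv : p ≤ v := hpc.trans hcK.2
    have hpq : p ≤ q := hpc.trans hcq
    have hKab : Icc u v ⊆ Icc a b := Icc_subset_Icc hua hvb
    have hii : ∀ {s t : ℝ}, u ≤ s → s ≤ t → t ≤ v →
        IntervalIntegrable (fun y => |f y|) volume s t := by
      intro s t h1 h2 h3
      rw [intervalIntegrable_iff_integrableOn_Icc_of_le h2]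
      exact (hint huv.le hKI).mono_set (Icc_subset_Icc h1 h3)
    have e1 := intervalIntegral.integral_add_adjacent_intervals
      (hii le_rfl hup hpv) (hii hup hpv le_rfl)
    have e2 := intervalIntegral.integral_add_adjacent_intervals
      (hii hup hpq hqv) (hii (hup.trans hpq) hqv le_rfl)
    have hsplit : ∫ y in Icc u v, |f y| =
        (∫ y in u..p, |f y|) + (∫ y in p..q, |f y|) + (∫ y in q..v, |f y|) := by
      rw [integral_Icc_eq_integral_Ioc, ← intervalIntegral.integral_of_le huv.le,
        ← e1, ← e2]
      ring
    have hMcb : ∀ y ∈ Icc u v, |f y| ≤ mf I f c := by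
      intro y hy
      have hyI := hKI hy
      rw [abs_of_nonneg (hf0 y hyI)]
      exact le_trans (hle y hyI) (hmax (hKab hy))
    have hb1 : ∫ y in u..p, |f y| ≤ mf I f c * (p - u) := by
      have hm := intervalIntegral.integral_mono_on hup (hii le_rfl hup hpv)
        intervalIntegrable_const
        (fun y hy => hMcb y (Icc_subset_Icc le_rfl hpv hy))
      rwa [intervalIntegral.integral_const, smul_eq_mul, mul_comm] at hm
    have hb3 : ∫ y in q..v, |f y| ≤ mf I f c * (v - q) := by
      have hm := intervalIntegral.integral_mono_on hqv (hii (hup.trans hpq) hqv le_rfl)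
        intervalIntegrable_const
        (fun y hy => hMcb y (Icc_subset_Icc (hup.trans hpq) le_rfl hy))
      rwa [intervalIntegral.integral_const, smul_eq_mul, mul_comm] at hm
    have hb2 : ∫ y in p..q, |f y| ≤ T * (q - p) := by
      have hpt : ∀ y ∈ Icc p q, |f y| ≤ (fun _ : ℝ => T) y := by
        intro y hy
        have hyuv : y ∈ Icc u v := Icc_subset_Icc hup hqv hy
        have hyI := hKI hyuv
        rw [abs_of_nonneg (hf0 y hyI)]
        refine (hδf y hyI ?_).le
        have hy1 : c - δ ≤ y := le_trans (le_max_right u (c - δ)) hy.1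
        have hy2 : y ≤ c + δ := le_trans hy.2 (min_le_right v (c + δ))
        have hdd : δ = δ' / 2 := hδdef
        rw [abs_lt]
        constructor <;> rw [hdd] at hy1 hy2 <;> linarith
      have hm := intervalIntegral.integral_mono_on hpq (hii hup hpq hqv)
        intervalIntegrable_const hpt
      rwa [intervalIntegral.integral_const, smul_eq_mul, mul_comm] at hm
    have hqp : min (v - u) δ ≤ q - p := by
      rcases le_total (c - δ) u with h1 | h1 <;> rcases le_total v (c + δ) with h2 | h2
      · rw [hp, hq, max_eq_left h1, min_eq_left h2]
        exact min_le_left _ _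
      · rw [hp, hq, max_eq_left h1, min_eq_right h2]
        exact le_trans (min_le_right _ _) (by linarith [hcK.1])
      · rw [hp, hq, max_eq_right h1, min_eq_left h2]
        exact le_trans (min_le_right _ _) (by linarith [hcK.2])
      · rw [hp, hq, max_eq_right h1, min_eq_right h2]
        exact le_trans (min_le_right _ _) (by linarith)
    have hsum : ∫ y in Icc u v, |f y| ≤
        mf I f c * (v - u) - (mf I f c - T) * (q - p) := by
      rw [hsplit]; nlinarith [hb1, hb2, hb3]
    have hfrac : min 1 (δ / (b - a)) * (v - u) ≤ q - p := by
      rcases le_total (v - u) δ with h1 | h1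
      · rw [min_eq_left h1] at hqp
        nlinarith [min_le_left 1 (δ / (b - a)), hvu.le, hqp,
          lt_min one_pos (div_pos hδpos (by linarith : (0:ℝ) < b - a))]
      · rw [min_eq_right h1] at hqp
        have hvub : v - u ≤ b - a := by
          have := hua; have := hvb; linarith
        have h2 : min 1 (δ / (b - a)) ≤ δ / (v - u) := by
          refine le_trans (min_le_right _ _) ?_
          gcongr
        have h3 : min 1 (δ / (b - a)) * (v - u) ≤ δ := (le_div_iff₀ hvu).1 h2
        linarith
    rw [div_le_iff₀ hvu]
    have hγb : γ * (v - u) ≤ (mf I f c - T) * (q - p) := by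
      rw [hγdef]
      nlinarith [mul_le_mul_of_nonneg_left hfrac (show (0:ℝ) ≤ mf I f c - T by linarith)]
    nlinarith [hsum]
  have hle2 : mf I f c ≤ max (max (mf I f a) (mf I f b)) (mf I f c - γ) := by
    rw [hmf]; exact csSup_le (hSne c hc) key
  have h9 : max (max (mf I f a) (mf I f b)) (mf I f c - γ) < mf I f c :=
    max_lt hbig' (by linarith)
  linarith
end

section
/- Let f : I → [0,∞) be upper semicontinuous with f ≤ Mf pointwise on I. Then on each connected component (α,β) of the open set {Mf > f}, either Mf is monotone, or there exists c ∈ (α,β) such that Mf is decreasing on (α,c) and increasing on (c,β). -/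
open MeasureTheory Set Filter ENNReal
open Topology

/-- An upper semicontinuous function on a nonempty compact set attains its maximum. -/
lemma usc_exists_max {f : ℝ → ℝ} {s : Set ℝ} (hs : IsCompact s) (hne : s.Nonempty)
    (h : UpperSemicontinuousOn f s) : ∃ y₀ ∈ s, ∀ y ∈ s, f y ≤ f y₀ := by
  by_contra hcon
  push_neg at hcon
  choose! g hg1 hg2 using hcon
  have hU : ∀ w (hw : w ∈ s), {w' | w' ∈ s → f w' < f (g w)} ∈ 𝓝 w := by
    intro w hw
    have h1 := h w hw (f (g w)) (hg2 w hw)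
    rw [eventually_nhdsWithin_iff] at h1
    exact h1
  obtain ⟨t, ht⟩ := hs.elim_nhds_subcover'
    (fun w _ => {w' | w' ∈ s → f w' < f (g w)}) hU
  have htne : t.Nonempty := by
    rcases hne with ⟨w, hw⟩
    rcases mem_iUnion₂.mp (ht hw) with ⟨i, hi, _⟩
    exact ⟨i, hi⟩
  obtain ⟨i, hit, hmax⟩ := t.exists_max_image (fun i => f (g i)) htne
  have hgi : g i ∈ s := hg1 i i.2
  rcases mem_iUnion₂.mp (ht hgi) with ⟨j, hjt, hj⟩
  exact absurd (lt_of_lt_of_le (hj hgi) (hmax j hjt)) (lt_irrefl _)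

/-- On each connected component `(α,β)` of the open set `{Mf > f}`, either `Mf` is
monotone, or there is `c ∈ (α,β)` with `Mf` decreasing on `(α,c)` and increasing
on `(c,β)`. -/
theorem stmt9 (I : Set ℝ) (hI : I.OrdConnected) (hI' : I.Nontrivial)
    (f : ℝ → ℝ) (hf0 : ∀ x ∈ I, 0 ≤ f x)
    (husc : UpperSemicontinuousOn f I)
    (hle : ∀ x ∈ I, f x ≤ mf I f x)
    (α β : ℝ) (hαβ : α < β)
    (hsub : Set.Ioo α β ⊆ {x ∈ I | f x < mf I f x})
    (hαout : α ∉ {x ∈ I | f x < mf I f x})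
    (hβout : β ∉ {x ∈ I | f x < mf I f x}) :
    (MonotoneOn (mf I f) (Set.Ioo α β) ∨ AntitoneOn (mf I f) (Set.Ioo α β)) ∨
    ∃ c ∈ Set.Ioo α β,
      AntitoneOn (mf I f) (Set.Ioo α c) ∧ MonotoneOn (mf I f) (Set.Ioo c β) := by
  set g := mf I f with hg
  set S : ℝ → Set ℝ := fun x => {r : ℝ | ∃ a b : ℝ, a < b ∧ Set.Icc a b ⊆ I ∧
    x ∈ Set.Icc a b ∧ r = (∫ y in Set.Icc a b, |f y|) / (b - a)} with hS
  have hgdef : ∀ x, g x = sSup (S x) := fun x => rfl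
  have hIoo : Set.Ioo α β ⊆ I := fun x hx => (hsub hx).1
  have hltm : ∀ x ∈ Set.Ioo α β, f x < g x := fun x hx => (hsub hx).2
  have hpos : ∀ x ∈ Set.Ioo α β, 0 < g x := fun x hx =>
    lt_of_le_of_lt (hf0 x (hIoo hx)) (hltm x hx)
  have hbdd : ∀ x ∈ Set.Ioo α β, BddAbove (S x) := by
    intro x hx
    by_contra h'
    have h0 : g x = 0 := by rw [hgdef]; exact Real.sSup_of_not_bddAbove h'
    exact absurd h0 (ne_of_gt (hpos x hx))
  -- averages are bounded by pointwise bounds on |f|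
  have avg_le : ∀ a b C : ℝ, a < b → (∀ y ∈ Set.Icc a b, |f y| ≤ C) → 0 ≤ C →
      (∫ y in Set.Icc a b, |f y|) / (b - a) ≤ C := by
    intro a b C hab hbound hC
    have hba : (0:ℝ) < b - a := by linarith
    by_cases hint : IntegrableOn (fun y => |f y|) (Set.Icc a b) volume
    · have h1 : (∫ y in Set.Icc a b, |f y|) ≤ ∫ _ in Set.Icc a b, C :=
        setIntegral_mono_on hint (((integrableOn_const_iff (C := C)).mpr (Or.inr (by
          rw [Real.volume_Icc]; exact ENNReal.ofReal_lt_top)))) measurableSet_Icc hbound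
      have h2 : (∫ _ in Set.Icc a b, C) = (b - a) * C := by
        rw [setIntegral_const, Real.volume_real_Icc_of_le (by linarith), smul_eq_mul]
      rw [div_le_iff₀ hba]
      calc (∫ y in Set.Icc a b, |f y|) ≤ (b - a) * C := h1.trans (le_of_eq h2)
        _ = C * (b - a) := by ring
    · rw [integral_undef hint, zero_div]
      exact hC
  -- the key quasiconvexity property
  have key : ∀ x ∈ Set.Ioo α β, ∀ z ∈ Set.Ioo α β, ∀ u, x ≤ u → u ≤ z →
      g u ≤ max (g x) (g z) := by
    intro x hx z hz u hxu huz
    have hxz : x ≤ z := le_trans hxu huz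
    have hIccsub : Set.Icc x z ⊆ Set.Ioo α β := fun y hy =>
      ⟨lt_of_lt_of_le hx.1 hy.1, lt_of_le_of_lt hy.2 hz.2⟩
    have hIccI : Set.Icc x z ⊆ I := fun y hy => hIoo (hIccsub hy)
    set K := max (g x) (g z) with hK
    have hK0 : (0:ℝ) ≤ K := le_trans (hpos x hx).le (le_max_left _ _)
    obtain ⟨y₀, hy₀, hy₀max⟩ := usc_exists_max isCompact_Icc (Set.nonempty_Icc.mpr hxz)
      (husc.mono hIccI)
    have hy₀Ioo : y₀ ∈ Set.Ioo α β := hIccsub hy₀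
    have hy₀0 : 0 ≤ f y₀ := hf0 y₀ (hIoo hy₀Ioo)
    -- any average over an interval containing a point of [x,z] is ≤ max K (f y₀)
    have main : ∀ w ∈ Set.Icc x z, ∀ r ∈ S w, r ≤ max K (f y₀) := by
      rintro w hw r ⟨a, b, hab, habI, hwab, rfl⟩
      by_cases hax : a ≤ x
      · have hxab : x ∈ Set.Icc a b := ⟨hax, le_trans hw.1 hwab.2⟩
        have : (∫ y in Set.Icc a b, |f y|) / (b - a) ≤ g x := by
          rw [hgdef]
          exact le_csSup (hbdd x hx) ⟨a, b, hab, habI, hxab, rfl⟩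
        exact le_trans this (le_trans (le_max_left _ _) (le_max_left _ _))
      · by_cases hbz : z ≤ b
        · have hzab : z ∈ Set.Icc a b := ⟨le_trans hwab.1 hw.2, hbz⟩
          have : (∫ y in Set.Icc a b, |f y|) / (b - a) ≤ g z := by
            rw [hgdef]
            exact le_csSup (hbdd z hz) ⟨a, b, hab, habI, hzab, rfl⟩
          exact le_trans this (le_trans (le_max_right _ _) (le_max_left _ _))
        · push_neg at hax hbz
          have hsub2 : Set.Icc a b ⊆ Set.Icc x z := fun y hy =>
            ⟨le_trans hax.le hy.1, le_trans hy.2 hbz.le⟩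
          have hbound : ∀ y ∈ Set.Icc a b, |f y| ≤ f y₀ := by
            intro y hy
            rw [abs_of_nonneg (hf0 y (habI hy))]
            exact hy₀max y (hsub2 hy)
          exact le_trans (avg_le a b (f y₀) hab hbound hy₀0) (le_max_right _ _)
    have hmaxK0 : (0:ℝ) ≤ max K (f y₀) := le_trans hK0 (le_max_left _ _)
    have stepA : g y₀ ≤ max K (f y₀) := by
      rw [hgdef]
      exact Real.sSup_le (main y₀ hy₀) hmaxK0
    have hfy0K : f y₀ ≤ K := by
      by_contra h'
      push_neg at h'
      rw [max_eq_right h'.le] at stepA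
      exact absurd (lt_of_lt_of_le (hltm y₀ hy₀Ioo) stepA) (lt_irrefl _)
    have stepB : g u ≤ max K (f y₀) := by
      rw [hgdef]
      exact Real.sSup_le (main u ⟨hxu, huz⟩) hmaxK0
    rwa [max_eq_left hfy0K] at stepB
  -- combinatorial consequences of quasiconvexity
  have L1 : ∀ p ∈ Set.Ioo α β, ∀ q ∈ Set.Ioo α β, p ≤ q → g q < g p →
      ∀ x ∈ Set.Ioo α β, ∀ y ∈ Set.Ioo α β, x ≤ y → y ≤ p → g y ≤ g x := by
    intro p hp q hq hpq hgt x hx y hy hxy hyp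
    by_contra h'
    push_neg at h'
    have h1 : g y ≤ max (g x) (g q) := key x hx q hq y hxy (le_trans hyp hpq)
    have h2 : g y ≤ g q := by
      rcases le_max_iff.mp h1 with h | h
      · exact absurd (lt_of_lt_of_le h' h) (lt_irrefl _)
      · exact h
    have h3 : g p ≤ max (g y) (g q) := key y hy q hq p hyp hpq
    have h4 : g p ≤ g q := by
      rcases le_max_iff.mp h3 with h | h
      · exact le_trans h h2
      · exact h
    exact absurd (lt_of_lt_of_le hgt h4) (lt_irrefl _)
  have L2 : ∀ r ∈ Set.Ioo α β, ∀ s ∈ Set.Ioo α β, r ≤ s → g r < g s →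
      ∀ u ∈ Set.Ioo α β, ∀ v ∈ Set.Ioo α β, s ≤ u → u ≤ v → g u ≤ g v := by
    intro r hr s hs hrs hlt2 u hu v hv hsu huv
    by_contra h'
    push_neg at h'
    have hru : r ≤ u := le_trans hrs hsu
    have h1 : g u ≤ max (g r) (g v) := key r hr v hv u hru huv
    have h2 : g u ≤ g r := by
      rcases le_max_iff.mp h1 with h | h
      · exact h
      · exact absurd (lt_of_lt_of_le h' h) (lt_irrefl _)
    have h3 : g s ≤ max (g r) (g v) := key r hr v hv s hrs (le_trans hsu huv)
    have h4 : g s ≤ g r := by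
      rcases le_max_iff.mp h3 with h | h
      · exact h
      · exact le_trans h (le_trans h'.le h2)
    exact absurd (lt_of_lt_of_le hlt2 h4) (lt_irrefl _)
  by_cases hm : MonotoneOn g (Set.Ioo α β)
  · exact Or.inl (Or.inl hm)
  by_cases ha : AntitoneOn g (Set.Ioo α β)
  · exact Or.inl (Or.inr ha)
  right
  rw [MonotoneOn] at hm
  push_neg at hm
  obtain ⟨p, hp, q, hq, hpq, hgt⟩ := hm
  rw [AntitoneOn] at ha
  push_neg at ha
  obtain ⟨r, hr, s, hs, hrs, hlt2⟩ := ha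
  set B : Set ℝ := {t | t ∈ Set.Ioo α β ∧ ∀ u ∈ Set.Ioo α β, ∀ v ∈ Set.Ioo α β,
    t ≤ u → u ≤ v → g u ≤ g v} with hB
  have hsB : s ∈ B := ⟨hs, fun u hu v hv h1 h2 => L2 r hr s hs hrs hlt2 u hu v hv h1 h2⟩
  have hlb : ∀ t ∈ B, p ≤ t := by
    intro t ht
    by_contra h'
    push_neg at h'
    exact absurd (ht.2 p hp q hq h'.le hpq) (not_le.mpr hgt)
  have hBne : B.Nonempty := ⟨s, hsB⟩
  have hBbdd : BddBelow B := ⟨p, hlb⟩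
  set c := sInf B with hc
  have hcp : p ≤ c := le_csInf hBne hlb
  have hcs : c ≤ s := csInf_le hBbdd hsB
  have hcIoo : c ∈ Set.Ioo α β := ⟨lt_of_lt_of_le hp.1 hcp, lt_of_le_of_lt hcs hs.2⟩
  refine ⟨c, hcIoo, ?_, ?_⟩
  · -- antitone on (α, c)
    intro x hx y hy hxy
    have hxIoo : x ∈ Set.Ioo α β := ⟨hx.1, lt_trans hx.2 hcIoo.2⟩
    have hyIoo : y ∈ Set.Ioo α β := ⟨hy.1, lt_trans hy.2 hcIoo.2⟩
    have hyB : y ∉ B := fun hyB => absurd (csInf_le hBbdd hyB) (not_le.mpr hy.2)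
    have hcond : ¬(∀ u ∈ Set.Ioo α β, ∀ v ∈ Set.Ioo α β, y ≤ u → u ≤ v → g u ≤ g v) :=
      fun h => hyB ⟨hyIoo, h⟩
    push_neg at hcond
    obtain ⟨u, hu, v, hv, hyu, huv, hgt2⟩ := hcond
    exact L1 u hu v hv huv hgt2 x hxIoo y hyIoo hxy hyu
  · -- monotone on (c, β)
    intro u hu v hv huv
    have huIoo : u ∈ Set.Ioo α β := ⟨lt_trans hcIoo.1 hu.1, hu.2⟩
    have hvIoo : v ∈ Set.Ioo α β := ⟨lt_trans hcIoo.1 hv.1, hv.2⟩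
    obtain ⟨t, htB, htu⟩ := exists_lt_of_csInf_lt hBne hu.1
    exact htB.2 u huIoo v hvIoo htu.le huv
end

section
/- Let f : I → [0,∞) be upper semicontinuous with f ≤ Mf pointwise. Then V(Mf) ≤ V(f); in particular Mf has bounded variation whenever f does. -/
open MeasureTheory Set Filter ENNReal


private lemma sum_splice (c c' : ℕ → ℝ) (k m : ℕ)
    (hlt : ∀ i, i < k → c' i = c i)
    (hgt : ∀ i, k + 1 ≤ i → c' i = c (i + 1)) :
    ∑ i ∈ Finset.range (k + 1 + m), c' i
      = (∑ i ∈ Finset.range (k + 2 + m), c i) - c k - c (k + 1) + c' k := by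
  have h1 : ∑ i ∈ Finset.range (k + 1 + m), c' i
      = (∑ i ∈ Finset.range k, c i) + c' k + ∑ i ∈ Finset.range m, c (k + 2 + i) := by
    rw [Finset.sum_range_add, Finset.sum_range_succ]
    have e1 : ∑ i ∈ Finset.range k, c' i = ∑ i ∈ Finset.range k, c i :=
      Finset.sum_congr rfl fun i hi => hlt i (Finset.mem_range.mp hi)
    have e2 : ∑ i ∈ Finset.range m, c' (k + 1 + i) = ∑ i ∈ Finset.range m, c (k + 2 + i) := by
      refine Finset.sum_congr rfl fun i _ => ?_
      rw [hgt _ (by omega)]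
      congr 1
      omega
    rw [e1, e2]
  have h2 : ∑ i ∈ Finset.range (k + 2 + m), c i
      = (∑ i ∈ Finset.range k, c i) + c k + c (k + 1) + ∑ i ∈ Finset.range m, c (k + 2 + i) := by
    rw [Finset.sum_range_add]
    congr 1
    show ∑ i ∈ Finset.range (k + 2), c i = _
    rw [Finset.sum_range_succ, Finset.sum_range_succ]
  linarith

private lemma core (s : Set ℝ) (f g : ℝ → ℝ) (E : ℝ)
    (hfg : ∀ x ∈ s, f x ≤ g x)
    (hQ : ∀ y ∈ s, ∀ ε : ℝ, 0 < ε → ∃ α β w : ℝ, α ≤ y ∧ y ≤ β ∧ α ≤ w ∧ w ≤ β ∧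
      Set.Icc α β ⊆ s ∧ (∀ z ∈ Set.Icc α β, g y - ε ≤ g z) ∧ g y - ε ≤ f w)
    (hE : ∀ (n : ℕ) (v : ℕ → ℝ), Monotone v → (∀ i, v i ∈ s) →
      ∑ i ∈ Finset.range n, |f (v (i + 1)) - f (v i)| ≤ E)
    (hE0 : 0 ≤ E) :
    ∀ (n : ℕ) (u : ℕ → ℝ), Monotone u → (∀ i, u i ∈ s) → ∀ ε : ℝ, 0 < ε →
      ∑ i ∈ Finset.range n, |g (u (i + 1)) - g (u i)| ≤ E + (2 * (n : ℝ) + 2) * ε := by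
  intro n
  induction n with
  | zero =>
    intro u hu hus ε hε
    simp only [Finset.range_zero, Finset.sum_empty, Nat.cast_zero]
    nlinarith
  | succ n IH =>
    intro u hu hus ε hε
    classical
    push_cast
    rcases Nat.eq_zero_or_pos n with hn | hn
    · -- single interval case
      subst hn
      rw [Finset.sum_range_one]
      norm_num
      rcases le_total (g (u 0)) (g (u 1)) with hc | hc
      · obtain ⟨α, β, w, h1, h2, h3, h4, hsub, hnb, hfw⟩ := hQ (u 1) (hus 1) ε hε
        by_cases h0 : u 0 ∈ Set.Icc α β
        · have := hnb (u 0) h0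
          rw [abs_of_nonneg (by linarith)]
          linarith
        · have hu01 : u 0 ≤ u 1 := hu (by norm_num)
          have hub : u 0 ≤ β := le_trans hu01 h2
          have hlt : u 0 < α := by
            rcases lt_or_ge (u 0) α with h | h
            · exact h
            · exact absurd (Set.mem_Icc.mpr ⟨h, hub⟩) h0
          set v : ℕ → ℝ := fun i => if i = 0 then u 0 else w with hv_def
          have hw0 : u 0 ≤ w := le_trans hlt.le h3
          have hv : Monotone v := by
            intro i j hij
            rcases Nat.eq_zero_or_pos i with hi | hi
            · rcases Nat.eq_zero_or_pos j with hj | hj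
              · simp [hv_def, hi, hj]
              · simp only [hv_def, hi, if_pos rfl, if_neg (by omega : j ≠ 0)]
                exact hw0
            · have hj : j ≠ 0 := by omega
              simp only [hv_def, if_neg (by omega : ¬ i = 0), if_neg hj]
              exact le_refl _
          have hvs : ∀ i, v i ∈ s := by
            intro i
            by_cases hi : i = 0
            · simpa [hv_def, hi] using hus 0
            · simpa [hv_def, hi] using hsub ⟨h3, h4⟩
          have hEv := hE 1 v hv hvs
          rw [Finset.sum_range_one] at hEv
          have hv0 : v 0 = u 0 := by simp [hv_def]
          have hv1 : v 1 = w := by simp [hv_def]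
          rw [hv0, hv1] at hEv
          have hfu0 : f (u 0) ≤ g (u 0) := hfg _ (hus 0)
          have habs : f w - f (u 0) ≤ |f w - f (u 0)| := le_abs_self _
          rw [abs_of_nonneg (by linarith)]
          linarith
      · obtain ⟨α, β, w, h1, h2, h3, h4, hsub, hnb, hfw⟩ := hQ (u 0) (hus 0) ε hε
        by_cases h0 : u 1 ∈ Set.Icc α β
        · have := hnb (u 1) h0
          rw [abs_of_nonpos (by linarith)]
          linarith
        · have hu01 : u 0 ≤ u 1 := hu (by norm_num)
          have hub : α ≤ u 1 := le_trans h1 hu01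
          have hlt : β < u 1 := by
            rcases lt_or_ge β (u 1) with h | h
            · exact h
            · exact absurd (Set.mem_Icc.mpr ⟨hub, h⟩) h0
          set v : ℕ → ℝ := fun i => if i = 0 then w else u 1 with hv_def
          have hw0 : w ≤ u 1 := le_trans h4 hlt.le
          have hv : Monotone v := by
            intro i j hij
            rcases Nat.eq_zero_or_pos i with hi | hi
            · rcases Nat.eq_zero_or_pos j with hj | hj
              · simp [hv_def, hi, hj]
              · simp only [hv_def, hi, if_pos rfl, if_neg (by omega : j ≠ 0)]
                exact hw0
            · have hj : j ≠ 0 := by omega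
              simp only [hv_def, if_neg (by omega : ¬ i = 0), if_neg hj]
              exact le_refl _
          have hvs : ∀ i, v i ∈ s := by
            intro i
            by_cases hi : i = 0
            · simpa [hv_def, hi] using hsub ⟨h3, h4⟩
            · simpa [hv_def, hi] using hus 1
          have hEv := hE 1 v hv hvs
          rw [Finset.sum_range_one] at hEv
          have hv0 : v 0 = w := by simp [hv_def]
          have hv1 : v 1 = u 1 := by simp [hv_def]
          rw [hv0, hv1] at hEv
          have hfu1 : f (u 1) ≤ g (u 1) := hfg _ (hus 1)
          have habs : f w - f (u 1) ≤ |f (u 1) - f w| := by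
            rw [abs_sub_comm]; exact le_abs_self _
          rw [abs_of_nonpos (by linarith)]
          linarith

    · -- at least two intervals
      by_cases hmid : ∃ k, k + 1 ≤ n ∧
          ((g (u k) ≤ g (u (k+1)) ∧ g (u (k+1)) ≤ g (u (k+1+1))) ∨
           (g (u (k+1+1)) ≤ g (u (k+1)) ∧ g (u (k+1)) ≤ g (u k)))
      · -- remove a monotone middle point
        obtain ⟨k, hk, hm⟩ := hmid
        set u' : ℕ → ℝ := fun i => u (if i < k + 1 then i else i + 1) with hu'_def
        have hu' : Monotone u' := by
          intro i j hij
          simp only [hu'_def]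
          apply hu
          split_ifs <;> omega
        have hus' : ∀ i, u' i ∈ s := fun i => hus _
        have hsp := sum_splice (fun i => |g (u (i + 1)) - g (u i)|)
            (fun i => |g (u' (i + 1)) - g (u' i)|) k (n - 1 - k)
            (by intro i hi
                simp only [hu'_def]
                rw [if_pos (by omega), if_pos (by omega)])
            (by intro i hi
                simp only [hu'_def]
                rw [if_neg (by omega), if_neg (by omega)])
        have hck : |g (u' (k + 1)) - g (u' k)| = |g (u (k+1+1)) - g (u k)| := by
          simp only [hu'_def]
          rw [if_neg (by omega), if_pos (by omega)]
        rw [hck] at hsp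
        have hmidval : |g (u (k+1+1)) - g (u (k+1))| + |g (u (k+1)) - g (u k)|
            = |g (u (k+1+1)) - g (u k)| := by
          rcases hm with ⟨hm1, hm2⟩ | ⟨hm1, hm2⟩
          · rw [abs_of_nonneg (by linarith), abs_of_nonneg (by linarith),
              abs_of_nonneg (by linarith)]
            ring
          · rw [abs_of_nonpos (by linarith), abs_of_nonpos (by linarith),
              abs_of_nonpos (by linarith)]
            ring
        have hIH := IH u' hu' hus' ε hε
        have hrn : k + 1 + (n - 1 - k) = n := by omega
        have hIH2 : ∑ i ∈ Finset.range (k + 1 + (n - 1 - k)), |g (u' (i+1)) - g (u' i)|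
            ≤ E + (2*(n:ℝ)+2)*ε := by rw [hrn]; exact hIH
        have hrg : k + 2 + (n - 1 - k) = n + 1 := by omega
        rw [← hrg]
        have hcast : (0:ℝ) ≤ (n:ℝ) := Nat.cast_nonneg n
        linarith [hsp, hIH2, hmidval]
      · -- strict alternation
        have halt : ∀ k, k + 1 ≤ n →
            (g (u k) < g (u (k+1)) ∧ g (u (k+1+1)) < g (u (k+1))) ∨
            (g (u (k+1)) < g (u k) ∧ g (u (k+1)) < g (u (k+1+1))) := by
          intro k hk
          by_contra hcon
          push_neg at hcon
          rcases lt_trichotomy (g (u k)) (g (u (k+1))) with h1 | h1 | h1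
          · exact hmid ⟨k, hk, Or.inl ⟨h1.le, hcon.1 h1⟩⟩
          · rcases le_total (g (u (k+1))) (g (u (k+1+1))) with h2 | h2
            · exact hmid ⟨k, hk, Or.inl ⟨h1.le, h2⟩⟩
            · exact hmid ⟨k, hk, Or.inr ⟨h2, h1.ge⟩⟩
          · exact hmid ⟨k, hk, Or.inr ⟨hcon.2 h1, h1.le⟩⟩
        set pk : ℕ → Prop := fun j =>
          (j = 0 ∧ g (u 1) < g (u 0)) ∨
          (∃ k, j = k + 1 ∧ k + 1 ≤ n ∧ g (u k) < g (u (k+1)) ∧ g (u (k+1+1)) < g (u (k+1))) ∨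
          (j = n + 1 ∧ g (u n) < g (u (n+1))) with hpk_def
        have alt1 : ∀ i, i ≤ n → pk i → g (u (i+1)) < g (u i) := by
          intro i hi h
          rcases h with ⟨rfl, h⟩ | ⟨k, rfl, hk, h1, h2⟩ | ⟨rfl, h⟩
          · exact h
          · exact h2
          · omega
        have alt2 : ∀ i, i ≤ n → pk (i+1) → g (u i) < g (u (i+1)) := by
          intro i hi h
          rcases h with ⟨h0, h⟩ | ⟨k, heq, hk, h1, h2⟩ | ⟨heq, h⟩
          · omega
          · obtain rfl : k = i := by omega
            exact h1
          · obtain rfl : i = n := by omega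
            exact h
        have altex : ∀ i, i ≤ n → pk i ∨ pk (i+1) := by
          intro i hi
          by_contra hcon
          rw [not_or] at hcon
          obtain ⟨hnp1, hnp2⟩ := hcon
          rcases Nat.eq_zero_or_pos i with rfl | hipos
          · have h01 : g (u 0) ≤ g (u 1) := by
              by_contra h
              exact hnp1 (Or.inl ⟨rfl, lt_of_not_ge h⟩)
            rcases halt 0 (by omega) with ⟨hh1, hh2⟩ | ⟨hh1, hh2⟩
            · exact hnp2 (Or.inr (Or.inl ⟨0, rfl, by omega, hh1, hh2⟩))
            · linarith
          · obtain ⟨k, rfl⟩ : ∃ k, i = k + 1 := ⟨i - 1, by omega⟩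
            have hval : g (u (k+1)) < g (u (k+1+1)) := by
              rcases halt k (by omega) with ⟨hh1, hh2⟩ | ⟨hh1, hh2⟩
              · exact absurd (Or.inr (Or.inl ⟨k, rfl, by omega, hh1, hh2⟩)) hnp1
              · exact hh2
            rcases Nat.lt_or_ge (k+1) n with hlt2 | hge2
            · rcases halt (k+1) (by omega) with ⟨hh1, hh2⟩ | ⟨hh1, hh2⟩
              · exact hnp2 (Or.inr (Or.inl ⟨k+1, rfl, by omega, hh1, hh2⟩))
              · linarith
            · have hkn : k + 1 = n := by omega
              subst hkn
              exact hnp2 (Or.inr (Or.inr ⟨rfl, hval⟩))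
        by_cases hcheap : ∃ j, j ≤ n + 1 ∧ pk j ∧
            ((∃ k, j = k + 1 ∧ g (u j) ≤ g (u k) + ε) ∨ (j ≤ n ∧ g (u j) ≤ g (u (j+1)) + ε))
        · -- remove a cheap peak
          obtain ⟨j, hj, hpkj, hch⟩ := hcheap
          rcases hpkj with ⟨rfl, hpv⟩ | ⟨k, rfl, hk, hp1, hp2⟩ | ⟨rfl, hpv⟩
          · -- left boundary peak, cheap
            have hch' : g (u 0) ≤ g (u 1) + ε := by
              rcases hch with ⟨k, hk0, _⟩ | ⟨_, h⟩
              · omega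
              · exact h
            rw [Finset.sum_range_succ']
            have hIH := IH (fun i => u (i+1)) (fun i j hij => hu (by omega))
              (fun i => hus (i+1)) ε hε
            have habs : |g (u (0+1)) - g (u 0)| = g (u 0) - g (u 1) := by
              norm_num
              rw [abs_of_nonpos (by linarith)]
              ring
            rw [habs]
            have hcast : (0:ℝ) ≤ (n:ℝ) := Nat.cast_nonneg n
            linarith [hIH]
          · -- interior peak, cheap
            set u' : ℕ → ℝ := fun i => u (if i < k + 1 then i else i + 1) with hu'_def
            have hu' : Monotone u' := by
              intro i j hij
              simp only [hu'_def]
              apply hu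
              split_ifs <;> omega
            have hus' : ∀ i, u' i ∈ s := fun i => hus _
            have hsp := sum_splice (fun i => |g (u (i + 1)) - g (u i)|)
                (fun i => |g (u' (i + 1)) - g (u' i)|) k (n - 1 - k)
                (by intro i hi
                    simp only [hu'_def]
                    rw [if_pos (by omega), if_pos (by omega)])
                (by intro i hi
                    simp only [hu'_def]
                    rw [if_neg (by omega), if_neg (by omega)])
            have hck : |g (u' (k + 1)) - g (u' k)| = |g (u (k+1+1)) - g (u k)| := by
              simp only [hu'_def]
              rw [if_neg (by omega), if_pos (by omega)]
            rw [hck] at hsp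
            have e1 : |g (u (k+1)) - g (u k)| = g (u (k+1)) - g (u k) :=
              abs_of_nonneg (by linarith)
            have e2 : |g (u (k+1+1)) - g (u (k+1))| = -(g (u (k+1+1)) - g (u (k+1))) :=
              abs_of_nonpos (by linarith)
            have A1 := le_abs_self (g (u (k+1+1)) - g (u k))
            have A2 := neg_abs_le (g (u (k+1+1)) - g (u k))
            have hIH := IH u' hu' hus' ε hε
            have hrn : k + 1 + (n - 1 - k) = n := by omega
            have hIH2 : ∑ i ∈ Finset.range (k + 1 + (n - 1 - k)), |g (u' (i+1)) - g (u' i)|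
                ≤ E + (2*(n:ℝ)+2)*ε := by rw [hrn]; exact hIH
            have hrg : k + 2 + (n - 1 - k) = n + 1 := by omega
            rw [← hrg]
            have hcast : (0:ℝ) ≤ (n:ℝ) := Nat.cast_nonneg n
            rcases hch with ⟨k', heq, hle⟩ | ⟨hjn, hle⟩
            · obtain rfl : k' = k := by omega
              linarith [hsp, hIH2]
            · linarith [hsp, hIH2]
          · -- right boundary peak, cheap
            have hch' : g (u (n+1)) ≤ g (u n) + ε := by
              rcases hch with ⟨k, hk0, h⟩ | ⟨hj0, _⟩
              · obtain rfl : k = n := by omega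
                exact h
              · omega
            rw [Finset.sum_range_succ]
            have hIH := IH u hu hus ε hε
            have habs : |g (u (n+1)) - g (u n)| = g (u (n+1)) - g (u n) :=
              abs_of_nonneg (by linarith)
            have hcast : (0:ℝ) ≤ (n:ℝ) := Nat.cast_nonneg n
            linarith [hIH]
        · -- all peaks are expensive: direct construction
          have hexp : ∀ j : ℕ, ∃ w, j ≤ n + 1 → pk j →
              w ∈ s ∧ (∀ k, j = k + 1 → u k < w) ∧ (j ≤ n → w < u (j + 1)) ∧
              g (u j) - ε ≤ f w := by
            intro j
            by_cases hj : j ≤ n + 1 ∧ pk j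
            · obtain ⟨hj1, hj2⟩ := hj
              obtain ⟨α, β, w, h1, h2, h3, h4, hsub, hnb, hfw⟩ := hQ (u j) (hus j) ε hε
              refine ⟨w, fun _ _ => ⟨hsub ⟨h3, h4⟩, ?_, ?_, hfw⟩⟩
              · intro k hk
                by_cases hmem : u k ∈ Set.Icc α β
                · exact absurd ⟨j, hj1, hj2, Or.inl ⟨k, hk, by linarith [hnb _ hmem]⟩⟩ hcheap
                · have hkb : u k ≤ β := le_trans (hu (by omega)) h2
                  have hna : ¬ (α ≤ u k) := fun h => hmem ⟨h, hkb⟩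
                  linarith [lt_of_not_ge hna]
              · intro hjn
                by_cases hmem : u (j+1) ∈ Set.Icc α β
                · exact absurd ⟨j, hj1, hj2, Or.inr ⟨hjn, by linarith [hnb _ hmem]⟩⟩ hcheap
                · have hka : α ≤ u (j+1) := le_trans h1 (hu (by omega))
                  have hnb' : ¬ (u (j+1) ≤ β) := fun h => hmem ⟨hka, h⟩
                  linarith [lt_of_not_ge hnb']
            · exact ⟨u j, fun h1 h2 => absurd ⟨h1, h2⟩ hj⟩
          choose W hW using hexp
          set x : ℕ → ℝ := fun i =>
            if pk (min i (n+1)) then W (min i (n+1)) else u (min i (n+1)) with hx_def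
          have hxval : ∀ i, i ≤ n + 1 → x i = if pk i then W i else u i := by
            intro i hi
            simp only [hx_def]
            rw [min_eq_left hi]
          have hx_mem : ∀ i, x i ∈ s := by
            intro i
            simp only [hx_def]
            by_cases h : pk (min i (n+1))
            · rw [if_pos h]
              exact (hW _ (min_le_right _ _) h).1
            · rw [if_neg h]
              exact hus _
          have hnotboth : ∀ i, i ≤ n → pk i → pk (i+1) → False := by
            intro i hi h1 h2
            have := alt1 i hi h1
            have := alt2 i hi h2
            linarith
          have hx_step : ∀ i, x i ≤ x (i + 1) := by
            intro i
            rcases Nat.lt_or_ge i (n+1) with hi | hi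
            · have hi' : i ≤ n := by omega
              rw [hxval i (by omega), hxval (i+1) (by omega)]
              rcases altex i hi' with hp | hp
              · have hnp : ¬ pk (i+1) := fun h => hnotboth i hi' hp h
                rw [if_pos hp, if_neg hnp]
                exact ((hW i (by omega) hp).2.2.1 hi').le
              · have hnp : ¬ pk i := fun h => hnotboth i hi' h hp
                rw [if_neg hnp, if_pos hp]
                exact ((hW (i+1) (by omega) hp).2.1 i rfl).le
            · have e1 : min i (n+1) = n+1 := by omega
              have e2 : min (i+1) (n+1) = n+1 := by omega
              simp only [hx_def]
              rw [e1, e2]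
          have hx_mono : Monotone x := monotone_nat_of_le_succ hx_step
          have hterm : ∀ i, i ≤ n → |g (u (i+1)) - g (u i)| ≤ |f (x (i+1)) - f (x i)| + ε := by
            intro i hi
            rw [hxval i (by omega), hxval (i+1) (by omega)]
            rcases altex i hi with hp | hp
            · have hnp : ¬ pk (i+1) := fun h => hnotboth i hi hp h
              rw [if_pos hp, if_neg hnp]
              have h1 := alt1 i hi hp
              have h2 := (hW i (by omega) hp).2.2.2
              have h3 := hfg (u (i+1)) (hus (i+1))
              have h4 := neg_abs_le (f (u (i+1)) - f (W i))
              rw [abs_of_nonpos (by linarith)]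
              linarith
            · have hnp : ¬ pk i := fun h => hnotboth i hi h hp
              rw [if_neg hnp, if_pos hp]
              have h1 := alt2 i hi hp
              have h2 := (hW (i+1) (by omega) hp).2.2.2
              have h3 := hfg (u i) (hus i)
              have h4 := le_abs_self (f (W (i+1)) - f (u i))
              rw [abs_of_nonneg (by linarith)]
              linarith
          have hsum : ∑ i ∈ Finset.range (n+1), |g (u (i+1)) - g (u i)|
              ≤ ∑ i ∈ Finset.range (n+1), (|f (x (i+1)) - f (x i)| + ε) := by
            refine Finset.sum_le_sum fun i hi => hterm i ?_
            have := Finset.mem_range.mp hi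
            omega
          have hEx := hE (n+1) x hx_mono hx_mem
          rw [Finset.sum_add_distrib, Finset.sum_const, Finset.card_range] at hsum
          have hns : (n+1) • ε = ((n:ℝ)+1) * ε := by
            rw [nsmul_eq_mul]
            push_cast
            ring
          rw [hns] at hsum
          have hcast : (0:ℝ) ≤ (n:ℝ) := Nat.cast_nonneg n
          nlinarith [hsum, hEx]

private lemma key (s : Set ℝ) (f g : ℝ → ℝ)
    (hfg : ∀ x ∈ s, f x ≤ g x)
    (hQ : ∀ y ∈ s, ∀ ε : ℝ, 0 < ε → ∃ α β w : ℝ, α ≤ y ∧ y ≤ β ∧ α ≤ w ∧ w ≤ β ∧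
      Set.Icc α β ⊆ s ∧ (∀ z ∈ Set.Icc α β, g y - ε ≤ g z) ∧ g y - ε ≤ f w) :
    eVariationOn g s ≤ eVariationOn f s := by
  by_cases hV : eVariationOn f s = ⊤
  · rw [hV]; exact le_top
  have hconv : ∀ (h : ℝ → ℝ) (n : ℕ) (v : ℕ → ℝ),
      ∑ i ∈ Finset.range n, edist (h (v (i+1))) (h (v i))
        = ENNReal.ofReal (∑ i ∈ Finset.range n, |h (v (i+1)) - h (v i)|) := by
    intro h n v
    rw [ENNReal.ofReal_sum_of_nonneg (fun i _ => abs_nonneg _)]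
    exact Finset.sum_congr rfl fun i _ => by rw [edist_dist, Real.dist_eq]
  have hE : ∀ (n : ℕ) (v : ℕ → ℝ), Monotone v → (∀ i, v i ∈ s) →
      ∑ i ∈ Finset.range n, |f (v (i+1)) - f (v i)| ≤ (eVariationOn f s).toReal := by
    intro n v hv hvs
    have h1 := eVariationOn.sum_le (f := f) (n := n) hv hvs
    rw [hconv f n v] at h1
    exact (ENNReal.ofReal_le_iff_le_toReal hV).mp h1
  have hcore := core s f g (eVariationOn f s).toReal hfg hQ hE ENNReal.toReal_nonneg
  show (⨆ p : ℕ × { u : ℕ → ℝ // Monotone u ∧ ∀ i, u i ∈ s },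
      ∑ i ∈ Finset.range p.1, edist (g (p.2.1 (i + 1))) (g (p.2.1 i))) ≤ eVariationOn f s
  refine iSup_le ?_
  rintro ⟨n, u, hu, hus⟩
  dsimp only
  rw [hconv g n u]
  have hreal : ∑ i ∈ Finset.range n, |g (u (i+1)) - g (u i)| ≤ (eVariationOn f s).toReal := by
    by_contra hcon
    push_neg at hcon
    have h2n : (0:ℝ) < 2 * (n:ℝ) + 2 := by positivity
    set S := ∑ i ∈ Finset.range n, |g (u (i+1)) - g (u i)| with hS
    have hεpos : 0 < (S - (eVariationOn f s).toReal) / (2 * (2 * (n:ℝ) + 2)) := by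
      apply div_pos
      · linarith
      · linarith
    have := hcore n u hu hus _ hεpos
    have heq : (2*(n:ℝ)+2) * ((S - (eVariationOn f s).toReal)/(2*(2*(n:ℝ)+2)))
        = (S - (eVariationOn f s).toReal)/2 := by
      field_simp
    rw [heq, ← hS] at this
    linarith
  calc ENNReal.ofReal (∑ i ∈ Finset.range n, |g (u (i+1)) - g (u i)|)
      ≤ ENNReal.ofReal (eVariationOn f s).toReal := ENNReal.ofReal_le_ofReal hreal
    _ = eVariationOn f s := ENNReal.ofReal_toReal hV

/-- If `f : I → [0,∞)` is upper semicontinuous with `f ≤ Mf` pointwise, then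
`V(Mf) ≤ V(f)`. -/
theorem stmt10 (I : Set ℝ) (hI : I.OrdConnected) (hI' : I.Nontrivial)
    (f : ℝ → ℝ) (hf0 : ∀ x ∈ I, 0 ≤ f x)
    (husc : UpperSemicontinuousOn f I)
    (hle : ∀ x ∈ I, f x ≤ mf I f x) :
    eVariationOn (mf I f) I ≤ eVariationOn f I := by
  classical
  by_cases hbdd : ∃ C : ℝ, ∀ x ∈ I, f x ≤ C
  · obtain ⟨C, hC⟩ := hbdd
    set C' := max C 0 with hC'def
    have hC'0 : 0 ≤ C' := le_max_right _ _
    have hmf : ∀ x : ℝ, mf I f x = sSup {r : ℝ | ∃ a b : ℝ, a < b ∧ Set.Icc a b ⊆ I ∧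
        x ∈ Set.Icc a b ∧ r = (∫ y in Set.Icc a b, |f y|) / (b - a)} := fun x => rfl
    have hint_le : ∀ a b c : ℝ, a < b → 0 ≤ c → Set.Icc a b ⊆ I →
        (∀ w ∈ Set.Icc a b, f w ≤ c) → (∫ y in Set.Icc a b, |f y|) ≤ c * (b - a) := by
      intro a b c hab hc hsub hfc
      by_cases hint : IntegrableOn (fun y => |f y|) (Set.Icc a b) volume
      · have hmono := setIntegral_mono_on hint
          (integrableOn_const (C := c) measure_Icc_lt_top.ne) measurableSet_Icc
          (fun y hy => by
            rw [abs_of_nonneg (hf0 y (hsub hy))]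
            exact hfc y hy)
        rw [setIntegral_const, Real.volume_real_Icc, max_eq_left (by linarith),
          smul_eq_mul] at hmono
        linarith [hmono]
      · rw [integral_undef hint]
        have : 0 ≤ b - a := by linarith
        positivity
    have hbddA : ∀ x : ℝ, BddAbove {r : ℝ | ∃ a b : ℝ, a < b ∧ Set.Icc a b ⊆ I ∧
        x ∈ Set.Icc a b ∧ r = (∫ y in Set.Icc a b, |f y|) / (b - a)} := by
      intro x
      refine ⟨C', ?_⟩
      rintro r ⟨a, b, hab, hsub, hx, rfl⟩
      rw [div_le_iff₀ (by linarith)]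
      exact hint_le a b C' hab hC'0 hsub
        (fun w hw => le_trans (hC w (hsub hw)) (le_max_left _ _))
    have hne : ∀ x ∈ I, Set.Nonempty {r : ℝ | ∃ a b : ℝ, a < b ∧ Set.Icc a b ⊆ I ∧
        x ∈ Set.Icc a b ∧ r = (∫ y in Set.Icc a b, |f y|) / (b - a)} := by
      intro x hx
      obtain ⟨p, hp, q, hq, hpq⟩ := hI'
      have hyx : ∃ y ∈ I, y ≠ x := by
        rcases eq_or_ne p x with rfl | h
        · exact ⟨q, hq, fun h' => hpq h'.symm⟩
        · exact ⟨p, hp, h⟩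
      obtain ⟨y, hy, hyne⟩ := hyx
      refine ⟨_, ⟨min x y, max x y, ?_, ?_, ⟨min_le_left _ _, le_max_left _ _⟩, rfl⟩⟩
      · exact min_lt_max.mpr (fun h => hyne h.symm)
      · rcases le_total x y with h | h
        · rw [min_eq_left h, max_eq_right h]
          exact hI.out hx hy
        · rw [min_eq_right h, max_eq_left h]
          exact hI.out hy hx
    have hQ : ∀ y ∈ I, ∀ ε : ℝ, 0 < ε → ∃ α β w : ℝ, α ≤ y ∧ y ≤ β ∧ α ≤ w ∧ w ≤ β ∧
        Set.Icc α β ⊆ I ∧ (∀ z ∈ Set.Icc α β, mf I f y - ε ≤ mf I f z) ∧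
        mf I f y - ε ≤ f w := by
      intro y hy ε hε
      obtain ⟨r, hr, hrgt⟩ := exists_lt_of_lt_csSup (hne y hy)
        (show mf I f y - ε < _ by rw [← hmf y]; exact sub_lt_self _ hε)
      obtain ⟨a, b, hab, hsub, hyab, rfl⟩ := hr
      have hwit : ∃ w ∈ Set.Icc a b, mf I f y - ε ≤ f w := by
        by_contra hcon
        push_neg at hcon
        have hcpos : 0 < mf I f y - ε := lt_of_le_of_lt (hf0 y hy) (hcon y hyab)
        have hbound := hint_le a b (mf I f y - ε) hab hcpos.le hsub
          (fun w hw => (hcon w hw).le)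
        have hle' : (∫ y in Set.Icc a b, |f y|) / (b - a) ≤ mf I f y - ε := by
          rw [div_le_iff₀ (by linarith)]
          linarith [hbound]
        linarith
      obtain ⟨w, hw, hfw⟩ := hwit
      refine ⟨a, b, w, hyab.1, hyab.2, hw.1, hw.2, hsub, ?_, hfw⟩
      intro z hz
      have hrz : (∫ y in Set.Icc a b, |f y|) / (b - a) ∈ {r : ℝ | ∃ a' b' : ℝ, a' < b' ∧
          Set.Icc a' b' ⊆ I ∧ z ∈ Set.Icc a' b' ∧
          r = (∫ y in Set.Icc a' b', |f y|) / (b' - a')} := ⟨a, b, hab, hsub, hz, rfl⟩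
      have hz' := le_csSup (hbddA z) hrz
      rw [← hmf z] at hz'
      linarith
    exact key I f (mf I f) hle hQ
  · push_neg at hbdd
    have htop : eVariationOn f I = ⊤ := by
      by_contra hne'
      obtain ⟨x₀, hx₀⟩ := hI'.nonempty
      obtain ⟨t, ht, htf⟩ := hbdd ((eVariationOn f I).toReal + f x₀ + 1)
      have hd := eVariationOn.edist_le f ht hx₀
      rw [edist_dist, Real.dist_eq] at hd
      have h1 : (eVariationOn f I).toReal + 1 ≤ |f t - f x₀| := by
        have := le_abs_self (f t - f x₀)
        linarith
      have h2 : ENNReal.ofReal ((eVariationOn f I).toReal + 1) ≤ eVariationOn f I :=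
        le_trans (ENNReal.ofReal_le_ofReal h1) hd
      rw [ENNReal.ofReal_le_iff_le_toReal hne'] at h2
      linarith
    rw [htop]
    exact le_top
end

section
/- There exists a bounded, upper semicontinuous function f : ℝ → ℝ with compact support such that Mf fails to be differentiable on a set of positive Lebesgue measure; in particular Mf is not of bounded variation. Concretely, for a suitable fat Cantor set C of measure > 2/3, the maximal function Mχ_C has limsup_{w→z} |Mχ_C(z)−Mχ_C(w)|/|z−w| = ∞ for every z ∈ C with Mχ_C(z) = 1. -/
open MeasureTheory Set Filter ENNReal NNReal
open Topology

namespace FC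
noncomputable def del (j : ℕ) : ℝ := 1 / 2 ^ (j + 2)
noncomputable def L : ℕ → ℝ
  | 0 => 1
  | n + 1 => L n * (1 - del (n + 1)) / 8
noncomputable def gp (n : ℕ) : ℝ := L n * del (n + 1) / 7
noncomputable def step (n : ℕ) : ℝ := L (n + 1) + gp n
lemma del_pos (j : ℕ) : 0 < del j := by unfold del; positivity
lemma del_le (j : ℕ) : del (j+1) ≤ 1 / 8 := by
  unfold del
  rw [div_le_div_iff₀ (by positivity) (by norm_num)]
  have : (2:ℝ)^3 ≤ 2 ^ (j + 1 + 2) := by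
    apply pow_le_pow_right₀ (by norm_num); omega
  norm_num at this ⊢; linarith
lemma L_pos (n : ℕ) : 0 < L n := by
  induction n with
  | zero => norm_num [L]
  | succ n ih =>
    unfold L
    have : (0:ℝ) < 1 - del (n+1) := by nlinarith [del_le n]
    positivity
lemma L_le (n : ℕ) : L n ≤ (1/8) ^ n := by
  induction n with
  | zero => norm_num [L]
  | succ n ih =>
    unfold L
    have h1 := del_pos (n+1)
    have h3 := L_pos n
    have : L n * (1 - del (n+1)) ≤ L n := by nlinarith
    calc L n * (1 - del (n+1)) / 8 ≤ L n / 8 := by linarith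
    _ ≤ (1/8)^n / 8 := by linarith
    _ = (1/8)^(n+1) := by ring
lemma L_succ (n : ℕ) : L (n+1) = L n * (1 - del (n + 1)) / 8 := rfl
lemma seven_step (n : ℕ) : 7 * step n + L (n + 1) = L n := by
  unfold step gp; rw [L_succ]; ring
lemma step_pos (n : ℕ) : 0 < step n := by
  have := L_pos (n+1); have := L_pos n; have := del_pos (n+1)
  unfold step gp; positivity
lemma gp_pos (n : ℕ) : 0 < gp n := by
  have := L_pos n; have := del_pos (n+1); unfold gp; positivity
lemma step_le_L (n : ℕ) : step n ≤ L n := by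
  have h := seven_step n
  have := step_pos n; have := L_pos (n+1)
  linarith

-- new material

lemma eight_pow_L_le (n : ℕ) : ∀ j, 8 ^ j * L (n+j) ≤ L n := by
  intro j
  induction j with
  | zero => simp
  | succ j ih =>
    have hL := L_pos (n+j)
    have hd := del_pos (n+j+1)
    have h8 : (8:ℝ)^(j+1) * L (n+(j+1)) = 8^j * L (n+j) * (1 - del (n+j+1)) := by
      have : n + (j+1) = (n+j) + 1 := by ring
      rw [this, L_succ]; ring
    rw [h8]
    have h8p : (0:ℝ) < (8:ℝ)^j := by positivity
    nlinarith [mul_pos (mul_pos h8p hL) hd]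

lemma eight_pow_L_ge (n : ℕ) : ∀ j, L n * (1 - 1/2^(n+2) + 1/2^(n+j+2)) ≤ 8 ^ j * L (n+j) := by
  intro j
  induction j with
  | zero => simp
  | succ j ih =>
    have hL := L_pos (n+j)
    have hLn := L_pos n
    have h8 : (8:ℝ)^(j+1) * L (n+(j+1)) = 8^j * L (n+j) * (1 - del (n+j+1)) := by
      have : n + (j+1) = (n+j) + 1 := by ring
      rw [this, L_succ]; ring
    rw [h8]
    have hub := eight_pow_L_le n j
    have hdel : del (n+j+1) = 1/2^(n+j+3) := by unfold del; ring_nf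
    have hdp : (0:ℝ) < 1/2^(n+j+3) := by positivity
    have hdl : (0:ℝ) < 1 - del (n+j+1) := by
      rw [hdel]
      have : (1:ℝ)/2^(n+j+3) ≤ 1/2 := by
        apply div_le_div_of_nonneg_left (by norm_num) (by norm_num)
        have : (2:ℝ)^1 ≤ 2^(n+j+3) := by apply pow_le_pow_right₀ (by norm_num); omega
        simpa using this
      linarith
    have key : 8^j * L (n+j) * (1 - del (n+j+1)) ≥ 8^j * L (n+j) - L n * del (n+j+1) := by
      have hd := del_pos (n+j+1)
      nlinarith
    have h2 : (1:ℝ)/2^(n+(j+1)+2) = 1/2^(n+j+2) - 1/2^(n+j+3) := by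
      have : n+(j+1)+2 = n+j+3 := by ring
      rw [this]
      rw [div_sub_div _ _ (by positivity : ((2:ℝ)^(n+j+2)) ≠ 0) (by positivity : ((2:ℝ)^(n+j+3)) ≠ 0)]
      have e1 : (2:ℝ)^(n+j+3) = 2^(n+j+2)*2 := by ring
      rw [e1]
      field_simp
      ring
    rw [h2]
    rw [hdel] at key
    nlinarith

lemma L_ge (n : ℕ) : 3/4 * (1/8)^n ≤ L n := by
  have h := eight_pow_L_ge 0 n
  simp only [Nat.zero_add, L] at h
  have h2 : (0:ℝ) < 1/2^(n+2) := by positivity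
  have h8 : (0:ℝ) < (8:ℝ)^n := by positivity
  have : (1:ℝ) * (1 - 1/2^(0+2) + 1/2^(0+n+2)) ≤ 8^n * L n := by simpa using h
  have h14 : (1:ℝ) - 1/2^(0+2) + 1/2^(0+n+2) ≥ 3/4 := by
    have h0 : (0:ℝ) < 1/2^(0+n+2) := by positivity
    norm_num at h0 ⊢
    try linarith
  have h34 : (3:ℝ)/4 ≤ 8^n * L n := by linarith
  have hL := L_pos n
  rw [show (3:ℝ)/4 * (1/8)^n = 3/4 / 8^n by rw [div_pow]; ring_nf, div_le_iff₀ h8]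
  nlinarith


lemma pow_half_le (a b : ℕ) (h : a ≤ b) : ((1:ℝ)/2)^b ≤ (1/2)^a :=
  pow_le_pow_of_le_one (by norm_num) (by norm_num) h

lemma L_ub2 (n : ℕ) : L n ≤ (1/2)^(3*n) := by
  have := L_le n
  calc L n ≤ (1/8)^n := this
  _ = (1/2)^(3*n) := by rw [show ((1:ℝ)/8) = (1/2)^3 by norm_num, ← pow_mul]
lemma L_lb2 (n : ℕ) : ((1:ℝ)/2)^(3*n+1) ≤ L n := by
  have := L_ge n
  have e : ((1:ℝ)/8)^n = (1/2)^(3*n) := by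
    rw [show ((1:ℝ)/8) = (1/2)^3 by norm_num, ← pow_mul]
  have h : ((1:ℝ)/2)^(3*n+1) = (1/2) * (1/2)^(3*n) := by ring
  rw [h, ← e]
  nlinarith [pow_pos (by norm_num : (0:ℝ) < 1/8) n]
lemma del_eq (n : ℕ) : del (n+1) = (1/2)^(n+3) := by
  unfold del
  rw [div_pow]
  norm_num
lemma gp_ub (n : ℕ) : gp n ≤ (1/2)^(4*n+5) := by
  unfold gp
  rw [del_eq]
  have h1 := L_ub2 n
  have h2 : (0:ℝ) < (1/2:ℝ)^(n+3) := by positivity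
  have h3 : ((1:ℝ)/2)^(3*n) * (1/2)^(n+3) = (1/2)^(4*n+3) := by
    rw [← pow_add]; ring_nf
  have h4 : L n * (1/2)^(n+3) ≤ (1/2)^(4*n+3) := by
    rw [← h3]; exact mul_le_mul_of_nonneg_right h1 (le_of_lt h2)
  have h5 : ((1:ℝ)/2)^(4*n+3) = 4 * (1/2)^(4*n+5) := by ring
  have h6 : (0:ℝ) < (1/2:ℝ)^(4*n+5) := by positivity
  nlinarith
lemma gp_lb (n : ℕ) : ((1:ℝ)/2)^(4*n+7) ≤ gp n := by
  unfold gp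
  rw [del_eq]
  have h1 := L_lb2 n
  have h2 : (0:ℝ) < (1/2:ℝ)^(n+3) := by positivity
  have h3 : ((1:ℝ)/2)^(3*n+1) * (1/2)^(n+3) = (1/2)^(4*n+4) := by
    rw [← pow_add]; ring_nf
  have h4 : ((1:ℝ)/2)^(4*n+4) ≤ L n * (1/2)^(n+3) := by
    rw [← h3]; exact mul_le_mul_of_nonneg_right h1 (le_of_lt h2)
  have h5 : ((1:ℝ)/2)^(4*n+4) = 8 * (1/2)^(4*n+7) := by ring
  have h6 : (0:ℝ) < (1/2:ℝ)^(4*n+7) := by positivity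
  nlinarith
lemma gp_le_L (n : ℕ) : gp n ≤ L n := by
  have h1 := step_le_L n
  have h2 := L_pos (n+1)
  unfold step at h1
  linarith
lemma L_succ_le (n : ℕ) : L (n+1) ≤ L n := by
  have h := seven_step n
  have := step_pos n
  linarith
lemma del_anti (n : ℕ) : del (n+2) ≤ del (n+1) := by
  unfold del
  apply div_le_div_of_nonneg_left (by norm_num) (by positivity)
  apply pow_le_pow_right₀ (by norm_num); omega
lemma gp_anti (n : ℕ) : gp (n+1) ≤ gp n := by
  unfold gp
  have h1 := L_succ_le n
  have h2 := del_anti n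
  have h3 := L_pos (n+1)
  have h4 := del_pos (n+2)
  have : L (n+1) * del (n+1+1) ≤ L n * del (n+1) := by
    apply mul_le_mul h1 h2 (le_of_lt h4) (le_of_lt (L_pos n))
  linarith

-- geometry
noncomputable def left {n : ℕ} (s : Fin n → Fin 8) : ℝ := ∑ j, (s j : ℝ) * step j
def comp {n : ℕ} (s : Fin n → Fin 8) : Set ℝ := Icc (left s) (left s + L n)
def Cn (n : ℕ) : Set ℝ := ⋃ s : Fin n → Fin 8, comp s
def C : Set ℝ := ⋂ n, Cn n

lemma left_init {n : ℕ} (s : Fin (n+1) → Fin 8) :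
    left s = left (Fin.init s) + (s (Fin.last n) : ℝ) * step n := by
  unfold left
  rw [Fin.sum_univ_castSucc]
  simp [Fin.init]

lemma digit_le {n : ℕ} (s : Fin n → Fin 8) (j : Fin n) : (s j : ℝ) ≤ 7 := by
  have : (s j : ℕ) ≤ 7 := Nat.lt_succ_iff.mp (s j).isLt
  exact_mod_cast this

lemma left_nonneg {n : ℕ} (s : Fin n → Fin 8) : 0 ≤ left s := by
  unfold left
  apply Finset.sum_nonneg
  intro j _
  have := step_pos (j : ℕ)
  positivity

lemma comp_subset_parent {n : ℕ} (s : Fin (n+1) → Fin 8) :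
    comp s ⊆ comp (Fin.init s) := by
  unfold comp
  apply Icc_subset_Icc
  · rw [left_init s]
    have := step_pos n
    have : (0:ℝ) ≤ (s (Fin.last n) : ℝ) * step n := by positivity
    linarith
  · rw [left_init s]
    have hd := digit_le s (Fin.last n)
    have hs := step_pos n
    have h7 := seven_step n
    nlinarith

lemma Cn_antitone : ∀ n, Cn (n+1) ⊆ Cn n := by
  intro n x hx
  rw [Cn, mem_iUnion] at hx ⊢
  obtain ⟨s, hs⟩ := hx
  exact ⟨Fin.init s, comp_subset_parent s hs⟩

lemma one_le_abs_cast {a b : Fin 8} (h : a ≠ b) : 1 ≤ |(a:ℝ) - (b:ℝ)| := by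
  have h2 : ((a : ℕ) : ℤ) ≠ ((b : ℕ) : ℤ) := by
    exact_mod_cast fun hh => h (Fin.ext (by exact_mod_cast hh))
  have h3 : (1:ℤ) ≤ |((a:ℕ):ℤ) - ((b:ℕ):ℤ)| := by
    rcases abs_cases (((a:ℕ):ℤ) - ((b:ℕ):ℤ)) with ⟨he,_⟩|⟨he,_⟩ <;> omega
  calc (1:ℝ) = ((1:ℤ):ℝ) := by norm_num
  _ ≤ |(((a:ℕ):ℤ):ℝ) - (((b:ℕ):ℤ):ℝ)| := by
      rw [← Int.cast_sub, ← Int.cast_abs]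
      exact_mod_cast h3
  _ = |(a : ℝ) - (b : ℝ)| := by norm_num

lemma sep : ∀ n (s t : Fin (n+1) → Fin 8), s ≠ t → step n ≤ |left s - left t| := by
  intro n
  induction n with
  | zero =>
    intro s t hst
    have h0 : s 0 ≠ t 0 := by
      intro h; apply hst; funext j; fin_cases j; exact h
    have hl : left s = (s 0 : ℝ) * step 0 := by unfold left; simp
    have hl2 : left t = (t 0 : ℝ) * step 0 := by unfold left; simp
    rw [hl, hl2, ← sub_mul, abs_mul, abs_of_nonneg (le_of_lt (step_pos 0))]
    have h1 := one_le_abs_cast h0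
    nlinarith [step_pos 0]
  | succ n ih =>
    intro s t hst
    rw [left_init s, left_init t]
    set a := (s (Fin.last (n+1)) : ℝ) * step (n+1) with ha
    set b := (t (Fin.last (n+1)) : ℝ) * step (n+1) with hb
    have hsp := step_pos (n+1)
    have h0a : 0 ≤ a := by rw [ha]; positivity
    have h0b : 0 ≤ b := by rw [hb]; positivity
    have h7a : a ≤ 7 * step (n+1) := by
      rw [ha]; nlinarith [digit_le s (Fin.last (n+1))]
    have h7b : b ≤ 7 * step (n+1) := by
      rw [hb]; nlinarith [digit_le t (Fin.last (n+1))]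
    by_cases hinit : Fin.init s = Fin.init t
    · have hlast : s (Fin.last (n+1)) ≠ t (Fin.last (n+1)) := by
        intro h; apply hst; funext j
        induction j using Fin.lastCases with
        | last => exact h
        | cast i => exact congrFun hinit i
      rw [hinit]
      have he : left (Fin.init t) + a - (left (Fin.init t) + b)
          = ((s (Fin.last (n+1)) : ℝ) - (t (Fin.last (n+1)) : ℝ)) * step (n+1) := by
        rw [ha, hb]; ring
      rw [he, abs_mul, abs_of_nonneg hsp.le]
      have h1 := one_le_abs_cast hlast
      nlinarith
    · have h1 := ih (Fin.init s) (Fin.init t) hinit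
      have htri : |left (Fin.init s) - left (Fin.init t)|
          ≤ |left (Fin.init s) + a - (left (Fin.init t) + b)| + |b - a| := by
        have : left (Fin.init s) - left (Fin.init t)
            = (left (Fin.init s) + a - (left (Fin.init t) + b)) + (b - a) := by ring
        rw [this]; exact abs_add_le _ _
      have hab : |b - a| ≤ 7 * step (n+1) := by
        rw [abs_le]; constructor <;> linarith
      have hstep : step n - 7 * step (n+1) ≥ step (n+1) := by
        have e1 := seven_step (n+1)
        have e2 : step n = L (n+1) + gp n := rfl
        have e3 : step (n+1) = L (n+2) + gp (n+1) := rfl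
        have e4 := gp_anti n
        have := L_pos (n+2)
        linarith
      linarith

lemma comp_measurable {n : ℕ} (s : Fin n → Fin 8) : MeasurableSet (comp s) :=
  measurableSet_Icc

lemma Cn_measurable (n : ℕ) : MeasurableSet (Cn n) :=
  MeasurableSet.iUnion fun s => comp_measurable s

lemma Cn_closed (n : ℕ) : IsClosed (Cn n) := by
  apply isClosed_iUnion_of_finite
  intro s; exact isClosed_Icc

lemma C_closed : IsClosed C := isClosed_iInter Cn_closed

lemma C_measurable : MeasurableSet C := C_closed.measurableSet

lemma C_subset_Cn (n : ℕ) : C ⊆ Cn n := iInter_subset _ n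

lemma Cn_zero : Cn 0 = Icc 0 1 := by
  unfold Cn comp
  apply Subset.antisymm
  · apply iUnion_subset
    intro s
    have : left s = 0 := by unfold left; simp
    rw [this]
    norm_num [L]
  · intro x hx
    rw [mem_iUnion]
    refine ⟨fun j => j.elim0, ?_⟩
    have : left (fun j : Fin 0 => j.elim0) = 0 := by unfold left; simp
    rw [this]
    simpa [L] using hx

lemma C_subset_unit : C ⊆ Icc 0 1 := by
  rw [← Cn_zero]; exact C_subset_Cn 0

lemma vol_comp {n : ℕ} (s : Fin n → Fin 8) : volume (comp s) = ENNReal.ofReal (L n) := by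
  unfold comp
  rw [Real.volume_Icc]
  congr 1
  ring

lemma Cn_mono {k m : ℕ} (h : k ≤ m) : Cn m ⊆ Cn k := by
  induction m with
  | zero => rw [Nat.le_zero.mp h]
  | succ m ih =>
    rcases Nat.lt_or_ge k (m+1) with hk | hk
    · exact (Cn_antitone m).trans (ih (Nat.lt_succ_iff.mp hk))
    · have : k = m + 1 := le_antisymm h hk
      rw [this]

lemma Icc_disj {p r w : ℝ} (h : p + w < r) : Disjoint (Icc p (p+w)) (Icc r (r+w)) := by
  rw [Set.disjoint_left]
  intro x hx hx2
  rw [mem_Icc] at hx hx2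
  linarith [hx.2, hx2.1]

lemma comp_disjoint {n : ℕ} {s t : Fin (n+1) → Fin 8} (h : s ≠ t) :
    Disjoint (comp s) (comp t) := by
  have hsep := sep n s t h
  have hL : L (n+1) < step n := by
    have := gp_pos n
    unfold step
    linarith
  unfold comp
  rcases abs_cases (left s - left t) with ⟨he, _⟩ | ⟨he, _⟩
  · rw [he] at hsep
    exact (Icc_disj (by linarith)).symm
  · rw [he] at hsep
    exact Icc_disj (by linarith)


lemma comp_subset_Cn {n : ℕ} (s : Fin n → Fin 8) : comp s ⊆ Cn n := by
  intro x hx; rw [Cn, mem_iUnion]; exact ⟨s, hx⟩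

lemma snoc_subset {n : ℕ} (s : Fin n → Fin 8) (i : Fin 8) :
    comp (Fin.snoc s i) ⊆ comp s := by
  have h := comp_subset_parent (Fin.snoc s i)
  rwa [Fin.init_snoc] at h

lemma snoc_ne {n : ℕ} (s : Fin n → Fin 8) {i i' : Fin 8} (h : i ≠ i') :
    (Fin.snoc s i : Fin (n+1) → Fin 8) ≠ Fin.snoc s i' := by
  intro he
  apply h
  have := congrFun he (Fin.last n)
  simpa [Fin.snoc_last] using this

lemma lower_aux : ∀ j n (s : Fin n → Fin 8),
    ENNReal.ofReal (8^j * L (n+j)) ≤ volume (Cn (n+j) ∩ comp s) := by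
  intro j
  induction j with
  | zero =>
    intro n s
    have : Cn (n+0) ∩ comp s = comp s := by
      rw [Nat.add_zero]
      exact inter_eq_self_of_subset_right (comp_subset_Cn s)
    rw [this, vol_comp]
    simp
  | succ j ih =>
    intro n s
    set F : Fin 8 → Set ℝ := fun i => Cn (n+(j+1)) ∩ comp (Fin.snoc s i) with hF
    have hdisj : Set.PairwiseDisjoint (((Finset.univ : Finset (Fin 8)) : Set (Fin 8))) F := by
      intro i _ i' _ hii
      apply Disjoint.mono inter_subset_right inter_subset_right
      exact comp_disjoint (snoc_ne s hii)
    have hmeas : ∀ i ∈ (Finset.univ : Finset (Fin 8)), MeasurableSet (F i) :=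
      fun i _ => (Cn_measurable _).inter (comp_measurable _)
    have hsum := measure_biUnion_finset (μ := volume) hdisj hmeas
    have hsub : (⋃ i ∈ (Finset.univ : Finset (Fin 8)), F i) ⊆ Cn (n+(j+1)) ∩ comp s := by
      apply iUnion₂_subset
      intro i _
      exact inter_subset_inter_right _ (snoc_subset s i)
    have hmono := measure_mono (μ := volume) hsub
    rw [hsum] at hmono
    have hterm : ∀ i : Fin 8,
        ENNReal.ofReal (8^j * L (n+(j+1))) ≤ volume (F i) := by
      intro i
      have h0 := ih (n+1) (Fin.snoc s i)
      rwa [show (n+1)+j = n+(j+1) from by omega] at h0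
    have hsum_ge : (8 : ℝ≥0∞) * ENNReal.ofReal (8^j * L (n+(j+1)))
        ≤ ∑ i : Fin 8, volume (F i) := by
      calc (8 : ℝ≥0∞) * ENNReal.ofReal (8^j * L (n+(j+1)))
          = ∑ _i : Fin 8, ENNReal.ofReal (8^j * L (n+(j+1))) := by
            rw [Finset.sum_const, Finset.card_univ, Fintype.card_fin, nsmul_eq_mul]
            norm_num
      _ ≤ ∑ i : Fin 8, volume (F i) := Finset.sum_le_sum fun i _ => hterm i
    have hof : ENNReal.ofReal (8^(j+1) * L (n+(j+1)))
        = (8 : ℝ≥0∞) * ENNReal.ofReal (8^j * L (n+(j+1))) := by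
      rw [show (8:ℝ)^(j+1) * L (n+(j+1)) = 8 * (8^j * L (n+(j+1))) by ring]
      rw [ENNReal.ofReal_mul (by norm_num)]
      norm_num
    rw [hof]
    exact hsum_ge.trans hmono

lemma C_inter_comp_eq {n : ℕ} (s : Fin n → Fin 8) :
    C ∩ comp s = ⋂ j, (Cn (n+j) ∩ comp s) := by
  ext x
  simp only [mem_inter_iff, mem_iInter, C, mem_iInter]
  constructor
  · rintro ⟨hC, hc⟩ j
    exact ⟨hC (n+j), hc⟩
  · intro h
    refine ⟨fun k => ?_, (h 0).2⟩
    have hk : x ∈ Cn (n+k) := (h k).1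
    exact Cn_mono (Nat.le_add_left k n) hk

lemma vol_C_inter_comp {n : ℕ} (s : Fin n → Fin 8) :
    ENNReal.ofReal (L n * (1 - 1/2^(n+2))) ≤ volume (C ∩ comp s) := by
  have hanti : Antitone (fun j => Cn (n+j) ∩ comp s) := by
    intro j j' hj
    exact inter_subset_inter_left _ (Cn_mono (by omega))
  have hmeas : ∀ j, NullMeasurableSet (Cn (n+j) ∩ comp s) (volume : Measure ℝ) :=
    fun j => ((Cn_measurable _).inter (comp_measurable _)).nullMeasurableSet
  have hfin : ∃ j, volume (Cn (n+j) ∩ comp s) ≠ ⊤ := by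
    refine ⟨0, ?_⟩
    apply ne_top_of_le_ne_top _ (measure_mono inter_subset_right)
    rw [vol_comp]
    exact ofReal_ne_top
  have htend := tendsto_measure_iInter_atTop (μ := (volume : Measure ℝ)) hmeas hanti hfin
  rw [← C_inter_comp_eq s] at htend
  apply ge_of_tendsto htend
  filter_upwards with j
  refine le_trans ?_ (lower_aux j n s)
  apply ENNReal.ofReal_le_ofReal
  have h := eight_pow_L_ge n j
  have hL := L_pos n
  have hp : (0:ℝ) < 1/2^(n+j+2) := by positivity
  nlinarith

lemma vol_C_ge : ENNReal.ofReal (3/4) ≤ volume C := by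
  have h := vol_C_inter_comp (n := 0) (fun j : Fin 0 => j.elim0)
  have hc : C ∩ comp (fun j : Fin 0 => j.elim0) = C := by
    apply inter_eq_self_of_subset_left
    intro x hx
    have := C_subset_Cn 0 hx
    rw [Cn, mem_iUnion] at this
    obtain ⟨s, hs⟩ := this
    have : s = (fun j : Fin 0 => j.elim0) := by funext j; exact j.elim0
    rwa [← this]
  rw [hc] at h
  refine le_trans ?_ h
  apply ENNReal.ofReal_le_ofReal
  norm_num [L]

lemma Ico_disj {p r w : ℝ} (h : p + w ≤ r) : Disjoint (Ico p (p+w)) (Ico r (r+w)) := by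
  rw [Set.disjoint_left]
  intro x hx hx2
  rw [mem_Ico] at hx hx2
  linarith [hx.2, hx2.1]

lemma count_bound (m : ℕ) (a b : ℝ) (hab : a ≤ b) :
    volume (Cn (m+1) ∩ Icc a b) ≤ ENNReal.ofReal ((b - a + 2*step m) * (L (m+1) / step m)) := by
  classical
  set S : Finset (Fin (m+1) → Fin 8) :=
    Finset.univ.filter (fun s => (comp s ∩ Icc a b).Nonempty) with hS
  have hsp := step_pos m
  have hLp := L_pos (m+1)
  have hLs : L (m+1) ≤ step m := by
    have := gp_pos m; unfold step; linarith
  -- cover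
  have hcov : Cn (m+1) ∩ Icc a b ⊆ ⋃ s ∈ S, comp s := by
    rintro x ⟨hx1, hx2⟩
    rw [Cn, mem_iUnion] at hx1
    obtain ⟨s, hs⟩ := hx1
    apply mem_biUnion (show s ∈ S by
      rw [hS, Finset.mem_filter]
      exact ⟨Finset.mem_univ _, ⟨x, hs, hx2⟩⟩) hs
  -- left endpoint location
  have hloc : ∀ s ∈ S, a - L (m+1) ≤ left s ∧ left s ≤ b := by
    intro s hs
    rw [hS, Finset.mem_filter] at hs
    obtain ⟨x, hx1, hx2⟩ := hs.2
    rw [comp, mem_Icc] at hx1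
    rw [mem_Icc] at hx2
    constructor <;> linarith [hx1.1, hx1.2, hx2.1, hx2.2]
  -- disjoint blocks
  set B : (Fin (m+1) → Fin 8) → Set ℝ := fun s => Ico (left s) (left s + step m) with hB
  have hdisj : Set.PairwiseDisjoint (S : Set (Fin (m+1) → Fin 8)) B := by
    intro s _ t _ hst
    have hsep := sep m s t hst
    rcases abs_cases (left s - left t) with ⟨he, _⟩ | ⟨he, _⟩
    · rw [he] at hsep
      exact (Ico_disj (by linarith)).symm
    · rw [he] at hsep
      exact Ico_disj (by linarith)
  have hBsub : (⋃ s ∈ S, B s) ⊆ Ico (a - L (m+1)) (b + step m) := by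
    apply iUnion₂_subset
    intro s hs
    intro x hx
    rw [hB, mem_Ico] at hx
    rw [mem_Ico]
    obtain ⟨h1, h2⟩ := hloc s hs
    constructor <;> linarith [hx.1, hx.2]
  have hBsum : ∑ s ∈ S, volume (B s) = volume (⋃ s ∈ S, B s) :=
    (measure_biUnion_finset hdisj (fun s _ => measurableSet_Ico)).symm
  have hBvol : ∀ s, volume (B s) = ENNReal.ofReal (step m) := by
    intro s
    rw [hB, Real.volume_Ico]
    congr 1; ring
  have hcard : (S.card : ℝ≥0∞) * ENNReal.ofReal (step m)
      ≤ ENNReal.ofReal (b - a + 2*step m) := by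
    calc (S.card : ℝ≥0∞) * ENNReal.ofReal (step m)
        = ∑ s ∈ S, volume (B s) := by
          simp [hBvol, Finset.sum_const, nsmul_eq_mul]
    _ = volume (⋃ s ∈ S, B s) := hBsum
    _ ≤ volume (Ico (a - L (m+1)) (b + step m)) := measure_mono hBsub
    _ = ENNReal.ofReal (b + step m - (a - L (m+1))) := Real.volume_Ico
    _ ≤ ENNReal.ofReal (b - a + 2*step m) := by
        apply ENNReal.ofReal_le_ofReal; linarith
  -- real form
  have hcard_real : (S.card : ℝ) * step m ≤ b - a + 2*step m := by
    have h1 : ENNReal.ofReal ((S.card : ℝ) * step m) ≤ ENNReal.ofReal (b - a + 2*step m) := by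
      rw [ENNReal.ofReal_mul (by positivity)]
      rw [ENNReal.ofReal_natCast]
      exact hcard
    rwa [ENNReal.ofReal_le_ofReal_iff (by linarith)] at h1
  calc volume (Cn (m+1) ∩ Icc a b) ≤ volume (⋃ s ∈ S, comp s) := measure_mono hcov
  _ ≤ ∑ s ∈ S, volume (comp s) := measure_biUnion_finset_le S _
  _ = (S.card : ℝ≥0∞) * ENNReal.ofReal (L (m+1)) := by
      simp [vol_comp, Finset.sum_const, nsmul_eq_mul]
  _ = ENNReal.ofReal ((S.card : ℝ) * L (m+1)) := by
      rw [ENNReal.ofReal_mul (by positivity), ENNReal.ofReal_natCast]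
  _ ≤ ENNReal.ofReal ((b - a + 2*step m) * (L (m+1) / step m)) := by
      apply ENNReal.ofReal_le_ofReal
      rw [mul_div_assoc']
      rw [le_div_iff₀ hsp]
      calc (S.card : ℝ) * L (m+1) * step m = ((S.card : ℝ) * step m) * L (m+1) := by ring
      _ ≤ (b - a + 2*step m) * L (m+1) := by
          apply mul_le_mul_of_nonneg_right hcard_real (le_of_lt hLp)

def gapSet {n : ℕ} (s : Fin n → Fin 8) : Set ℝ :=
  Ioo (left s + L (n+1)) (left s + step n)

lemma gap_disjoint_Cn {n : ℕ} (s : Fin n → Fin 8) : gapSet s ∩ Cn (n+1) = ∅ := by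
  rw [eq_empty_iff_forall_notMem]
  rintro x ⟨hg, hc⟩
  rw [gapSet, mem_Ioo] at hg
  rw [Cn, mem_iUnion] at hc
  obtain ⟨t, ht⟩ := hc
  rw [comp, mem_Icc] at ht
  have hxs : x ∈ comp s := by
    rw [comp, mem_Icc]
    have h1 := L_pos (n+1)
    have h2 := step_le_L n
    constructor <;> linarith [hg.1, hg.2]
  by_cases hinit : Fin.init t = s
  · have hlt : left t = left s + (t (Fin.last n) : ℝ) * step n := by
      rw [left_init t, hinit]
    by_cases hz : (t (Fin.last n) : ℕ) = 0
    · have : (t (Fin.last n) : ℝ) = 0 := by exact_mod_cast hz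
      rw [this] at hlt
      simp at hlt
      linarith [ht.2, hg.1, hlt ▸ ht.2]
    · have h1 : (1:ℝ) ≤ (t (Fin.last n) : ℝ) := by
        have : 1 ≤ (t (Fin.last n) : ℕ) := Nat.one_le_iff_ne_zero.mpr hz
        exact_mod_cast this
      have := step_pos n
      nlinarith [ht.1, hg.2]
  · rcases n with _ | k
    · exact hinit (funext fun j => j.elim0)
    · have hd := comp_disjoint (n := k) hinit
      have hxt : x ∈ comp (Fin.init t) := comp_subset_parent t (by rw [comp, mem_Icc]; exact ht)
      exact (Set.disjoint_left.mp hd hxt) hxs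

lemma gap_disjoint_C {n : ℕ} (s : Fin n → Fin 8) : gapSet s ∩ C = ∅ := by
  rw [eq_empty_iff_forall_notMem]
  rintro x ⟨hg, hc⟩
  have : x ∈ gapSet s ∩ Cn (n+1) := ⟨hg, C_subset_Cn (n+1) hc⟩
  rw [gap_disjoint_Cn] at this
  exact this

lemma hole_bound {n : ℕ} (s : Fin n → Fin 8) {a b : ℝ} (hab : a < b)
    (hw : left s + L (n+1) + gp n / 2 ∈ Icc a b) :
    volume (C ∩ Icc a b) + ENNReal.ofReal (min (b - a) (gp n / 2)) ≤ ENNReal.ofReal (b - a) := by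
  set u := left s + L (n+1) with hu
  set v := left s + step n with hv
  have hgap : v = u + gp n := by rw [hu, hv]; unfold step; ring
  have hgp := gp_pos n
  rw [mem_Icc] at hw
  -- the part of the gap inside [a,b]
  have hsub : Ioo (max a u) (min b v) ⊆ gapSet s ∩ Icc a b := by
    intro x hx
    rw [mem_Ioo] at hx
    have h1 := hx.1
    have h2 := hx.2
    constructor
    · rw [gapSet, mem_Ioo]
      constructor
      · exact lt_of_le_of_lt (le_max_right a u) h1
      · exact lt_of_lt_of_le h2 (min_le_right b v)
    · rw [mem_Icc]
      constructor
      · linarith [le_max_left a u]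
      · linarith [min_le_left b v]
  have hlen : min (b - a) (gp n / 2) ≤ min b v - max a u := by
    rcases le_or_gt u a with h | h
    · rcases le_or_gt b v with h2 | h2
      · rw [max_eq_left h, min_eq_left h2]
        exact min_le_left _ _ |>.trans (le_refl _)
      · rw [max_eq_left h, min_eq_right h2.le]
        refine (min_le_right _ _).trans ?_
        rw [hgap]
        linarith [hw.1]
    · rcases le_or_gt b v with h2 | h2
      · rw [max_eq_right h.le, min_eq_left h2]
        refine (min_le_right _ _).trans ?_
        linarith [hw.2]
      · rw [max_eq_right h.le, min_eq_right h2.le]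
        refine (min_le_right _ _).trans ?_
        rw [hgap]
        linarith
  have hdisj : Disjoint (C ∩ Icc a b) (gapSet s ∩ Icc a b) := by
    rw [Set.disjoint_left]
    rintro x ⟨hx1, _⟩ ⟨hx2, _⟩
    have : x ∈ gapSet s ∩ C := ⟨hx2, hx1⟩
    rw [gap_disjoint_C] at this
    exact this
  have hmeas : MeasurableSet (gapSet s ∩ Icc a b) :=
    measurableSet_Ioo.inter measurableSet_Icc
  calc volume (C ∩ Icc a b) + ENNReal.ofReal (min (b - a) (gp n / 2))
      ≤ volume (C ∩ Icc a b) + volume (gapSet s ∩ Icc a b) := by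
        apply add_le_add le_rfl
        refine le_trans ?_ (measure_mono hsub)
        rw [Real.volume_Ioo]
        exact ENNReal.ofReal_le_ofReal hlen
  _ = volume ((C ∩ Icc a b) ∪ (gapSet s ∩ Icc a b)) := (measure_union hdisj hmeas).symm
  _ ≤ volume (Icc a b) := measure_mono (by
        apply union_subset <;> exact inter_subset_right)
  _ = ENNReal.ofReal (b - a) := Real.volume_Icc

noncomputable def f : ℝ → ℝ := C.indicator (fun _ => (1:ℝ))

noncomputable def mfS (x : ℝ) : Set ℝ :=
  {r : ℝ | ∃ a b : ℝ, a < b ∧ Set.Icc a b ⊆ Set.univ ∧ x ∈ Set.Icc a b ∧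
    r = (∫ y in Set.Icc a b, |f y|) / (b - a)}

lemma abs_f (y : ℝ) : |f y| = f y := by
  unfold f
  by_cases h : y ∈ C <;> simp [Set.indicator_apply, h]

lemma integral_f (a b : ℝ) :
    (∫ y in Set.Icc a b, |f y|) = (volume (C ∩ Icc a b)).toReal := by
  have h1 : (∫ y in Set.Icc a b, |f y|) = ∫ y in Set.Icc a b, C.indicator 1 y := by
    apply integral_congr_ae
    filter_upwards with y
    rw [abs_f]
    rfl
  rw [h1, integral_indicator_one C_measurable, measureReal_def, Measure.restrict_apply C_measurable]

lemma vol_inter_ne_top (a b : ℝ) : volume (C ∩ Icc a b) ≠ ⊤ := by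
  apply ne_top_of_le_ne_top _ (measure_mono inter_subset_right)
  rw [Real.volume_Icc]
  exact ofReal_ne_top

lemma mem_mfS_le_one {x r : ℝ} (hr : r ∈ mfS x) : r ≤ 1 := by
  obtain ⟨a, b, hab, -, -, req⟩ := hr
  rw [req, integral_f]
  rw [div_le_one (by linarith)]
  apply ENNReal.toReal_le_of_le_ofReal (by linarith)
  calc volume (C ∩ Icc a b) ≤ volume (Icc a b) := measure_mono inter_subset_right
  _ = ENNReal.ofReal (b - a) := Real.volume_Icc

lemma mfS_bddAbove (x : ℝ) : BddAbove (mfS x) :=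
  ⟨1, fun _ hr => mem_mfS_le_one hr⟩

lemma M_le_one (x : ℝ) : sSup (mfS x) ≤ 1 :=
  Real.sSup_le (fun _ hr => mem_mfS_le_one hr) zero_le_one

lemma M_eq_one {z : ℝ} (hz : z ∈ C) : sSup (mfS z) = 1 := by
  refine le_antisymm (M_le_one z) ?_
  by_contra hlt
  push_neg at hlt
  obtain ⟨n, hn⟩ := exists_pow_lt_of_lt_one (by linarith : (0:ℝ) < 1 - sSup (mfS z))
    (by norm_num : (1:ℝ)/2 < 1)
  have hzn := C_subset_Cn n hz
  rw [Cn, mem_iUnion] at hzn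
  obtain ⟨s, hs⟩ := hzn
  have hLp := L_pos n
  set r : ℝ := (volume (C ∩ comp s)).toReal / L n with hrdef
  have hrS : r ∈ mfS z := by
    refine ⟨left s, left s + L n, by linarith, subset_univ _, hs, ?_⟩
    rw [integral_f]
    have : comp s = Icc (left s) (left s + L n) := rfl
    rw [hrdef, ← this]
    congr 1
    ring
  have hr_ge : 1 - (1/2)^(n+2) ≤ r := by
    rw [hrdef]
    rw [le_div_iff₀ hLp]
    have h := vol_C_inter_comp s
    have hfin : volume (C ∩ comp s) ≠ ⊤ := by
      apply ne_top_of_le_ne_top _ (measure_mono inter_subset_right)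
      rw [vol_comp]; exact ofReal_ne_top
    have h2 := (ENNReal.ofReal_le_iff_le_toReal hfin).mp h
    calc (1 - (1/2)^(n+2)) * L n = L n * (1 - (1/2)^(n+2)) := by ring
    _ = L n * (1 - 1/2^(n+2)) := by rw [div_pow]; norm_num
    _ ≤ (volume (C ∩ comp s)).toReal := h2
  have hsup := le_csSup (mfS_bddAbove z) hrS
  have hp : ((1:ℝ)/2)^(n+2) ≤ (1/2)^n := by
    apply pow_le_pow_of_le_one (by norm_num) (by norm_num); omega
  linarith


lemma beta_le_one (k : ℕ) : ((1:ℝ)/2)^(2*k+8) ≤ 1 :=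
  pow_le_one₀ (by norm_num) (by norm_num)

set_option maxHeartbeats 1000000 in
lemma M_gap_bound (k : ℕ) (hk : 2 ≤ k) (s : Fin k → Fin 8) :
    sSup (mfS (left s + L (k+1) + gp k / 2)) ≤ 1 - (1/2)^(2*k+8) := by
  set β : ℝ := ((1:ℝ)/2)^(2*k+8) with hβ
  have hβpos : 0 < β := by rw [hβ]; positivity
  have hβ1 : β ≤ 1 := beta_le_one k
  set d : ℝ := gp k / 2 with hd
  have hdpos : 0 < d := by rw [hd]; linarith [gp_pos k]
  set Θ : ℝ := d / β with hΘ
  have hΘpos : 0 < Θ := by rw [hΘ]; positivity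
  apply Real.sSup_le _ (by linarith)
  intro r hr
  obtain ⟨a, b, hab, -, hwmem, req⟩ := hr
  set ℓ : ℝ := b - a with hℓdef
  have hℓ : 0 < ℓ := by rw [hℓdef]; linarith
  have hfin := vol_inter_ne_top a b
  rw [req, integral_f]
  rcases le_or_gt ℓ Θ with hcase | hcase
  · -- small interval: use the hole
    have hh := hole_bound s hab hwmem
    have hmin0 : 0 ≤ min ℓ d := le_min hℓ.le hdpos.le
    have hminℓ : min ℓ d ≤ ℓ := min_le_left _ _
    have hvol : volume (C ∩ Icc a b) ≤ ENNReal.ofReal (ℓ - min ℓ d) := by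
      have hsplit : ENNReal.ofReal (b - a)
          = ENNReal.ofReal (ℓ - min ℓ d) + ENNReal.ofReal (min ℓ d) := by
        rw [← ENNReal.ofReal_add (by linarith) hmin0]
        congr 1
        rw [hℓdef]; ring
      rw [hsplit] at hh
      exact (ENNReal.add_le_add_iff_right ofReal_ne_top).mp hh
    have htr : (volume (C ∩ Icc a b)).toReal ≤ ℓ - min ℓ d :=
      ENNReal.toReal_le_of_le_ofReal (by linarith) hvol
    rw [div_le_iff₀ hℓ]
    have hmβ : β * ℓ ≤ min ℓ d := by
      rcases le_or_gt ℓ d with h | h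
      · rw [min_eq_left h]
        nlinarith
      · rw [min_eq_right h.le]
        have : β * ℓ ≤ β * Θ := by nlinarith
        have hbt : β * Θ = d := by
          rw [hΘ]; field_simp
        nlinarith
    have : (1 - β) * ℓ = ℓ - β * ℓ := by ring
    linarith [htr, hmβ]
  · -- large interval: use the counting bound at stage 2k+2
    set S : ℝ := step (2*k+1) with hSdef
    set Lm : ℝ := L (2*k+2) with hLmdef
    have hS : 0 < S := step_pos _
    have hLm : 0 < Lm := L_pos _
    have hgpS : gp (2*k+1) = S - Lm := by
      rw [hSdef, hLmdef]
      unfold step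
      have : 2*k+1+1 = 2*k+2 := by omega
      rw [this]; ring
    -- numeric bounds
    have hLm_ub : Lm ≤ (1/2)^(6*k+6) := by
      have := L_ub2 (2*k+2)
      rwa [show 3*(2*k+2) = 6*k+6 from by ring] at this
    have hLm_lb : ((1:ℝ)/2)^(6*k+7) ≤ Lm := by
      have := L_lb2 (2*k+2)
      rwa [show 3*(2*k+2)+1 = 6*k+7 from by ring] at this
    have hgp_lb : ((1:ℝ)/2)^(8*k+11) ≤ gp (2*k+1) := by
      have := gp_lb (2*k+1)
      rwa [show 4*(2*k+1)+7 = 8*k+11 from by ring] at this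
    have hd_lb : ((1:ℝ)/2)^(4*k+8) ≤ d := by
      have := gp_lb k
      rw [hd]
      have e : ((1:ℝ)/2)^(4*k+8) = (1/2)^(4*k+7)/2 := by
        rw [show 4*k+8 = (4*k+7)+1 from by ring, pow_succ]
        ring
      rw [e]; linarith
    have hgp_le_Lm : gp (2*k+1) ≤ Lm := by
      have h1 := gp_ub (2*k+1)
      rw [show 4*(2*k+1)+5 = 8*k+9 from by ring] at h1
      have h2 : ((1:ℝ)/2)^(8*k+9) ≤ (1/2)^(6*k+7) := by
        apply pow_le_pow_of_le_one (by norm_num) (by norm_num); omega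
      linarith
    have hS2Lm : S ≤ 2 * Lm := by
      have : S = Lm + gp (2*k+1) := by rw [hgpS]; ring
      linarith
    -- h1 : Lm ≤ (1 - 4β) * S
    have h4bS : 4 * β * S ≤ gp (2*k+1) := by
      have c1 : 4 * β * S ≤ 8 * β * Lm := by nlinarith
      have c2 : (8:ℝ) * β * Lm ≤ 8 * ((1/2)^(2*k+8) * (1/2)^(6*k+6)) := by
        rw [hβ]
        have := mul_le_mul_of_nonneg_left hLm_ub (by positivity : (0:ℝ) ≤ (1/2)^(2*k+8))
        nlinarith [this]
      have c3 : (8:ℝ) * ((1/2)^(2*k+8) * (1/2)^(6*k+6)) = (1/2)^(8*k+11) := by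
        rw [← pow_add]
        rw [show 2*k+8+(6*k+6) = (8*k+11)+3 from by ring, pow_add]
        norm_num
        ring
      linarith
    have h1 : Lm ≤ (1 - 4*β) * S := by
      have : S - Lm ≥ 4 * β * S := by rw [← hgpS]; exact h4bS
      linarith
    -- h2 : 2 * Lm ≤ 3 * β * ℓ
    have h2 : 2 * Lm ≤ 3 * β * ℓ := by
      have hβΘ : β * Θ = d := by rw [hΘ]; field_simp
      have c1 : 3 * β * ℓ ≥ 3 * d := by nlinarith
      have c2 : 2 * Lm ≤ (1/2)^(6*k+5) := by
        have e : ((1:ℝ)/2)^(6*k+5) = 2 * (1/2)^(6*k+6) := by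
          rw [show 6*k+6 = (6*k+5)+1 from by ring, pow_succ]
          ring
        rw [e]; linarith
      have c3 : ((1:ℝ)/2)^(6*k+5) ≤ (1/2)^(4*k+8) := by
        apply pow_le_pow_of_le_one (by norm_num) (by norm_num); omega
      linarith
    -- counting bound
    have hcb := count_bound (2*k+1) a b hab.le
    have hCsub : C ∩ Icc a b ⊆ Cn (2*k+1+1) ∩ Icc a b :=
      inter_subset_inter_left _ (C_subset_Cn _)
    have hvol : volume (C ∩ Icc a b) ≤ ENNReal.ofReal ((ℓ + 2*S) * (Lm / S)) := by
      refine (measure_mono hCsub).trans (hcb.trans ?_)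
      apply ENNReal.ofReal_le_ofReal
      rw [hℓdef, hSdef, hLmdef, show 2*k+1+1 = 2*k+2 from by omega]
    have htr : (volume (C ∩ Icc a b)).toReal ≤ (ℓ + 2*S) * (Lm / S) :=
      ENNReal.toReal_le_of_le_ofReal (by positivity) hvol
    rw [div_le_iff₀ hℓ]
    have hkey : (ℓ + 2*S) * (Lm / S) ≤ (1 - β) * ℓ := by
      rw [div_eq_mul_inv, ← mul_assoc]
      rw [show (ℓ + 2*S) * Lm * S⁻¹ ≤ (1-β)*ℓ ↔ (ℓ + 2*S) * Lm * S⁻¹ * S ≤ (1-β)*ℓ*S from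
        by rw [mul_le_mul_iff_of_pos_right hS]]
      rw [mul_assoc _ S⁻¹ S, inv_mul_cancel₀ (ne_of_gt hS), mul_one]
      nlinarith [mul_le_mul_of_nonneg_left h1 hℓ.le, mul_le_mul_of_nonneg_left h2 hS.le]
    exact le_trans htr hkey


lemma mf_eq (x : ℝ) : mf Set.univ f x = sSup (mfS x) := rfl

lemma pow_ratio (k : ℕ) : ((1:ℝ)/2)^(2*k+8) * 2^(3*k) = 2^k / 2^8 := by
  rw [div_pow, one_pow]
  rw [div_mul_eq_mul_div, div_eq_div_iff (by positivity) (by positivity)]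
  rw [one_mul, ← pow_add, ← pow_add]
  congr 1
  ring

lemma not_diff {z : ℝ} (hz : z ∈ C) : ¬ DifferentiableAt ℝ (mf Set.univ f) z := by
  intro hdiff
  have hMz : mf Set.univ f z = 1 := by rw [mf_eq]; exact M_eq_one hz
  have hder := hdiff.hasDerivAt
  set c := deriv (mf Set.univ f) z with hc
  rw [hasDerivAt_iff_tendsto_slope] at hder
  have hex : ∀ k : ℕ, ∃ s : Fin k → Fin 8, z ∈ comp s := by
    intro k
    have h := C_subset_Cn k hz
    rwa [Cn, mem_iUnion] at h
  choose sq hsq using hex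
  set w : ℕ → ℝ := fun k => left (sq k) + L (k+1) + gp k / 2 with hw
  have hwgap : ∀ k, w k ∈ gapSet (sq k) := by
    intro k
    rw [hw, gapSet, mem_Ioo]
    have h1 := gp_pos k
    constructor
    · linarith
    · unfold step; linarith
  have hwC : ∀ k, w k ∉ C := by
    intro k hcc
    have h := gap_disjoint_C (sq k)
    rw [eq_empty_iff_forall_notMem] at h
    exact h (w k) ⟨hwgap k, hcc⟩
  have hwz : ∀ k, w k ≠ z := fun k h => hwC k (h ▸ hz)
  have hdist : ∀ k, |w k - z| ≤ L k := by
    intro k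
    have hzc := hsq k
    rw [comp, mem_Icc] at hzc
    have h1 := gp_pos k
    have h2 : L (k+1) + gp k ≤ L k := by
      have := step_le_L k; unfold step at this; linarith
    have h3 := L_pos (k+1)
    rw [abs_le, hw]
    constructor <;> [skip; skip] <;> simp only [] <;> nlinarith [hzc.1, hzc.2]
  have htz : Tendsto w atTop (𝓝[≠] z) := by
    have htends : Tendsto w atTop (𝓝 z) := by
      rw [tendsto_iff_dist_tendsto_zero]
      apply squeeze_zero (fun k => dist_nonneg)
        (g := fun k => ((1:ℝ)/2)^k)
      · intro k
        rw [Real.dist_eq]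
        refine (hdist k).trans ?_
        refine (L_ub2 k).trans ?_
        apply pow_le_pow_of_le_one (by norm_num) (by norm_num); omega
      · exact tendsto_pow_atTop_nhds_zero_of_lt_one (by norm_num) (by norm_num)
    apply tendsto_nhdsWithin_of_tendsto_nhds_of_eventually_within _ htends
    filter_upwards with k
    exact hwz k
  have hcomp : Tendsto (fun k => slope (mf Set.univ f) z (w k)) atTop (𝓝 c) :=
    hder.comp htz
  have hslope : ∀ k, 2 ≤ k → (2:ℝ)^k / 2^8 ≤ |slope (mf Set.univ f) z (w k)| := by
    intro k hk
    have hMw : mf Set.univ f (w k) ≤ 1 - (1/2)^(2*k+8) := by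
      rw [hw, mf_eq]
      exact M_gap_bound k hk (sq k)
    have hβ : (0:ℝ) < (1/2)^(2*k+8) := by positivity
    have hd0 : 0 < |w k - z| := abs_pos.mpr (sub_ne_zero.mpr (hwz k))
    have hLk := L_pos k
    have h1 : ((1:ℝ)/2)^(2*k+8) ≤ |mf Set.univ f (w k) - 1| := by
      rw [abs_sub_comm, abs_of_nonneg (by linarith)]
      linarith
    have h2 : |w k - z| ≤ ((1:ℝ)/2)^(3*k) := (hdist k).trans (L_ub2 k)
    have h3 : |slope (mf Set.univ f) z (w k)|
        = |mf Set.univ f (w k) - mf Set.univ f z| / |w k - z| := by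
      rw [slope_def_field, abs_div]
    rw [h3, hMz, le_div_iff₀ hd0]
    have hcancel : (2:ℝ)^(3*k) * (1/2)^(3*k) = 1 := by
      rw [← mul_pow]; norm_num
    calc (2:ℝ)^k/2^8 * |w k - z| ≤ 2^k/2^8 * (1/2)^(3*k) := by
          apply mul_le_mul_of_nonneg_left h2 (by positivity)
    _ = ((1/2)^(2*k+8) * 2^(3*k)) * (1/2)^(3*k) := by rw [pow_ratio]
    _ = (1/2)^(2*k+8) * (2^(3*k) * (1/2)^(3*k)) := by ring
    _ = (1/2)^(2*k+8) := by rw [hcancel, mul_one]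
    _ ≤ |mf Set.univ f (w k) - 1| := h1
  obtain ⟨k0, hk0⟩ := pow_unbounded_of_one_lt (|c| + 1) (by norm_num : (1:ℝ) < 2)
  have hev := (Metric.tendsto_nhds.mp hcomp) 1 one_pos
  rw [eventually_atTop] at hev
  obtain ⟨N, hN⟩ := hev
  set k := max N (max (k0 + 8) 2) with hkdef
  have hk2 : 2 ≤ k := le_trans (le_max_right _ _) (le_max_right _ _) |>.trans (le_refl _)
  have hkN : N ≤ k := le_max_left _ _
  have hkk0 : k0 + 8 ≤ k := le_trans (le_max_left _ _) (le_max_right _ _)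
  have hlow := hslope k hk2
  have hnear := hN k hkN
  rw [Real.dist_eq] at hnear
  have habs : |slope (mf Set.univ f) z (w k)| < |c| + 1 := by
    have := abs_sub_abs_le_abs_sub (slope (mf Set.univ f) z (w k)) c
    linarith
  have hbig : |c| + 1 < (2:ℝ)^k / 2^8 := by
    have h1 : (2:ℝ)^(k0+8) ≤ 2^k := by
      apply pow_le_pow_right₀ (by norm_num) hkk0
    have h2 : (2:ℝ)^(k0+8) = 2^k0 * 2^8 := by rw [pow_add]
    rw [lt_div_iff₀ (by positivity : (0:ℝ) < 2^8)]
    nlinarith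
  linarith


end FC

/-- There is a bounded, upper semicontinuous, compactly supported `f : ℝ → ℝ` whose
maximal function fails to be differentiable on a set of positive measure; in
particular `Mf` is not of bounded variation. -/
theorem stmt13 :
    ∃ f : ℝ → ℝ, (∃ C : ℝ, ∀ x, |f x| ≤ C) ∧ UpperSemicontinuous f ∧
      HasCompactSupport f ∧
      0 < volume {x : ℝ | ¬ DifferentiableAt ℝ (mf Set.univ f) x} ∧
      ¬ BoundedVariationOn (mf Set.univ f) Set.univ := by
  have hpos : 0 < volume {x : ℝ | ¬ DifferentiableAt ℝ (mf Set.univ FC.f) x} := by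
    have hsub : FC.C ⊆ {x : ℝ | ¬ DifferentiableAt ℝ (mf Set.univ FC.f) x} :=
      fun z hz => FC.not_diff hz
    calc (0:ℝ≥0∞) < ENNReal.ofReal (3/4) := by
          rw [ENNReal.ofReal_pos]; norm_num
    _ ≤ volume FC.C := FC.vol_C_ge
    _ ≤ volume {x : ℝ | ¬ DifferentiableAt ℝ (mf Set.univ FC.f) x} := measure_mono hsub
  refine ⟨FC.f, ⟨1, ?_⟩, ?_, ?_, hpos, ?_⟩
  · intro x
    rw [FC.abs_f]
    unfold FC.f
    by_cases h : x ∈ FC.C <;> simp [Set.indicator_apply, h]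
  · exact FC.C_closed.upperSemicontinuous_indicator zero_le_one
  · exact HasCompactSupport.intro isCompact_Icc
      (fun x hx => Set.indicator_of_notMem (fun hc => hx (FC.C_subset_unit hc)) _)
  · intro hBV
    have hae := hBV.locallyBoundedVariationOn.ae_differentiableAt
    rw [MeasureTheory.ae_iff] at hae
    rw [hae] at hpos
    exact lt_irrefl _ hpos
end
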